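/- arXiv:2409.07719 — 7 statements merged into one kernel-verified Lean document; each statement's English description precedes it below -/
import Mathlib

section
/- There exist a constant C > 0 and an integer k_0 such that for all k ≥ k_0, setting r = k − ⌈√(2k·log k)⌉ and B(r,k) = 2^{−(r+k−1)}·Σ_{m=0}^{k−1} C(r+k−1, m) (the probability that a Binomial(r+k−1, 1/2) random variable is at most k−1), one has (r·B(r,k) − r·C(2r−1, r)/2^{2r−1})/k ≥ 1 − √(2·log k / k) − C/√k. Here log denotes the natural logarithm and C(·,·) the binomial coefficient. -/
/-!
Put `s = ⌈√(2k log k)⌉` and `n = r + k - 1 = 2k - s - 1`, so that `B` is one minus the upper tail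
`∑_{m ≥ k} C(n, m) / 2ⁿ`. The ratio `C(n, m + 1) / C(n, m) = (n - m) / (m + 1)` bounds the tail
geometrically by `C(n, k) (k + 1) / (s + 2)`, and also gives the Gaussian decay
`C(n, a + t) ≤ C(n, a) exp (-t² / k)` away from the middle `a = ⌈n / 2⌉`. Together with
`C(n, m) ≤ 2ⁿ / √(n + 1)` and `t ≥ s / 2` this yields `C(n, k) ≤ 2ⁿ / k`, hence `B ≥ 1 - 2 / √k`.
The subtracted central term is at most `1 / √(2r) ≤ 1 / √k`, and `r ≥ k - √(2k log k) - 1`.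
-/

open Finset Real

namespace Nat

theorem centralBinom_sq_mul_le (n : ℕ) : centralBinom n ^ 2 * (2 * n + 1) ≤ 16 ^ n := by
  induction n with
  | zero => simp
  | succ n ih =>
    have hsq : (n + 1) ^ 2 * centralBinom (n + 1) ^ 2 = (2 * (2 * n + 1) * centralBinom n) ^ 2 := by
      rw [← succ_mul_centralBinom_succ]; ring
    refine Nat.le_of_mul_le_mul_left ?_ (by positivity : 0 < (n + 1) ^ 2)
    calc (n + 1) ^ 2 * (centralBinom (n + 1) ^ 2 * (2 * (n + 1) + 1))
        = 4 * ((2 * n + 1) * (2 * n + 3)) * (centralBinom n ^ 2 * (2 * n + 1)) := by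
          rw [← mul_assoc, hsq]; ring
      _ ≤ 4 * (4 * (n + 1) ^ 2) * 16 ^ n := Nat.mul_le_mul (by nlinarith) ih
      _ = (n + 1) ^ 2 * 16 ^ (n + 1) := by ring

theorem choose_sq_mul_succ_le (n m : ℕ) : n.choose m ^ 2 * (n + 1) ≤ 4 ^ n := by
  refine (Nat.mul_le_mul_right _ (Nat.pow_le_pow_left (choose_le_middle m n) 2)).trans ?_
  obtain ⟨M, rfl | rfl⟩ := even_or_odd' n
  · have := centralBinom_sq_mul_le M
    rw [centralBinom_eq_two_mul_choose] at this
    rwa [Nat.mul_div_cancel_left M two_pos, pow_mul]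
  · have hhalf : 2 * (2 * M + 1).choose M = centralBinom (M + 1) := by
      rw [centralBinom_eq_two_mul_choose, show 2 * (M + 1) = 2 * M + 1 + 1 by ring,
        choose_succ_succ, choose_symm_half]
      ring
    have := centralBinom_sq_mul_le (M + 1)
    rw [← hhalf] at this
    have h16 : 4 ^ (2 * M + 1) * 4 = 16 ^ (M + 1) := by
      rw [pow_succ, pow_mul, pow_succ]; ring
    rw [show (2 * M + 1) / 2 = M by omega]
    nlinarith

theorem choose_le_two_pow_div_sqrt (n m : ℕ) :
    (n.choose m : ℝ) ≤ 2 ^ n / √(n + 1) := by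
  rw [le_div_iff₀ (by positivity)]
  refine (pow_le_pow_iff_left₀ (by positivity) (by positivity) two_ne_zero).1 ?_
  rw [mul_pow, sq_sqrt (by positivity), ← pow_mul, mul_comm n, pow_mul]
  exact_mod_cast choose_sq_mul_succ_le n m

theorem cast_choose_succ_right (n m : ℕ) :
    (n.choose (m + 1) : ℝ) = n.choose m * ((n - m) / (m + 1)) := by
  rcases le_or_gt m n with h | h
  · have hcast : ((n.choose (m + 1) * (m + 1) : ℕ) : ℝ) = ((n.choose m * (n - m) : ℕ) : ℝ) := by
      rw [choose_succ_right_eq]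
    push_cast [h] at hcast
    rw [mul_div_assoc', eq_div_iff (by positivity), hcast]
  · simp [choose_eq_zero_of_lt h, choose_eq_zero_of_lt (h.trans (lt_add_one m))]

theorem choose_add_le_mul_prod {n k t : ℕ} {ρ : ℕ → ℝ} (hρ₀ : ∀ j < t, 0 ≤ ρ j)
    (hρ : ∀ j < t, ((n : ℝ) - (k + j)) / (k + j + 1) ≤ ρ j) :
    (n.choose (k + t) : ℝ) ≤ n.choose k * ∏ j ∈ range t, ρ j := by
  induction t with
  | zero => simp
  | succ t ih =>
    have hratio := hρ t (lt_add_one t)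
    calc (n.choose (k + (t + 1)) : ℝ)
          = n.choose (k + t) * ((n - (k + t : ℕ)) / ((k + t : ℕ) + 1)) :=
          cast_choose_succ_right n (k + t)
      _ ≤ n.choose (k + t) * ρ t := by push_cast; gcongr
      _ ≤ (n.choose k * ∏ j ∈ range t, ρ j) * ρ t := by
          gcongr
          · exact hρ₀ t (lt_add_one t)
          · exact ih (fun j hj => hρ₀ j (hj.trans (lt_add_one t)))
              (fun j hj => hρ j (hj.trans (lt_add_one t)))
      _ = n.choose k * ∏ j ∈ range (t + 1), ρ j := by rw [prod_range_succ, mul_assoc]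

theorem sum_Ico_choose_le {n k : ℕ} (hkn : k ≤ n) (hnk : n ≤ 2 * k) :
    ∑ m ∈ Ico k (n + 1), (n.choose m : ℝ) ≤ n.choose k * ((k + 1) / (2 * k + 1 - n)) := by
  set q : ℝ := (n - k) / (k + 1)
  have hkn' : (k : ℝ) ≤ n := by exact_mod_cast hkn
  have hnk' : (n : ℝ) ≤ 2 * k := by exact_mod_cast hnk
  have hq₀ : 0 ≤ q := div_nonneg (by linarith) (by positivity)
  have hq₁ : q < 1 := by rw [div_lt_one (by positivity)]; linarith
  have hgeom (j : ℕ) : (n.choose (k + j) : ℝ) ≤ n.choose k * q ^ j := by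
    have := choose_add_le_mul_prod (n := n) (k := k) (t := j) (ρ := fun _ => q) (fun _ _ => hq₀)
      (fun i _ => by
        calc ((n : ℝ) - (k + i)) / (k + i + 1) ≤ (n - k) / (k + i + 1) := by gcongr; linarith
          _ ≤ q := div_le_div_of_nonneg_left (by linarith) (by positivity) (by linarith))
    rwa [prod_const, card_range] at this
  have hgeom_sum : ∑ j ∈ range (n + 1 - k), q ^ j ≤ 1 / (1 - q) := by
    have := geom_sum_Ico_le_of_lt_one (m := 0) (n := n + 1 - k) hq₀ hq₁
    rwa [pow_zero, ← range_eq_Ico] at this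
  have hq : 1 / (1 - q) = (k + 1) / (2 * k + 1 - n) := by
    have h1q : 1 - q = (2 * k + 1 - n) / (k + 1) := by simp only [q]; field_simp; ring
    rw [h1q, one_div_div]
  calc ∑ m ∈ Ico k (n + 1), (n.choose m : ℝ) = ∑ j ∈ range (n + 1 - k), (n.choose (k + j) : ℝ) :=
        sum_Ico_eq_sum_range _ k (n + 1)
    _ ≤ ∑ j ∈ range (n + 1 - k), n.choose k * q ^ j := sum_le_sum fun j _ => hgeom j
    _ ≤ n.choose k * (1 / (1 - q)) := by rw [← mul_sum]; gcongr
    _ = n.choose k * ((k + 1) / (2 * k + 1 - n)) := by rw [hq]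

theorem choose_add_le_mul_exp {n a t : ℕ} {D : ℝ} (hn : n ≤ 2 * a) (hD : (a + t : ℝ) ≤ D) :
    (n.choose (a + t) : ℝ) ≤ n.choose a * exp (-t ^ 2 / D) := by
  have hn' : (n : ℝ) ≤ 2 * a := by exact_mod_cast hn
  have hodd (m : ℕ) : ∑ j ∈ range m, (2 * j + 1 : ℝ) = m ^ 2 := by
    induction m with
    | zero => simp
    | succ m ih => rw [sum_range_succ, ih]; push_cast; ring
  have hratio (j : ℕ) (hj : j < t) :
      ((n : ℝ) - (a + j)) / (a + j + 1) ≤ exp (-(2 * j + 1) / D) := by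
    have hpos : (0 : ℝ) < a + j + 1 := by positivity
    have hjt : (j : ℝ) + 1 ≤ t := by exact_mod_cast hj
    calc ((n : ℝ) - (a + j)) / (a + j + 1) ≤ -(2 * j + 1) / (a + j + 1) + 1 := by
          rw [div_le_iff₀ hpos, add_mul, div_mul_cancel₀ _ hpos.ne']; linarith
      _ ≤ exp (-(2 * j + 1) / (a + j + 1)) := add_one_le_exp _
      _ ≤ exp (-(2 * j + 1) / D) := by
          rw [exp_le_exp, neg_div, neg_div, neg_le_neg_iff]
          exact div_le_div_of_nonneg_left (by positivity) hpos (by linarith)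
  calc (n.choose (a + t) : ℝ) ≤ n.choose a * ∏ j ∈ range t, exp (-(2 * j + 1) / D) :=
        choose_add_le_mul_prod (fun _ _ => (exp_pos _).le) hratio
    _ = n.choose a * exp (-t ^ 2 / D) := by
        rw [← exp_sum, ← sum_div, sum_neg_distrib, hodd]

end Nat

theorem choose_le_two_pow_div {n k s : ℕ} (hn : n + s + 1 = 2 * k) (hsk : s < k)
    (hlog : 2 * k * log k ≤ (s : ℝ) ^ 2) : (n.choose k : ℝ) ≤ 2 ^ n / k := by
  obtain ⟨a, t, hat, hna, hst⟩ : ∃ a t, a + t = k ∧ n ≤ 2 * a ∧ s ≤ 2 * t :=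
    ⟨k - (s + 1) / 2, (s + 1) / 2, by omega, by omega, by omega⟩
  have hk : (0 : ℝ) < k := by exact_mod_cast (by omega : 0 < k)
  have hkn : (k : ℝ) ≤ n + 1 := by exact_mod_cast (by omega : k ≤ n + 1)
  have hst' : (s : ℝ) ≤ 2 * t := by exact_mod_cast hst
  have hdecay : exp (-t ^ 2 / k) ≤ 1 / √k :=
    calc exp (-t ^ 2 / k) ≤ exp (-(log k / 2)) := by
          rw [exp_le_exp, neg_div, neg_le_neg_iff, div_le_div_iff₀ two_pos hk]
          nlinarith [Nat.cast_nonneg (α := ℝ) s]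
      _ = 1 / √k := by rw [exp_neg, exp_half, exp_log hk, one_div]
  calc (n.choose k : ℝ) = n.choose (a + t) := by rw [hat]
    _ ≤ n.choose a * exp (-t ^ 2 / k) := Nat.choose_add_le_mul_exp hna (by exact_mod_cast hat.le)
    _ ≤ 2 ^ n / √(n + 1) * (1 / √k) :=
        mul_le_mul (Nat.choose_le_two_pow_div_sqrt n a) hdecay (exp_pos _).le (by positivity)
    _ ≤ 2 ^ n / √k * (1 / √k) := by gcongr
    _ = 2 ^ n / k := by rw [div_mul_div_comm, mul_one, mul_self_sqrt hk.le]

theorem one_sub_two_div_sqrt_le_sum_range_choose_div {n k s : ℕ} (hn : n + s + 1 = 2 * k)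
    (hsk : s < k) (hlog : 2 * k * log k ≤ (s : ℝ) ^ 2) (hs : √k ≤ s) :
    1 - 2 / √k ≤ (∑ m ∈ range k, (n.choose m : ℝ)) / 2 ^ n := by
  have hk : (1 : ℝ) ≤ k := by exact_mod_cast (by omega : 1 ≤ k)
  have hsqrt : 0 < √k := sqrt_pos.2 (by linarith)
  have hsplit :
      ∑ m ∈ range k, (n.choose m : ℝ) + ∑ m ∈ Ico k (n + 1), (n.choose m : ℝ) = 2 ^ n := by
    rw [range_eq_Ico, sum_Ico_consecutive _ (Nat.zero_le k) (by omega), ← range_eq_Ico]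
    exact_mod_cast Nat.sum_range_choose n
  have hgap : (2 * k + 1 - n : ℝ) = s + 2 := by
    have : ((n + s + 1 : ℕ) : ℝ) = (2 * k : ℕ) := by rw [hn]
    push_cast at this; linarith
  have htail : ∑ m ∈ Ico k (n + 1), (n.choose m : ℝ) ≤ 2 ^ n * (2 / √k) :=
    calc ∑ m ∈ Ico k (n + 1), (n.choose m : ℝ) ≤ n.choose k * ((k + 1) / (s + 2)) := by
          rw [← hgap]; exact Nat.sum_Ico_choose_le (by omega) (by omega)
      _ ≤ 2 ^ n / k * ((k + 1) / (s + 2)) := by gcongr; exact choose_le_two_pow_div hn hsk hlog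
      _ ≤ 2 ^ n * (2 / √k) := by
          rw [div_mul_div_comm, mul_div_assoc]
          refine mul_le_mul_of_nonneg_left ?_ (by positivity)
          rw [div_le_div_iff₀ (by positivity) hsqrt]
          nlinarith [sq_sqrt (by linarith : (0 : ℝ) ≤ k)]
  rw [le_div_iff₀ (by positivity)]
  linarith

theorem choose_two_mul_sub_one_div_le {r : ℕ} (hr : 1 ≤ r) :
    ((2 * r - 1).choose r : ℝ) / 2 ^ (2 * r - 1) ≤ 1 / √(2 * r) := by
  have h := Nat.choose_le_two_pow_div_sqrt (2 * r - 1) r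
  rw [show ((2 * r - 1 : ℕ) : ℝ) + 1 = 2 * r by
    push_cast [Nat.cast_sub (by omega : 1 ≤ 2 * r)]; ring] at h
  rwa [div_le_iff₀ (by positivity), one_div_mul_eq_div]

theorem sqrt_two_mul_mul_log_add_one_le_half {x : ℝ} (hx : 4096 ≤ x) :
    √(2 * x * log x) + 1 ≤ x / 2 := by
  set u := √x
  have hu : 64 ≤ u := by
    rw [show (64 : ℝ) = √4096 by rw [show (4096 : ℝ) = 64 ^ 2 by norm_num, sqrt_sq (by norm_num)]]
    exact sqrt_le_sqrt hx
  have hux : u ^ 2 = x := sq_sqrt (by linarith)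
  have hlog : log x ≤ 2 * u := by
    have := log_le_sub_one_of_pos (x := u) (by linarith)
    rw [log_sqrt (by linarith)] at this
    linarith
  rw [← le_sub_iff_add_le, sqrt_le_left (by linarith)]
  calc 2 * x * log x ≤ 2 * x * (2 * u) := by gcongr
    _ = 4 * u ^ 3 := by rw [← hux]; ring
    _ ≤ (x / 2 - 1) ^ 2 := by
        rw [← hux]
        nlinarith [mul_nonneg (sq_nonneg u) (by nlinarith : (0 : ℝ) ≤ u ^ 2 - 16 * u - 4)]

theorem one_sub_sqrt_sub_four_div_sqrt_le_div {k s B μ : ℝ} (hk : 1 ≤ k) (hs₀ : 0 ≤ s)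
    (hsk : s ≤ k) (hs : s ≤ √(2 * k * log k) + 1) (hB : 1 - 2 / √k ≤ B) (hμ : μ ≤ 1 / √k) :
    1 - √(2 * log k / k) - 4 / √k ≤ ((k - s) * B - (k - s) * μ) / k := by
  have hk₀ : 0 < k := by linarith
  have hsqrt : √k * √k = k := mul_self_sqrt hk₀.le
  have hx : √(2 * log k / k) * k = √(2 * k * log k) := by
    rw [show 2 * k * log k = 2 * log k / k * k ^ 2 by field_simp,
      sqrt_mul' _ (sq_nonneg _), sqrt_sq hk₀.le]
  have h4 : 4 / √k * k = 4 * √k := by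
    rw [div_mul_eq_mul_div, div_eq_iff (by positivity), mul_assoc, hsqrt]
  have hr_inv : (k - s) * (1 / √k) ≤ √k := by
    rw [mul_one_div, div_le_iff₀ (by positivity), hsqrt]; linarith
  have hrB : (k - s) * (1 - 2 / √k) ≤ (k - s) * B := mul_le_mul_of_nonneg_left hB (by linarith)
  have hrμ : (k - s) * μ ≤ (k - s) * (1 / √k) := mul_le_mul_of_nonneg_left hμ (by linarith)
  rw [le_div_iff₀ hk₀]
  linarith [
    show (1 - √(2 * log k / k) - 4 / √k) * k = k - √(2 * log k / k) * k - 4 / √k * k by ring,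
    show (k - s) * (1 - 2 / √k) = k - s - 2 * ((k - s) * (1 / √k)) by ring, one_le_sqrt.2 hk]

/-- There exist `C > 0` and `k₀` such that for all `k ≥ k₀`, with
`r = k − ⌈√(2k·log k)⌉` and `B(r,k) = 2^{−(r+k−1)}·Σ_{m=0}^{k−1} C(r+k−1, m)`,
`(r·B(r,k) − r·C(2r−1,r)/2^{2r−1})/k ≥ 1 − √(2·log k / k) − C/√k`. -/
theorem competitive_ratio_lower_bound_large_k :
    ∃ (C : ℝ) (k₀ : ℕ), 0 < C ∧ ∀ k : ℕ, k₀ ≤ k →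
      let r : ℕ := k - ⌈Real.sqrt (2 * k * Real.log k)⌉₊
      let B : ℝ := (∑ m ∈ Finset.range k, (Nat.choose (r + k - 1) m : ℝ)) / 2 ^ (r + k - 1)
      ((r : ℝ) * B - (r : ℝ) * (Nat.choose (2 * r - 1) r : ℝ) / 2 ^ (2 * r - 1)) / (k : ℝ)
        ≥ 1 - Real.sqrt (2 * Real.log k / k) - C / Real.sqrt k := by
  refine ⟨4, 4096, by norm_num, fun k hk => ?_⟩
  intro r B
  set x := √(2 * k * log k)
  set s := ⌈x⌉₊
  have hr : r = k - s := rfl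
  have hkR : (4096 : ℝ) ≤ k := by exact_mod_cast hk
  have hs_lo : x ≤ s := Nat.le_ceil x
  have hs_hi : (s : ℝ) ≤ x + 1 := (Nat.ceil_lt_add_one (sqrt_nonneg _)).le
  have hx_half : x + 1 ≤ k / 2 := sqrt_two_mul_mul_log_add_one_le_half hkR
  have hlog : 2 * k * log k ≤ (s : ℝ) ^ 2 := (sqrt_le_left (by positivity)).1 hs_lo
  have hlog_one : 1 ≤ log k := by
    rw [le_log_iff_exp_le (by linarith)]; linarith [exp_one_lt_d9]
  have hsqrt_le : √k ≤ s := (sqrt_le_sqrt (by nlinarith)).trans hs_lo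
  have hsk : 2 * s ≤ k := by exact_mod_cast (by linarith : (2 * s : ℝ) ≤ k)
  have hrR : (r : ℝ) = k - s := by rw [hr, Nat.cast_sub (by omega)]
  have hB : 1 - 2 / √k ≤ B :=
    one_sub_two_div_sqrt_le_sum_range_choose_div (by omega) (by omega) hlog hsqrt_le
  have hmid : ((2 * r - 1).choose r : ℝ) / 2 ^ (2 * r - 1) ≤ 1 / √k :=
    (choose_two_mul_sub_one_div_le (by omega)).trans
      (one_div_le_one_div_of_le (by positivity) (sqrt_le_sqrt (by rw [hrR]; linarith)))
  rw [ge_iff_le, hrR, mul_div_assoc ((k : ℝ) - s)]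
  exact one_sub_sqrt_sub_four_div_sqrt_le_div (by linarith) s.cast_nonneg (by linarith) hs_hi
    hB hmid
end

section
/- In the pairing model, let k, i, j be integers with 1 ≤ k ≤ n, 1 ≤ i ≤ n, and j − k < i ≤ j. Then Pr(X^i > Y^{j+1−i} and Y^k > X^{i+k}) ≥ (1/2)·Pr(X^i > Y^{j+1−i}). -/
open Finset

attribute [local instance] Classical.propDecidable

/-- The `m`-th largest value among `v 0, …, v (n-1)` (with multiplicity);
equals `0` when `m > n`, matching the convention `X^m = Y^m = 0` for `m > n`. -/
noncomputable def kthLargest {n : ℕ} (v : Fin n → ℝ) (m : ℕ) : ℝ :=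
  sSup {x : ℝ | m ≤ (Finset.univ.filter (fun i => x ≤ v i)).card}

/-- The `X`-set of the assignment `σ`: for each pair `(a i, b i)`, the value `a i` if
`σ i = true`, and `b i` otherwise. -/
def Xvals {n : ℕ} (a b : Fin n → ℝ) (σ : Fin n → Bool) : Fin n → ℝ :=
  fun i => if σ i then a i else b i

/-- The `Y`-set of the assignment `σ`: the values not placed in the `X`-set. -/
def Yvals {n : ℕ} (a b : Fin n → ℝ) (σ : Fin n → Bool) : Fin n → ℝ :=
  fun i => if σ i then b i else a i

/-- `X^m` under assignment `σ`. -/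
noncomputable def XS {n : ℕ} (a b : Fin n → ℝ) (σ : Fin n → Bool) (m : ℕ) : ℝ :=
  kthLargest (Xvals a b σ) m

/-- `Y^m` under assignment `σ`. -/
noncomputable def YS {n : ℕ} (a b : Fin n → ℝ) (σ : Fin n → Bool) (m : ℕ) : ℝ :=
  kthLargest (Yvals a b σ) m

/-- The probability of an event under the uniform random assignment: each of the `n` pairs
is independently assigned with probability `1/2` each way. -/
noncomputable def Pr {n : ℕ} (E : (Fin n → Bool) → Prop) : ℝ :=
  ((Finset.univ.filter E).card : ℝ) / 2 ^ n

/-!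
Write `θ_r` for the `r`-th largest of the `2n` values. As the values are distinct, exactly `r` of
them are `≥ θ_r`, and `Y^q < X^p` holds iff at least `p` of the top `p + q - 1` values lie in the
`X`-set. Hence, with `F` and `G` the numbers of `X`-values `≥ θ_j` and `≥ θ_m`, `m = i + 2k - 1`,
the two events are `F ≥ i` and `G < i + k` (if `i + k > n` then `X^{i+k} = 0` and the second event
is certain), and it suffices to show `#{F ≥ i, G ≥ c} ≤ #{F ≥ i, G < c}` for `c = i + k`.

Condition on the pairs that do not have exactly one value `≥ θ_m`: those with two such values add
`1` to `G` whatever the assignment. On the remaining pairs, `G` is a shift of `S + R` and `F` a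
shift of `S`, where `S` and `R` count the pairs whose upper value goes to `X` and is `≥ θ_j`,
resp. `< θ_j`. The difference of the two counts is then `∑_s C(N₁, s) [s ≥ t] B(s)` with
`B(s) = ∑_r C(N₂, r) (±1 as s + r ≥ c or not)`. `B` is monotone and odd about a centre
`M / 2` with `M ≥ N₁ + t`, so pairing `s` with `M - s` and using the unimodality of
`s ↦ C(N₁, s)` shows that the sum is `≤ 0`.
-/

section CountAbove

variable {ι : Type*} [Fintype ι]

noncomputable def countAbove (w : ι → ℝ) (θ : ℝ) : ℕ := #{l | θ ≤ w l}

lemma countAbove_anti (w : ι → ℝ) {θ θ' : ℝ} (h : θ ≤ θ') : countAbove w θ' ≤ countAbove w θ :=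
  card_le_card fun l hl => by
    simp only [mem_filter, mem_univ, true_and] at hl ⊢
    exact h.trans hl

lemma countAbove_le_card (w : ι → ℝ) (θ : ℝ) : countAbove w θ ≤ Fintype.card ι :=
  card_filter_le _ _

lemma countAbove_add_countAbove_not (v : ι → Bool → ℝ) (σ : ι → Bool) (θ : ℝ) :
    countAbove (fun l => v l (σ l)) θ + countAbove (fun l => v l (!σ l)) θ
      = countAbove (Function.uncurry v) θ := by
  simp only [countAbove, card_filter, ← sum_add_distrib, Fintype.sum_prod_type,
    Function.uncurry_apply_pair, Fintype.sum_bool]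
  refine sum_congr rfl fun l _ => ?_
  cases σ l
  exacts [add_comm _ _, rfl]

lemma exists_countAbove_eq {w : ι → ℝ} (hw : Function.Injective w)
    {r : ℕ} (hr1 : 1 ≤ r) (hr : r ≤ Fintype.card ι) : ∃ l, countAbove w (w l) = r := by
  induction r, hr1 using Nat.le_induction with
  | base =>
    obtain ⟨l, -, hl⟩ := exists_max_image univ w (univ_nonempty_iff.2 (Fintype.card_pos_iff.1 hr))
    refine ⟨l, card_eq_one.2 ⟨l, ext fun l' => ?_⟩⟩
    simp only [mem_filter, mem_univ, true_and, mem_singleton]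
    exact ⟨fun h => hw ((hl l' (mem_univ _)).antisymm h), fun h => h ▸ le_rfl⟩
  | succ r _ ih =>
    obtain ⟨l, hl⟩ := ih (by omega)
    have hbelow : ({l' | w l' < w l} : Finset ι).Nonempty := by
      have hsplit : countAbove w (w l) + #({l' | w l' < w l} : Finset ι) = Fintype.card ι := by
        rw [← card_univ, ← card_filter_add_card_filter_not (s := univ) (fun l' => w l ≤ w l')]
        exact congrArg _ (congrArg card (filter_congr fun _ _ => not_le.symm))
      rw [← card_pos]
      omega
    obtain ⟨l₂, hl₂, hmax⟩ := exists_max_image _ w hbelow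
    have hl₂l : w l₂ < w l := (mem_filter.1 hl₂).2
    have hinsert : ({l' | w l₂ ≤ w l'} : Finset ι) = insert l₂ ({l' | w l ≤ w l'} : Finset ι) := by
      ext l'
      simp only [mem_filter, mem_univ, true_and, mem_insert]
      constructor
      · intro h
        by_contra! h'
        exact h'.1 (hw ((hmax l' (mem_filter.2 ⟨mem_univ _, h'.2⟩)).antisymm h))
      · rintro (rfl | h)
        exacts [le_rfl, hl₂l.le.trans h]
    refine ⟨l₂, ?_⟩
    rw [countAbove, hinsert, card_insert_of_notMem (by simpa using hl₂l)]
    exact congrArg (· + 1) hl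

end CountAbove

section KthLargest

variable {n : ℕ} {v : Fin n → ℝ} {m : ℕ}

lemma setOf_le_countAbove_eq_Iic (hm1 : 1 ≤ m) (hmn : m ≤ n) :
    ∃ l, {x | m ≤ countAbove v x} = Set.Iic (v l) := by
  have hn : (univ : Finset (Fin n)).Nonempty := univ_nonempty_iff.2 ⟨⟨0, by omega⟩⟩
  obtain ⟨l₀, -, hl₀⟩ := exists_min_image univ v hn
  have hF : ({l | m ≤ countAbove v (v l)} : Finset (Fin n)).Nonempty := by
    refine ⟨l₀, mem_filter.2 ⟨mem_univ _, ?_⟩⟩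
    rwa [countAbove, filter_true_of_mem fun l _ => hl₀ l (mem_univ l), card_univ,
      Fintype.card_fin]
  obtain ⟨l, hl, hmax⟩ := exists_max_image _ v hF
  refine ⟨l, Set.ext fun x => ⟨fun hx => ?_, fun hx =>
    (mem_filter.1 hl).2.trans (countAbove_anti v hx)⟩⟩
  have hG : ({l | x ≤ v l} : Finset (Fin n)).Nonempty := card_pos.1 (by
    change 0 < countAbove v x
    exact lt_of_lt_of_le hm1 hx)
  obtain ⟨l', hl', hmin⟩ := exists_min_image _ v hG
  have hxl' : x ≤ v l' := (mem_filter.1 hl').2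
  have hcount : countAbove v (v l') = countAbove v x := by
    refine congrArg card (filter_congr fun l'' _ => ⟨hxl'.trans, fun h => ?_⟩)
    exact hmin l'' (mem_filter.2 ⟨mem_univ _, h⟩)
  exact hxl'.trans (hmax l' (mem_filter.2 ⟨mem_univ _, hcount ▸ hx⟩))

lemma exists_kthLargest_eq (hm1 : 1 ≤ m) (hmn : m ≤ n) :
    ∃ l, kthLargest v m = v l ∧ ∀ x, x ≤ v l ↔ m ≤ countAbove v x := by
  obtain ⟨l, hl⟩ := setOf_le_countAbove_eq_Iic (v := v) hm1 hmn
  refine ⟨l, ?_, fun x => (Set.ext_iff.1 hl x).symm⟩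
  change sSup {x | m ≤ countAbove v x} = v l
  rw [hl, csSup_Iic]

lemma le_kthLargest_iff (hm1 : 1 ≤ m) (hmn : m ≤ n) {x : ℝ} :
    x ≤ kthLargest v m ↔ m ≤ countAbove v x := by
  obtain ⟨l, hl, hiff⟩ := exists_kthLargest_eq (v := v) hm1 hmn
  rw [hl, hiff]

lemma kthLargest_pos (hv : ∀ l, 0 < v l) (hm1 : 1 ≤ m) (hmn : m ≤ n) : 0 < kthLargest v m := by
  obtain ⟨l, hl, -⟩ := exists_kthLargest_eq (v := v) hm1 hmn
  exact hl ▸ hv l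

lemma kthLargest_eq_zero (hm : n < m) : kthLargest v m = 0 := by
  have : {x | m ≤ countAbove v x} = ∅ := Set.eq_empty_of_forall_notMem fun x hx => by
    have := (countAbove_le_card v x).trans_eq (Fintype.card_fin n)
    exact absurd (hm.trans_le (hx.trans this)) (lt_irrefl n)
  change sSup {x | m ≤ countAbove v x} = 0
  rw [this, Real.sSup_empty]

lemma kthLargest_lt_kthLargest_iff {w : Fin n → ℝ} {θ : ℝ} (hθ : 0 < θ) {p q : ℕ}
    (hp1 : 1 ≤ p) (hpn : p ≤ n) (hq1 : 1 ≤ q)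
    (hcount : countAbove v θ + countAbove w θ + 1 = p + q) :
    kthLargest w q < kthLargest v p ↔ p ≤ countAbove v θ := by
  have hwn := countAbove_le_card w θ
  rw [Fintype.card_fin] at hwn
  constructor
  · intro hlt
    by_contra hvp
    have hv : kthLargest v p < θ := not_le.1 fun h => hvp ((le_kthLargest_iff hp1 hpn).1 h)
    have hw : θ ≤ kthLargest w q := (le_kthLargest_iff hq1 (by omega)).2 (by omega)
    linarith
  · intro hvp
    have hv : θ ≤ kthLargest v p := (le_kthLargest_iff hp1 hpn).2 hvp
    rcases le_or_gt q n with hqn | hqn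
    · exact (not_le.1 fun h => by have := (le_kthLargest_iff hq1 hqn).1 h; omega).trans_le hv
    · rw [kthLargest_eq_zero hqn]
      exact hθ.trans_le hv

end KthLargest

namespace Nat

lemma choose_le_choose_of_le_of_le_half {N a b : ℕ} (hab : a ≤ b) (hb : b ≤ N / 2) :
    N.choose a ≤ N.choose b := by
  induction b, hab using Nat.le_induction with
  | base => rfl
  | succ b _ ih => exact (ih (by omega)).trans (choose_le_succ_of_lt_half_left (by omega))

lemma choose_le_choose_of_le_of_add_le {N a b : ℕ} (hab : a ≤ b) (h : a + b ≤ N) :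
    N.choose a ≤ N.choose b := by
  rcases le_or_gt b (N / 2) with hb | hb
  · exact choose_le_choose_of_le_of_le_half hab hb
  · rw [← choose_symm (show b ≤ N by omega)]
    exact choose_le_choose_of_le_of_le_half (by omega) (by omega)

end Nat

lemma sum_mul_nonpos_of_reflect {w f : ℕ → ℤ} {N M : ℕ} (hNM : N ≤ M) (hf : Monotone f)
    (hf_refl : ∀ s ≤ M, f (M - s) = -f s) (hw : ∀ s, 2 * s ≤ M → w (M - s) ≤ w s)
    (hw0 : ∀ s, N < s → w s = 0) :
    ∑ s ∈ range (N + 1), w s * f s ≤ 0 := by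
  have hext : ∑ s ∈ range (N + 1), w s * f s = ∑ s ∈ range (M + 1), w s * f s :=
    sum_subset (range_subset_range.2 (by omega)) fun s _ hs => by
      rw [hw0 s (by simpa using hs), zero_mul]
  have htwice : 2 * ∑ s ∈ range (M + 1), w s * f s
      = ∑ s ∈ range (M + 1), (w s - w (M - s)) * f s := by
    rw [two_mul]
    nth_rw 2 [← sum_range_reflect]
    rw [← sum_add_distrib]
    refine sum_congr rfl fun s hs => ?_
    rw [show M + 1 - 1 - s = M - s by omega, hf_refl s (by simpa [Nat.lt_succ_iff] using hs)]
    ring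
  have hterm : ∀ s ∈ range (M + 1), (w s - w (M - s)) * f s ≤ 0 := by
    intro s hs
    have hsM : s ≤ M := by simpa [Nat.lt_succ_iff] using hs
    rcases le_total (2 * s) M with h | h
    · have : f s ≤ f (M - s) := hf (by omega)
      rw [hf_refl s hsM] at this
      exact mul_nonpos_of_nonneg_of_nonpos (by linarith [hw s h]) (by linarith)
    · have hw' := hw (M - s) (by omega)
      have hf' : f (M - s) ≤ f s := hf (by omega)
      rw [Nat.sub_sub_self hsM] at hw'
      rw [hf_refl s hsM] at hf'
      exact mul_nonpos_of_nonpos_of_nonneg (by linarith) (by linarith)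
  linarith [sum_nonpos hterm]

def tailBalance (N c s : ℕ) : ℤ :=
  ∑ r ∈ range (N + 1), (N.choose r : ℤ) * if c ≤ s + r then 1 else -1

lemma tailBalance_mono (N c : ℕ) : Monotone (tailBalance N c) := fun s s' hss' =>
  sum_le_sum fun r _ => mul_le_mul_of_nonneg_left
    (by split_ifs <;> omega) (by positivity)

lemma tailBalance_reflect {N c s s' : ℕ} (h : s + s' + N + 1 = 2 * c) :
    tailBalance N c s' = -tailBalance N c s := by
  rw [tailBalance, tailBalance, ← sum_range_reflect, ← sum_neg_distrib]
  refine sum_congr rfl fun r hr => ?_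
  have hrN : r ≤ N := by simpa [Nat.lt_succ_iff] using hr
  rw [show N + 1 - 1 - r = N - r by omega, Nat.choose_symm hrN]
  split_ifs <;> first | (exfalso; omega) | ring

lemma sum_choose_mul_tailBalance_nonpos {N₁ N₂ t c : ℕ} (h : N₁ + N₂ + 1 + t ≤ 2 * c) :
    ∑ s ∈ range (N₁ + 1), (N₁.choose s : ℤ) * (if t ≤ s then 1 else 0) * tailBalance N₂ c s
      ≤ 0 := by
  set M := 2 * c - N₂ - 1
  have hw0 : ∀ r, N₁ < r → (N₁.choose r : ℤ) * (if t ≤ r then 1 else 0) = 0 := fun r hr => by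
    rw [Nat.choose_eq_zero_of_lt hr, Nat.cast_zero, zero_mul]
  refine sum_mul_nonpos_of_reflect (M := M) (by omega) (tailBalance_mono N₂ c)
    (fun s hs => tailBalance_reflect (by omega)) (fun s hs => ?_) hw0
  by_cases htMs : t ≤ M - s
  · rcases le_or_gt (M - s) N₁ with hMs | hMs
    · rw [if_pos htMs, if_pos (show t ≤ s by omega), mul_one, mul_one, ← Nat.choose_symm hMs]
      exact_mod_cast Nat.choose_le_choose_of_le_of_add_le (by omega) (by omega)
    · rw [hw0 _ hMs]; positivity
  · rw [if_neg htMs, mul_zero]; positivity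

section Powerset

variable {κ : Type*} [DecidableEq κ]

lemma sum_powerset_union {M : Type*} [AddCommMonoid M] {A B : Finset κ} (h : Disjoint A B)
    (f : Finset κ → M) :
    ∑ T ∈ (A ∪ B).powerset, f T = ∑ S ∈ A.powerset, ∑ R ∈ B.powerset, f (S ∪ R) := by
  rw [← sum_product' (f := fun S R => f (S ∪ R))]
  refine sum_nbij' (fun T => (T ∩ A, T ∩ B)) (fun p => p.1 ∪ p.2) ?_ ?_ ?_ ?_ ?_
  · intro T _
    simp [inter_subset_right]
  · intro p hp
    simp only [mem_product, mem_powerset] at hp ⊢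
    exact union_subset_union hp.1 hp.2
  · intro T hT
    rw [← inter_union_distrib_left, inter_eq_left.2 (mem_powerset.1 hT)]
  · rintro ⟨S, R⟩ hp
    simp only [mem_product, mem_powerset] at hp
    simp only [union_inter_distrib_right, inter_eq_left.2 hp.1, inter_eq_left.2 hp.2,
      disjoint_iff_inter_eq_empty.1 (h.mono_left hp.1),
      disjoint_iff_inter_eq_empty.1 (h.symm.mono_left hp.2), union_empty, empty_union]
  · intro T hT
    rw [← inter_union_distrib_left, inter_eq_left.2 (mem_powerset.1 hT)]

lemma card_powerset_ge_le_card_powerset_lt {A D : Finset κ} (hD : D ⊆ A) {t c : ℕ}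
    (h : #A + 1 + t ≤ 2 * c) :
    #{U ∈ A.powerset | t ≤ #(U ∩ D) ∧ c ≤ #U} ≤ #{U ∈ A.powerset | t ≤ #(U ∩ D) ∧ #U < c} := by
  suffices hsum : ∑ U ∈ A.powerset,
      ((if t ≤ #(U ∩ D) then 1 else 0) * if c ≤ #U then 1 else -1 : ℤ) ≤ 0 by
    have hdiff : (#{U ∈ A.powerset | t ≤ #(U ∩ D) ∧ c ≤ #U} : ℤ)
        - #{U ∈ A.powerset | t ≤ #(U ∩ D) ∧ #U < c} = ∑ U ∈ A.powerset,
          ((if t ≤ #(U ∩ D) then 1 else 0) * if c ≤ #U then 1 else -1 : ℤ) := by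
      rw [card_filter, card_filter, Nat.cast_sum, Nat.cast_sum, ← sum_sub_distrib]
      refine sum_congr rfl fun U _ => ?_
      split_ifs <;> first | (exfalso; omega) | simp
    omega
  have hsplit : #D + #(A \ D) + 1 + t ≤ 2 * c := by
    rw [← card_sdiff_add_card_eq_card hD] at h
    omega
  rw [← union_sdiff_of_subset hD, sum_powerset_union disjoint_sdiff]
  calc _ = ∑ S ∈ D.powerset, (if t ≤ #S then 1 else 0) * tailBalance #(A \ D) c #S := by
        refine sum_congr rfl fun S hS => ?_
        have hR := sum_powerset_apply_card (fun r => (if c ≤ #S + r then 1 else -1 : ℤ))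
          (x := A \ D)
        simp only [nsmul_eq_mul] at hR
        rw [tailBalance, ← hR, mul_sum]
        refine sum_congr rfl fun R hR => ?_
        have hS : S ⊆ D := mem_powerset.1 hS
        have hRD : Disjoint R D := disjoint_of_subset_left (mem_powerset.1 hR) sdiff_disjoint
        rw [union_inter_distrib_right, inter_eq_left.2 hS, disjoint_iff_inter_eq_empty.1 hRD,
          union_empty, card_union_of_disjoint (hRD.symm.mono_left hS)]
    _ = ∑ s ∈ range (#D + 1), ((#D).choose s : ℤ) * (if t ≤ s then 1 else 0)
          * tailBalance #(A \ D) c s := by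
        rw [sum_powerset_apply_card (fun s => (if t ≤ s then 1 else 0) * tailBalance _ c s)]
        simp only [nsmul_eq_mul, mul_assoc]
    _ ≤ 0 := sum_choose_mul_tailBalance_nonpos hsplit

end Powerset

section Twist

variable {ι : Type*} [Fintype ι] [DecidableEq ι]

def twist (ε : ι → Bool) (T : Finset ι) : ι → Bool := fun l => if l ∈ T then ε l else !ε l

lemma card_filter_twist (ε : ι → Bool) (Φ : (ι → Bool) → Prop) [DecidablePred Φ] :
    #{σ | Φ σ} = #{T | Φ (twist ε T)} := by
  refine (card_equiv
    ⟨twist ε, fun σ => ({l | σ l = ε l} : Finset ι), fun T => ?_, fun σ => ?_⟩ ?_).symm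
  · ext l
    by_cases hl : l ∈ T <;> simp [twist, hl]
  · funext l
    simp only [twist, mem_filter, mem_univ, true_and]
    cases σ l <;> cases ε l <;> rfl
  · simp

lemma card_filter_eq_sum_powerset (P : Finset ι) (Φ : Finset ι → Prop) [DecidablePred Φ] :
    #{T | Φ T} = ∑ V ∈ Pᶜ.powerset, #{U ∈ P.powerset | Φ (U ∪ V)} := by
  rw [card_filter, ← powerset_univ, ← union_compl P, sum_powerset_union disjoint_compl_right,
    sum_comm]
  simp only [card_filter]

variable {v : ι → Bool → ℝ} {θ' : ℝ} {ε : ι → Bool} {P U V : Finset ι}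

lemma countAbove_twist_union {θ : ℝ} (hθ : θ' ≤ θ) (hP : ∀ l ∈ P, v l (!ε l) < θ')
    (hU : U ⊆ P) (hV : Disjoint V P) :
    countAbove (fun l => v l (twist ε (U ∪ V) l)) θ
      = #(U ∩ P.filter fun l => θ ≤ v l (ε l)) + countAbove (fun l => v l (twist ε V l)) θ := by
  have hlow : ∀ l ∈ U, ¬θ ≤ v l (!ε l) := fun l hl => not_le.2 ((hP l (hU hl)).trans_le hθ)
  have hVU : ∀ l ∈ U, l ∉ V := fun l hl hlV => disjoint_left.1 hV hlV (hU hl)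
  rw [countAbove, countAbove, ← card_union_of_disjoint]
  · congr 1
    ext l
    simp only [mem_filter, mem_univ, true_and, mem_union, mem_inter]
    simp only [twist]
    by_cases hl : l ∈ U
    · simp [hl, hU hl, hlow l hl, hVU l hl]
    · simp [hl]
  · refine disjoint_left.2 fun l hl hl' => ?_
    simp only [mem_inter] at hl
    simp only [mem_filter, mem_univ, true_and] at hl'
    simp only [twist, if_neg (hVU l hl.1)] at hl'
    exact hlow l hl.1 hl'

lemma countAbove_uncurry_eq (hε : ∀ l, θ' ≤ v l (!ε l) → θ' ≤ v l (ε l))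
    (hP : P = ({l | θ' ≤ v l (ε l) ∧ v l (!ε l) < θ'} : Finset ι)) (hV : Disjoint V P) :
    countAbove (Function.uncurry v) θ'
      = #P + 2 * countAbove (fun l => v l (twist ε V l)) θ' := by
  rw [countAbove, countAbove, card_filter, card_filter, Fintype.sum_prod_type, mul_sum, hP,
    card_filter, ← sum_add_distrib]
  refine sum_congr rfl fun l _ => ?_
  rw [Fintype.sum_bool]
  simp only [Function.uncurry_apply_pair]
  by_cases hlP : θ' ≤ v l (ε l) ∧ v l (!ε l) < θ'
  · have hlV : l ∉ V := fun h => disjoint_left.1 hV h (by rw [hP]; simpa using hlP)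
    simp only [twist, hlV, if_false, hlP, and_self, if_true, not_le.2 hlP.2]
    cases h : ε l <;> simp only [h, Bool.not_true, Bool.not_false] at hlP ⊢ <;>
      simp [hlP.1, not_le.2 hlP.2]
  · have hside : ∀ x, θ' ≤ v l x ↔ θ' ≤ v l (ε l) := fun x => by
      have := hε l
      cases x <;> cases h : ε l <;>
        simp only [h, Bool.not_true, Bool.not_false, ← not_le] at this hlP ⊢ <;>
        tauto
    simp only [if_neg hlP, hside true, hside false, hside (twist ε V l)]
    split_ifs <;> rfl

end Twist

theorem card_countAbove_ge_le_card_countAbove_lt {ι : Type*} [Fintype ι] [DecidableEq ι]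
    (v : ι → Bool → ℝ) {θ' θ : ℝ} (hθ : θ' ≤ θ) {i c : ℕ}
    (h : countAbove (Function.uncurry v) θ' + 1 + i ≤ 2 * c) :
    #{σ : ι → Bool | i ≤ countAbove (fun l => v l (σ l)) θ ∧
        c ≤ countAbove (fun l => v l (σ l)) θ'}
      ≤ #{σ : ι → Bool | i ≤ countAbove (fun l => v l (σ l)) θ ∧
        countAbove (fun l => v l (σ l)) θ' < c} := by
  set ε : ι → Bool := fun l => decide (θ' ≤ v l true)
  have hε : ∀ l, θ' ≤ v l (!ε l) → θ' ≤ v l (ε l) := by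
    intro l
    by_cases h : θ' ≤ v l true <;> simp [ε, h]
  -- `ε l` is a side of pair `l` carrying a value `≥ θ'` if there is one; `P` collects the pairs
  -- with exactly one such value, the only ones on which `countAbove · θ'` depends on the side.
  set P : Finset ι := {l | θ' ≤ v l (ε l) ∧ v l (!ε l) < θ'} with hP
  have hPlow : ∀ l ∈ P, v l (!ε l) < θ' := fun l hl => (mem_filter.1 hl).2.2
  rw [card_filter_twist ε, card_filter_twist ε, card_filter_eq_sum_powerset P,
    card_filter_eq_sum_powerset P]
  refine sum_le_sum fun V hV => ?_
  have hVP : Disjoint V P := disjoint_left.2 fun l hlV hlP =>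
    mem_compl.1 (mem_powerset.1 hV hlV) hlP
  set f := countAbove (fun l => v l (twist ε V l)) θ
  set g := countAbove (fun l => v l (twist ε V l)) θ'
  have hQ := countAbove_uncurry_eq hε hP hVP
  have hF : ∀ U ∈ P.powerset, countAbove (fun l => v l (twist ε (U ∪ V) l)) θ
      = #(U ∩ P.filter fun l => θ ≤ v l (ε l)) + f := fun U hU =>
    countAbove_twist_union hθ hPlow (mem_powerset.1 hU) hVP
  have hG : ∀ U ∈ P.powerset, countAbove (fun l => v l (twist ε (U ∪ V) l)) θ' = #U + g := by
    intro U hU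
    rw [countAbove_twist_union le_rfl hPlow (mem_powerset.1 hU) hVP,
      filter_true_of_mem fun l hl => (mem_filter.1 hl).2.1, inter_eq_left.2 (mem_powerset.1 hU)]
  calc _ = #{U ∈ P.powerset | i - f ≤ #(U ∩ P.filter fun l => θ ≤ v l (ε l)) ∧ c - g ≤ #U} := by
        refine congrArg card (filter_congr fun U hU => ?_)
        rw [hF U hU, hG U hU]
        omega
    _ ≤ #{U ∈ P.powerset | i - f ≤ #(U ∩ P.filter fun l => θ ≤ v l (ε l)) ∧ #U < c - g} :=
        card_powerset_ge_le_card_powerset_lt (filter_subset _ _) (by omega)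
    _ = _ := by
        refine congrArg card (filter_congr fun U hU => ?_)
        rw [hF U hU, hG U hU]
        omega

section Pairs

variable {n : ℕ} (a b : Fin n → ℝ)

def pairVal (l : Fin n) (x : Bool) : ℝ := if x then a l else b l

lemma injective_uncurry_pairVal (h : Function.Injective (Sum.elim a b : Fin n ⊕ Fin n → ℝ)) :
    Function.Injective (Function.uncurry (pairVal a b)) := by
  rintro ⟨l, x⟩ ⟨l', x'⟩ hll'
  have := @h (if x then .inl l else .inr l) (if x' then .inl l' else .inr l')
    (by cases x <;> cases x' <;> exact hll')
  cases x <;> cases x' <;> simp_all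

variable {a b} (σ : Fin n → Bool) {θ : ℝ}

lemma countAbove_Xvals_add_countAbove_Yvals :
    countAbove (Xvals a b σ) θ + countAbove (Yvals a b σ) θ
      = countAbove (Function.uncurry (pairVal a b)) θ := by
  have hY : Yvals a b σ = fun l => pairVal a b l (!σ l) := funext fun l => by
    simp only [Yvals, pairVal]
    cases σ l <;> rfl
  rw [hY]
  exact countAbove_add_countAbove_not (pairVal a b) σ θ

lemma uncurry_pairVal_pos (ha : ∀ l, 0 < a l) (hb : ∀ l, 0 < b l) (x : Fin n × Bool) :
    0 < Function.uncurry (pairVal a b) x := by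
  rcases x with ⟨l, _ | _⟩
  exacts [hb l, ha l]

lemma XS_lt_YS_of_lt (ha : ∀ l, 0 < a l) (hb : ∀ l, 0 < b l) {p q : ℕ} (hp1 : 1 ≤ p)
    (hpn : p ≤ n) (hq : n < q) : XS a b σ q < YS a b σ p := by
  rw [XS, kthLargest_eq_zero hq]
  refine kthLargest_pos (fun l => ?_) hp1 hpn
  unfold Yvals
  split_ifs
  exacts [hb l, ha l]

lemma YS_lt_XS_iff (hθ : 0 < θ) {p q : ℕ} (hp1 : 1 ≤ p) (hpn : p ≤ n) (hq1 : 1 ≤ q)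
    (hcount : countAbove (Function.uncurry (pairVal a b)) θ + 1 = p + q) :
    YS a b σ q < XS a b σ p ↔ p ≤ countAbove (Xvals a b σ) θ :=
  kthLargest_lt_kthLargest_iff hθ hp1 hpn hq1
    (by rw [countAbove_Xvals_add_countAbove_Yvals, hcount])

lemma XS_lt_YS_iff (hθ : 0 < θ) {p q : ℕ} (hp1 : 1 ≤ p) (hpn : p ≤ n) (hq1 : 1 ≤ q)
    (hcount : countAbove (Function.uncurry (pairVal a b)) θ + 1 = p + q) :
    XS a b σ q < YS a b σ p ↔ countAbove (Xvals a b σ) θ < q := by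
  have hsum := countAbove_Xvals_add_countAbove_Yvals σ (a := a) (b := b) (θ := θ)
  rw [XS, YS, kthLargest_lt_kthLargest_iff hθ hp1 hpn hq1 (by omega)]
  omega

end Pairs

lemma half_mul_Pr_le {n : ℕ} {E F : (Fin n → Bool) → Prop}
    (h : #{σ | E σ ∧ ¬F σ} ≤ #{σ | E σ ∧ F σ}) : 1 / 2 * Pr E ≤ Pr fun σ => E σ ∧ F σ := by
  have hsplit : #{σ | E σ ∧ F σ} + #{σ | E σ ∧ ¬F σ} = #(univ.filter E) := by
    rw [← filter_filter, ← filter_filter]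
    exact card_filter_add_card_filter_not _
  have h2 : (#(univ.filter E) : ℝ) ≤ 2 * #(univ.filter fun σ => E σ ∧ F σ) := by
    exact_mod_cast (by omega)
  rw [Pr, Pr, ← mul_div_assoc, filter_congr_decidable univ (fun σ => E σ ∧ F σ)]
  exact div_le_div_of_nonneg_right (by linarith) (by positivity)

theorem decoram_half_general
    (n : ℕ) (a b : Fin n → ℝ)
    (ha : ∀ i, 0 < a i) (hb : ∀ i, 0 < b i)
    (hdistinct : Function.Injective (Sum.elim a b : Fin n ⊕ Fin n → ℝ))
    (k i j : ℕ) (hk1 : 1 ≤ k) (hkn : k ≤ n) (hi1 : 1 ≤ i) (hin : i ≤ n)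
    (hjk : j - k < i) (hij : i ≤ j) :
    (1 / 2) * Pr (fun σ => YS a b σ (j + 1 - i) < XS a b σ i)
      ≤ Pr (fun σ => YS a b σ (j + 1 - i) < XS a b σ i ∧
          XS a b σ (i + k) < YS a b σ k) := by
  apply half_mul_Pr_le
  rcases lt_or_ge n (i + k) with hik | hik
  · have hB σ := XS_lt_YS_of_lt σ ha hb hk1 hkn hik
    simp [hB]
  have hcard : Fintype.card (Fin n × Bool) = n + n := by
    rw [Fintype.card_prod, Fintype.card_fin, Fintype.card_bool, mul_two]
  -- `pj` and `pm` locate the thresholds `θ_j` and `θ_m` among the `2n` values.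
  obtain ⟨pj, hpj⟩ := exists_countAbove_eq (injective_uncurry_pairVal a b hdistinct)
    (r := j) (by omega) (by omega)
  obtain ⟨pm, hpm⟩ := exists_countAbove_eq (injective_uncurry_pairVal a b hdistinct)
    (r := i + 2 * k - 1) (by omega) (by omega)
  have hθ : Function.uncurry (pairVal a b) pm ≤ Function.uncurry (pairVal a b) pj :=
    not_lt.1 fun h => by
      have := countAbove_anti (Function.uncurry (pairVal a b)) h.le
      omega
  have hA σ := YS_lt_XS_iff (a := a) (b := b) σ (uncurry_pairVal_pos ha hb pj) hi1 hin
    (q := j + 1 - i) (by omega) (by omega)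
  have hB σ := XS_lt_YS_iff (a := a) (b := b) σ (uncurry_pairVal_pos ha hb pm) hk1 hkn
    (q := i + k) (by omega) (by omega)
  simp only [hA, hB, not_lt]
  exact card_countAbove_ge_le_card_countAbove_lt (pairVal a b) hθ (by omega)

/-- De-correlation lemma: if `j − k < i ≤ j`, then
`Pr(X^i > Y^{j+1−i} and Y^k > X^{i+k}) ≥ (1/2)·Pr(X^i > Y^{j+1−i})`. -/
theorem decoram_half
    (n : ℕ) (hn : 1 ≤ n) (a b : Fin n → ℝ)
    (ha : ∀ i, 0 < a i) (hb : ∀ i, 0 < b i)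
    (hdistinct : Function.Injective (Sum.elim a b : Fin n ⊕ Fin n → ℝ))
    (k i j : ℕ) (hk1 : 1 ≤ k) (hkn : k ≤ n) (hi1 : 1 ≤ i) (hin : i ≤ n)
    (hjk : j - k < i) (hij : i ≤ j) :
    (1 / 2) * Pr (fun σ => YS a b σ (j + 1 - i) < XS a b σ i)
      ≤ Pr (fun σ => YS a b σ (j + 1 - i) < XS a b σ i ∧
          XS a b σ (i + k) < YS a b σ k) :=
  decoram_half_general n a b ha hb hdistinct k i j hk1 hkn hi1 hin hjk hij
end

section
/- In the pairing model, let i, j, k be integers with 1 ≤ i ≤ j ≤ k ≤ n. Then Pr(X^i > Y^j > X^k) ≥ Pr(X^i > Y^k > X^k). -/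
open Finset

attribute [local instance] Classical.propDecidable

/-!
Write `F(s, r)` for the number of assignments with `X^s < Y^r`. Exchanging the two elements of
every pair swaps the X- and Y-sets, so `F(s, r) + F(r, s) = 2^n`; and for `s' ≤ s` the event
`X^s < Y^r < X^{s'}` is counted by `F(s, r) - F(s', r)`. This reduces the theorem to
`F(k, i) - F(j, i) ≤ F(k, j) - F(j, j)`, which telescopes over `s ∈ [j, k)` into the claim that
`Pr(X^{s+1} < Y^m < X^s)` is nondecreasing in `m ≤ s`.

Let `w` be the `(s+m)`-th largest of the `2n` values and `U` the set of values `≥ w`. The event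
`X^{s+1} < Y^m < X^s` says that `w` is a Y-value and `U` contains exactly `s` X-values; for
`m + 1` the same holds with the next value `w'` in place of `w` and `U ∪ {w'}` in place of `U`.
Only the pairs with exactly one element in `U` make `|X ∩ U|` random. Since `|U| = s + m ≤ 2s`,
double counting the flips of such pairs shows that, given `|X ∩ U| = s`, a value of `U` lies in
`X` with probability at least `1/2`, and a value outside `U` with probability at most `1/2`.
Applied to `w` and `w'` this gives the monotonicity.
-/

section CountGE

variable {ι : Type*} [Fintype ι]

noncomputable def countGE (v : ι → ℝ) (x : ℝ) : ℕ := #{i | x ≤ v i}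

variable {v : ι → ℝ}

lemma countGE_anti {x y : ℝ} (h : x ≤ y) : countGE v y ≤ countGE v x :=
  card_le_card (monotone_filter_right _ fun _ _ hy => h.trans hy)

lemma countGE_lt_of_lt {i : ι} {y : ℝ} (h : v i < y) : countGE v y < countGE v (v i) := by
  refine card_lt_card ((ssubset_iff_of_subset ?_).2 ⟨i, ?_, ?_⟩)
  · exact monotone_filter_right _ fun _ _ hj => h.le.trans hj
  · simp
  · simpa using h

lemma exists_le_countGE_eq {x : ℝ} (hx : 0 < countGE v x) :
    ∃ i, x ≤ v i ∧ countGE v (v i) = countGE v x := by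
  obtain ⟨i, hi, hmin⟩ := exists_min_image _ v (card_pos.1 hx)
  refine ⟨i, (mem_filter.1 hi).2, congrArg card (filter_congr fun j _ => ?_)⟩
  exact ⟨fun hj => (mem_filter.1 hi).2.trans hj, fun hj => hmin j (by simpa using hj)⟩

lemma countGE_injective (hv : Function.Injective v) : Function.Injective (countGE v ∘ v) := by
  intro i j hij
  by_contra hne
  rcases (hv.ne hne).lt_or_gt with h | h
  · exact (countGE_lt_of_lt h).ne' hij
  · exact (countGE_lt_of_lt h).ne hij

lemma exists_countGE_eq (hv : Function.Injective v) {p : ℕ} (hp : 1 ≤ p)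
    (hpι : p ≤ Fintype.card ι) : ∃ i, countGE v (v i) = p := by
  have hmaps : ∀ i ∈ (univ : Finset ι), countGE v (v i) ∈ Icc 1 (Fintype.card ι) := by
    intro i _
    refine mem_Icc.2 ⟨card_pos.2 ⟨i, by simp⟩, card_le_univ _⟩
  obtain ⟨i, -, hi⟩ := surj_on_of_inj_on_of_card_le (fun i _ => countGE v (v i)) hmaps
    (fun i j _ _ h => countGE_injective hv h) (by simp) p (mem_Icc.2 ⟨hp, hpι⟩)
  exact ⟨i, hi.symm⟩

end CountGE

section KthLargest

variable {N : ℕ} {v : Fin N → ℝ} {m : ℕ}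

lemma exists_isGreatest_kthLargest (hm : 1 ≤ m) (hmN : m ≤ N) :
    ∃ i, IsGreatest {x | m ≤ countGE v x} (v i) ∧ kthLargest v m = v i := by
  have hN : (univ : Finset (Fin N)).Nonempty := univ_nonempty_iff.2 ⟨⟨0, by omega⟩⟩
  obtain ⟨i₀, -, hi₀⟩ := exists_min_image univ v hN
  have hI : ({i | m ≤ countGE v (v i)} : Finset (Fin N)).Nonempty := by
    refine ⟨i₀, mem_filter.2 ⟨mem_univ _, ?_⟩⟩
    rwa [countGE, filter_true_of_mem fun j _ => hi₀ j (mem_univ _), card_univ, Fintype.card_fin]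
  obtain ⟨i, hi, hmax⟩ := exists_max_image _ v hI
  have hgreatest : IsGreatest {x | m ≤ countGE v x} (v i) := by
    refine ⟨(mem_filter.1 hi).2, fun x hx => ?_⟩
    obtain ⟨j, hxj, hj⟩ := exists_le_countGE_eq (v := v) (x := x) (by simp at hx; omega)
    exact hxj.trans (hmax j (mem_filter.2 ⟨mem_univ _, hj ▸ hx⟩))
  exact ⟨i, hgreatest, hgreatest.csSup_eq⟩

lemma le_kthLargest_iff_s6 (hm : 1 ≤ m) (hmN : m ≤ N) {x : ℝ} :
    x ≤ kthLargest v m ↔ m ≤ countGE v x := by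
  obtain ⟨i, hi, hk⟩ := exists_isGreatest_kthLargest (v := v) hm hmN
  rw [hk]
  exact ⟨fun h => hi.1.trans (countGE_anti h), fun h => hi.2 h⟩

lemma kthLargest_mem_range (hm : 1 ≤ m) (hmN : m ≤ N) : kthLargest v m ∈ Set.range v :=
  let ⟨i, _, hk⟩ := exists_isGreatest_kthLargest (v := v) hm hmN; ⟨i, hk.symm⟩

lemma kthLargest_eq_of_countGE_eq {i : Fin N} (hi : countGE v (v i) = m) (hm : 1 ≤ m)
    (hmN : m ≤ N) : kthLargest v m = v i := by
  refine le_antisymm (not_lt.1 fun h => ?_) ((le_kthLargest_iff_s6 hm hmN).2 hi.ge)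
  have := (le_kthLargest_iff_s6 (v := v) hm hmN).1 le_rfl
  have := countGE_lt_of_lt h
  omega

lemma kthLargest_succ_lt_and_lt_kthLargest_iff {s : ℕ} (hs : 1 ≤ s) (hsN : s + 1 ≤ N) {y : ℝ}
    (hy : y ∉ Set.range v) :
    kthLargest v (s + 1) < y ∧ y < kthLargest v s ↔ countGE v y = s := by
  rw [← not_le, le_kthLargest_iff_s6 (by omega) hsN, lt_iff_le_and_ne,
    le_kthLargest_iff_s6 hs (by omega)]
  have hne : y ≠ kthLargest v s := fun h => hy (h ▸ kthLargest_mem_range hs (by omega))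
  constructor
  · rintro ⟨h₁, h₂, -⟩; omega
  · intro h; exact ⟨by omega, by omega, hne⟩

lemma kthLargest_anti {m' : ℕ} (hm : 1 ≤ m) (hmm' : m ≤ m') (hm'N : m' ≤ N) :
    kthLargest v m' ≤ kthLargest v m :=
  (le_kthLargest_iff_s6 hm (hmm'.trans hm'N)).2
    (hmm'.trans ((le_kthLargest_iff_s6 (hm.trans hmm') hm'N).1 le_rfl))

lemma exists_kthLargest_eq_s6 (hv : Function.Injective v) (hm : 1 ≤ m) (hmN : m ≤ N) :
    ∃ i, kthLargest v m = v i ∧ countGE v (v i) = m := by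
  obtain ⟨i, hi⟩ := exists_countGE_eq hv hm (by simpa using hmN)
  exact ⟨i, kthLargest_eq_of_countGE_eq hi hm hmN, hi⟩

end KthLargest

section BoolCube

open Function

variable {ι : Type*} [Fintype ι] [DecidableEq ι] (U : Finset (ι × Bool))

/-- An assignment `σ` picks the element `(q, σ q)` of each pair `q`; `U` is a set of marked
elements. -/
def countPicked (σ : ι → Bool) : ℕ := #{q | (q, σ q) ∈ U}

def bothMarked : Finset ι := {q | (q, true) ∈ U ∧ (q, false) ∈ U}

def soloPicked (σ : ι → Bool) : Finset ι := {q | (q, σ q) ∈ U ∧ (q, !σ q) ∉ U}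

variable {U}

lemma countPicked_add_countPicked_not (σ : ι → Bool) :
    countPicked U σ + countPicked U (fun q => !σ q) = #U := by
  calc countPicked U σ + countPicked U (fun q => !σ q)
      = ∑ q, ((if (q, σ q) ∈ U then 1 else 0) + if (q, !σ q) ∈ U then 1 else 0) := by
        rw [countPicked, countPicked, card_filter, card_filter, sum_add_distrib]
    _ = ∑ q, ∑ e, if (q, e) ∈ U then 1 else 0 :=
        sum_congr rfl fun q _ => by rw [Fintype.sum_bool]; cases σ q <;> simp [add_comm]
    _ = #U := by rw [← Fintype.sum_prod_type']; simp

lemma card_soloPicked_add_card_bothMarked (σ : ι → Bool) :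
    #(soloPicked U σ) + #(bothMarked U) = countPicked U σ := by
  rw [soloPicked, ← card_union_of_disjoint]
  · refine congrArg card (ext fun q => ?_)
    cases h : σ q <;> simp [bothMarked, h] <;> tauto
  · refine disjoint_filter.2 fun q _ h => ?_
    cases h' : σ q <;> simp_all

lemma countPicked_update_of_iff {q : ι} (hq : (q, true) ∈ U ↔ (q, false) ∈ U) (σ : ι → Bool)
    (e : Bool) : countPicked U (update σ q e) = countPicked U σ := by
  refine congrArg card (filter_congr fun q' _ => ?_)
  rcases eq_or_ne q' q with rfl | hne
  · cases e <;> cases σ q' <;> simp [hq]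
  · simp [update_of_ne hne]

lemma countPicked_update_add_one {σ : ι → Bool} {q : ι} (hq : q ∈ soloPicked U σ) :
    countPicked U (update σ q (!σ q)) + 1 = countPicked U σ := by
  simp only [soloPicked, mem_filter, mem_univ, true_and] at hq
  have : ({q' | (q', update σ q (!σ q) q') ∈ U} : Finset ι)
      = ({q' | (q', σ q') ∈ U} : Finset ι).erase q := by
    ext q'
    rcases eq_or_ne q' q with rfl | hne
    · simp [hq.2]
    · simp [hne]
  rw [countPicked, countPicked, this, card_erase_add_one (by simpa using hq.1)]

lemma countPicked_insert {σ : ι → Bool} {u : ι × Bool} (hu : σ u.1 ≠ u.2) :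
    countPicked (insert u U) σ = countPicked U σ := by
  refine congrArg card (filter_congr fun q _ => ?_)
  rw [mem_insert, or_iff_right]
  rintro rfl
  exact hu rfl

lemma card_update_eq (q : ι) (e e' : Bool) (P : (ι → Bool) → Prop) [DecidablePred P] :
    #{σ | σ q = e' ∧ P (update σ q e)} = #{σ | σ q = e ∧ P σ} := by
  refine card_nbij' (update · q e) (update · q e') ?_ ?_ ?_ ?_ <;> intro σ hσ
  · simp_all
  · obtain ⟨rfl, h⟩ := mem_filter.1 hσ |>.2
    simpa using h
  · simp_all
  · obtain ⟨rfl, -⟩ := mem_filter.1 hσ |>.2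
    simp

lemma card_and_add_card_and_not (q : ι) (e : Bool) (P : (ι → Bool) → Prop) [DecidablePred P] :
    #{σ | σ q = e ∧ P σ} + #{σ | σ q = !e ∧ P σ} = #{σ | P σ} := by
  rw [← card_union_of_disjoint (disjoint_filter.2 fun σ _ h h' => by simp_all)]
  refine congrArg card (ext fun σ => ?_)
  cases e <;> cases h : σ q <;> simp [h]

/-- Double counting of the pairs `(σ, q)` such that flipping `σ` at `q` lowers `countPicked` from
`s + 1` to `s`. -/
lemma sum_card_soloPicked_erase_eq (q₀ : ι) (e₀ : Bool) (s : ℕ) :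
    ∑ σ ∈ ({σ | σ q₀ = e₀ ∧ countPicked U σ = s + 1} : Finset (ι → Bool)),
        #((soloPicked U σ).erase q₀)
      = ∑ σ ∈ ({σ | σ q₀ = e₀ ∧ countPicked U σ = s} : Finset (ι → Bool)),
        #((soloPicked U fun q => !σ q).erase q₀) := by
  rw [← card_sigma, ← card_sigma]
  refine card_nbij' (fun x => ⟨update x.1 x.2 (!x.1 x.2), x.2⟩)
    (fun x => ⟨update x.1 x.2 (!x.1 x.2), x.2⟩) ?_ ?_ ?_ ?_ <;> rintro ⟨σ, q⟩ hσ
  · simp only [coe_sigma, Set.mem_sigma_iff, coe_filter, mem_univ, true_and,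
      Set.mem_ofPred_eq, coe_erase, Set.mem_sdiff, mem_coe, Set.mem_singleton_iff] at hσ ⊢
    obtain ⟨⟨hσq₀, hcount⟩, hq, hqq₀⟩ := hσ
    have := countPicked_update_add_one hq
    simp only [soloPicked, mem_filter, mem_univ, true_and] at hq ⊢
    refine ⟨⟨by rwa [update_of_ne (Ne.symm hqq₀)], by omega⟩, by simpa using hq, hqq₀⟩
  · simp only [coe_sigma, Set.mem_sigma_iff, coe_filter, mem_univ, true_and,
      Set.mem_ofPred_eq, coe_erase, Set.mem_sdiff, mem_coe, Set.mem_singleton_iff] at hσ ⊢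
    obtain ⟨⟨hσq₀, hcount⟩, hq, hqq₀⟩ := hσ
    have hq' : q ∈ soloPicked U (update σ q (!σ q)) := by
      simp only [soloPicked, mem_filter, mem_univ, true_and] at hq ⊢
      simpa using hq
    have := countPicked_update_add_one hq'
    simp only [update_self, Bool.not_not, update_idem, update_eq_self] at this
    exact ⟨⟨by rwa [update_of_ne (Ne.symm hqq₀)], by omega⟩, hq', hqq₀⟩
  · simp
  · simp

lemma card_unpicked_eq_card_picked_succ {q₀ : ι} {e₀ : Bool} (h₁ : (q₀, e₀) ∈ U)
    (h₂ : (q₀, !e₀) ∉ U) (s : ℕ) :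
    #{σ | σ q₀ = !e₀ ∧ countPicked U σ = s} = #{σ | σ q₀ = e₀ ∧ countPicked U σ = s + 1} := by
  rw [← card_update_eq q₀ e₀ (!e₀)]
  refine congrArg card (filter_congr fun σ _ => and_congr_right fun hσ => ?_)
  have := countPicked_update_add_one (σ := update σ q₀ e₀) (q := q₀)
    (by simpa [soloPicked] using ⟨h₁, h₂⟩)
  simp only [update_self, update_idem, ← hσ, update_eq_self] at this
  omega

lemma card_unpicked_le_card_picked_of_partner_notMem {q₀ : ι} {e₀ : Bool} (h₁ : (q₀, e₀) ∈ U)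
    (h₂ : (q₀, !e₀) ∉ U) {s : ℕ} (hU : #U ≤ 2 * s) :
    #{σ | σ q₀ = !e₀ ∧ countPicked U σ = s} ≤ #{σ | σ q₀ = e₀ ∧ countPicked U σ = s} := by
  have hq₀ : ∀ σ : ι → Bool, σ q₀ = e₀ → q₀ ∈ soloPicked U σ := fun σ hσ => by
    simpa [soloPicked, hσ] using ⟨h₁, h₂⟩
  have hup : ∀ σ ∈ ({σ | σ q₀ = e₀ ∧ countPicked U σ = s + 1} : Finset (ι → Bool)),
      #((soloPicked U σ).erase q₀) = s - #(bothMarked U) := by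
    intro σ hσ
    obtain ⟨hσq₀, hcount⟩ := (mem_filter.1 hσ).2
    have := card_soloPicked_add_card_bothMarked (U := U) σ
    rw [card_erase_of_mem (hq₀ σ hσq₀)]
    omega
  have hdown : ∀ σ ∈ ({σ | σ q₀ = e₀ ∧ countPicked U σ = s} : Finset (ι → Bool)),
      #((soloPicked U fun q => !σ q).erase q₀) = #U - s - #(bothMarked U) := by
    intro σ hσ
    obtain ⟨hσq₀, hcount⟩ := (mem_filter.1 hσ).2
    have := card_soloPicked_add_card_bothMarked (U := U) (fun q => !σ q)
    have := countPicked_add_countPicked_not (U := U) σ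
    rw [erase_eq_of_notMem (by simp [soloPicked, hσq₀, h₁])]
    omega
  have hdouble := sum_card_soloPicked_erase_eq (U := U) q₀ e₀ s
  rw [sum_const_nat hup, sum_const_nat hdown] at hdouble
  rw [card_unpicked_eq_card_picked_succ h₁ h₂]
  -- `hdouble` says `#A(s + 1) * (s - I) = #A(s) * (#U - s - I)`, and `#U ≤ 2 * s` makes the
  -- second factor on the right at most the one on the left.
  rcases eq_or_ne #{σ | σ q₀ = e₀ ∧ countPicked U σ = s + 1} 0 with h | h
  · exact h ▸ Nat.zero_le _
  obtain ⟨σ, hσ⟩ := card_ne_zero.1 h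
  have := (mem_filter.1 hσ).2.2
  have := card_soloPicked_add_card_bothMarked (U := U) (fun q => !σ q)
  have := countPicked_add_countPicked_not (U := U) σ
  refine le_of_mul_le_mul_right (a := s - #(bothMarked U)) ?_ (by omega)
  rw [hdouble]
  exact Nat.mul_le_mul_left _ (by omega)

lemma card_apply_eq_of_iff {q : ι} (hq : (q, true) ∈ U ↔ (q, false) ∈ U) (e e' : Bool) (s : ℕ) :
    #{σ | σ q = e' ∧ countPicked U σ = s} = #{σ | σ q = e ∧ countPicked U σ = s} := by
  simp_rw [← card_update_eq q e e' (countPicked U · = s), countPicked_update_of_iff hq]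

lemma card_unpicked_le_card_picked {u : ι × Bool} (hu : u ∈ U) {s : ℕ} (hU : #U ≤ 2 * s) :
    #{σ | σ u.1 = !u.2 ∧ countPicked U σ = s} ≤ #{σ | σ u.1 = u.2 ∧ countPicked U σ = s} := by
  by_cases h : (u.1, !u.2) ∈ U
  · refine (card_apply_eq_of_iff ?_ _ _ s).le
    obtain ⟨q, e⟩ := u
    cases e <;> simp_all
  · exact card_unpicked_le_card_picked_of_partner_notMem hu h hU

lemma card_picked_le_card_unpicked {u : ι × Bool} (hu : u ∉ U) {s : ℕ} (hU : #U ≤ 2 * s) :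
    #{σ | σ u.1 = u.2 ∧ countPicked U σ = s} ≤ #{σ | σ u.1 = !u.2 ∧ countPicked U σ = s} := by
  by_cases h : (u.1, !u.2) ∈ U
  · simpa using card_unpicked_le_card_picked_of_partner_notMem h (by simpa using hu) hU
  · refine (card_apply_eq_of_iff ?_ _ _ s).le
    obtain ⟨q, e⟩ := u
    cases e <;> simp_all

/-- Given `countPicked U = s`, the element `u` is unpicked with probability at most `1/2` and `u'`
with probability at least `1/2`. -/
lemma card_unpicked_le_card_unpicked_insert {u u' : ι × Bool} (hu : u ∈ U) (hu' : u' ∉ U)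
    {s : ℕ} (hU : #U ≤ 2 * s) :
    #{σ | σ u.1 = !u.2 ∧ countPicked U σ = s}
      ≤ #{σ | σ u'.1 = !u'.2 ∧ countPicked (insert u' U) σ = s} := by
  have hinsert : ∀ σ : ι → Bool, σ u'.1 = !u'.2 →
      (countPicked (insert u' U) σ = s ↔ countPicked U σ = s) := fun σ hσ => by
    rw [countPicked_insert (by simp [hσ])]
  rw [filter_congr fun σ _ => and_congr_right (hinsert σ)]
  have := card_unpicked_le_card_picked hu hU
  have := card_picked_le_card_unpicked hu' hU
  have := card_and_add_card_and_not u.1 u.2 (countPicked U · = s)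
  have := card_and_add_card_and_not u'.1 u'.2 (countPicked U · = s)
  omega

end BoolCube

section PairingModel

variable {n : ℕ} {a b : Fin n → ℝ}

def pairValues (a b : Fin n → ℝ) (p : Fin n × Bool) : ℝ := if p.2 then a p.1 else b p.1

noncomputable def markedAbove (a b : Fin n → ℝ) (x : ℝ) : Finset (Fin n × Bool) :=
  {p | x ≤ pairValues a b p}

noncomputable def countXLtY (a b : Fin n → ℝ) (s r : ℕ) : ℕ := #{σ | XS a b σ s < YS a b σ r}

noncomputable def countBetween (a b : Fin n → ℝ) (s r s' : ℕ) : ℕ :=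
  #{σ | XS a b σ s < YS a b σ r ∧ YS a b σ r < XS a b σ s'}

lemma Xvals_eq_pairValues (σ : Fin n → Bool) (q : Fin n) :
    Xvals a b σ q = pairValues a b (q, σ q) := rfl

lemma Yvals_eq_pairValues (σ : Fin n → Bool) (q : Fin n) :
    Yvals a b σ q = pairValues a b (q, !σ q) := by
  simp only [Yvals, pairValues]
  cases σ q <;> rfl

lemma XS_not (σ : Fin n → Bool) (m : ℕ) : XS a b (fun q => !σ q) m = YS a b σ m := by
  simp only [XS, YS]
  congr 1
  funext q
  rw [Xvals_eq_pairValues, Yvals_eq_pairValues]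

lemma YS_not (σ : Fin n → Bool) (m : ℕ) : YS a b (fun q => !σ q) m = XS a b σ m := by
  simp only [XS, YS]
  congr 1
  funext q
  rw [Xvals_eq_pairValues, Yvals_eq_pairValues, Bool.not_not]

lemma card_markedAbove (x : ℝ) : #(markedAbove a b x) = countGE (pairValues a b) x := rfl

lemma countGE_Xvals (σ : Fin n → Bool) (x : ℝ) :
    countGE (Xvals a b σ) x = countPicked (markedAbove a b x) σ := by
  refine congrArg card (ext fun q => ?_)
  rw [mem_filter, mem_filter, markedAbove, mem_filter, Xvals_eq_pairValues]
  simp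

lemma countGE_Yvals (σ : Fin n → Bool) (x : ℝ) :
    countGE (Yvals a b σ) x = countPicked (markedAbove a b x) (fun q => !σ q) := by
  refine congrArg card (ext fun q => ?_)
  rw [mem_filter, mem_filter, markedAbove, mem_filter, Yvals_eq_pairValues]
  simp

variable (hdistinct : Function.Injective (Sum.elim a b : Fin n ⊕ Fin n → ℝ))
include hdistinct

lemma pairValues_injective : Function.Injective (pairValues a b) := by
  have : pairValues a b = Sum.elim a b ∘ fun p => if p.2 then .inl p.1 else .inr p.1 := by
    funext ⟨q, e⟩
    cases e <;> rfl
  rw [this]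
  refine hdistinct.comp ?_
  rintro ⟨q, _ | _⟩ ⟨q', _ | _⟩ h <;> simp_all

lemma Yvals_injective (σ : Fin n → Bool) : Function.Injective (Yvals a b σ) := by
  intro q q' h
  simp only [Yvals_eq_pairValues] at h
  exact congrArg Prod.fst (pairValues_injective hdistinct h)

lemma Yvals_notMem_range_Xvals (σ : Fin n → Bool) (q : Fin n) :
    Yvals a b σ q ∉ Set.range (Xvals a b σ) := by
  rintro ⟨q', h⟩
  rw [Xvals_eq_pairValues, Yvals_eq_pairValues] at h
  obtain ⟨rfl, h'⟩ := Prod.ext_iff.1 (pairValues_injective hdistinct h)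
  simp at h'

lemma XS_ne_YS (σ : Fin n → Bool) {s r : ℕ} (hs : 1 ≤ s) (hsn : s ≤ n) (hr : 1 ≤ r)
    (hrn : r ≤ n) : XS a b σ s ≠ YS a b σ r := by
  obtain ⟨q, hq⟩ := kthLargest_mem_range (v := Yvals a b σ) hr hrn
  obtain ⟨q', hq'⟩ := kthLargest_mem_range (v := Xvals a b σ) hs hsn
  rw [XS, YS, ← hq, ← hq']
  exact fun h => Yvals_notMem_range_Xvals hdistinct σ q ⟨q', h⟩

lemma XS_succ_lt_YS_lt_XS_iff {m s : ℕ} (hm : 1 ≤ m) (hmn : m ≤ n) (hs : 1 ≤ s)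
    (hsn : s + 1 ≤ n) {u : Fin n × Bool}
    (hu : countGE (pairValues a b) (pairValues a b u) = s + m) (σ : Fin n → Bool) :
    XS a b σ (s + 1) < YS a b σ m ∧ YS a b σ m < XS a b σ s
      ↔ σ u.1 = !u.2 ∧ countPicked (markedAbove a b (pairValues a b u)) σ = s := by
  obtain ⟨q, hq, hcount⟩ := exists_kthLargest_eq_s6 (Yvals_injective hdistinct σ) hm hmn
  rw [XS, XS, YS, hq, kthLargest_succ_lt_and_lt_kthLargest_iff hs hsn
    (Yvals_notMem_range_Xvals hdistinct σ q), countGE_Xvals]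
  rw [countGE_Yvals] at hcount
  constructor
  · intro h
    have := countPicked_add_countPicked_not (U := markedAbove a b (Yvals a b σ q)) σ
    have hy : countGE (pairValues a b) (Yvals a b σ q) = s + m := by
      rw [← card_markedAbove]
      omega
    rw [Yvals_eq_pairValues, ← hu] at hy
    obtain rfl : (q, !σ q) = u := countGE_injective (pairValues_injective hdistinct) hy
    rw [← Yvals_eq_pairValues]
    simpa using h
  · rintro ⟨hσ, h⟩
    have := countPicked_add_countPicked_not (U := markedAbove a b (pairValues a b u)) σ
    rw [card_markedAbove] at this
    have hu' : u = (u.1, !σ u.1) := by simp [hσ]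
    rw [Yvals_eq_pairValues] at hcount
    have hq' : q = u.1 := by
      refine countGE_injective (Yvals_injective hdistinct σ) ?_
      simp only [Function.comp_apply, countGE_Yvals, Yvals_eq_pairValues, ← hu']
      omega
    rwa [hq', Yvals_eq_pairValues, ← hu']

lemma countXLtY_add_countXLtY {s r : ℕ} (hs : 1 ≤ s) (hsn : s ≤ n) (hr : 1 ≤ r) (hrn : r ≤ n) :
    countXLtY a b s r + countXLtY a b r s = 2 ^ n := by
  have hflip : countXLtY a b r s = #{σ | ¬ XS a b σ s < YS a b σ r} := by
    refine card_nbij' (fun σ q => !σ q) (fun σ q => !σ q) ?_ ?_ ?_ ?_ <;> intro σ hσ <;>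
      simp only [coe_filter, mem_univ, true_and, Set.mem_ofPred_eq, XS_not, YS_not,
        Bool.not_not] at hσ ⊢
    · exact hσ.not_gt
    · exact (XS_ne_YS hdistinct σ hs hsn hr hrn).lt_or_gt.resolve_left hσ
  rw [hflip, countXLtY, card_filter_add_card_filter_not, card_univ, Fintype.card_fun,
    Fintype.card_bool, Fintype.card_fin]

lemma countBetween_add_countXLtY {r s s' : ℕ} (hr : 1 ≤ r) (hrn : r ≤ n) (hs' : 1 ≤ s')
    (hs's : s' ≤ s) (hsn : s ≤ n) :
    countBetween a b s r s' + countXLtY a b s' r = countXLtY a b s r := by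
  rw [countBetween, countXLtY, countXLtY, ← card_filter_add_card_filter_not
    (s := {σ | XS a b σ s < YS a b σ r}) (fun σ => YS a b σ r < XS a b σ s'),
    filter_filter, filter_filter]
  refine congrArg (_ + ·) (congrArg card (filter_congr fun σ _ => ?_))
  have hanti : XS a b σ s ≤ XS a b σ s' := kthLargest_anti hs' hs's hsn
  constructor
  · intro h
    exact ⟨hanti.trans_lt h, h.not_gt⟩
  · rintro ⟨-, h⟩
    exact (XS_ne_YS hdistinct σ hs' (hs's.trans hsn) hr hrn).lt_or_gt.resolve_right h

lemma countBetween_le_countBetween_succ {m s : ℕ} (hm : 1 ≤ m) (hms : m < s)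
    (hsn : s + 1 ≤ n) : countBetween a b (s + 1) m s ≤ countBetween a b (s + 1) (m + 1) s := by
  have hinj := pairValues_injective hdistinct
  obtain ⟨u, hu⟩ := exists_countGE_eq hinj (p := s + m) (by omega) (by simp; omega)
  obtain ⟨u', hu'⟩ := exists_countGE_eq hinj (p := s + (m + 1)) (by omega) (by simp; omega)
  have hlt : pairValues a b u' < pairValues a b u :=
    not_le.1 fun h => by have := countGE_anti (v := pairValues a b) h; omega
  have hmarked : insert u' (markedAbove a b (pairValues a b u))
      = markedAbove a b (pairValues a b u') := by
    refine eq_of_subset_of_card_le (insert_subset (by simp [markedAbove]) ?_) ?_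
    · exact monotone_filter_right _ fun _ _ h => hlt.le.trans h
    · rw [card_insert_of_notMem (by simpa [markedAbove] using hlt), card_markedAbove,
        card_markedAbove, hu, hu']
      omega
  rw [countBetween, countBetween,
    filter_congr fun σ _ => XS_succ_lt_YS_lt_XS_iff hdistinct hm (by omega) (by omega) hsn hu σ,
    filter_congr fun σ _ =>
      XS_succ_lt_YS_lt_XS_iff hdistinct (by omega) (by omega) (by omega) hsn hu' σ,
    ← hmarked]
  exact card_unpicked_le_card_unpicked_insert (by simp [markedAbove])
    (by simpa [markedAbove] using hlt) (by rw [card_markedAbove, hu]; omega)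

lemma countBetween_mono {i j s : ℕ} (hi : 1 ≤ i) (hij : i ≤ j) (hjs : j ≤ s) (hsn : s + 1 ≤ n) :
    countBetween a b (s + 1) i s ≤ countBetween a b (s + 1) j s := by
  induction j, hij using Nat.le_induction with
  | base => exact le_rfl
  | succ j hij ih =>
    exact (ih (by omega)).trans
      (countBetween_le_countBetween_succ hdistinct (by omega) (by omega) hsn)

lemma countXLtY_add_le {i j k : ℕ} (hi : 1 ≤ i) (hij : i ≤ j) (hjk : j ≤ k) (hkn : k ≤ n) :
    countXLtY a b k i + countXLtY a b j j ≤ countXLtY a b k j + countXLtY a b j i := by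
  induction k, hjk using Nat.le_induction with
  | base => omega
  | succ k hjk ih =>
    have := countBetween_add_countXLtY hdistinct (r := i) (s := k + 1) (s' := k)
      (by omega) (by omega) (by omega) (by omega) hkn
    have := countBetween_add_countXLtY hdistinct (r := j) (s := k + 1) (s' := k)
      (by omega) (by omega) (by omega) (by omega) hkn
    have := countBetween_mono hdistinct hi hij hjk hkn
    have := ih (by omega)
    omega

end PairingModel

theorem inbetween_rank_general
    (n : ℕ) (a b : Fin n → ℝ)
    (hdistinct : Function.Injective (Sum.elim a b : Fin n ⊕ Fin n → ℝ))
    (i j k : ℕ) (hi1 : 1 ≤ i) (hij : i ≤ j) (hjk : j ≤ k) (hkn : k ≤ n) :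
    Pr (fun σ => XS a b σ k < YS a b σ k ∧ YS a b σ k < XS a b σ i)
      ≤ Pr (fun σ => XS a b σ k < YS a b σ j ∧ YS a b σ j < XS a b σ i) := by
  have hk := countBetween_add_countXLtY hdistinct (r := k) (by omega) hkn hi1 (by omega) hkn
  have hj := countBetween_add_countXLtY hdistinct (r := j) (by omega) (by omega) hi1 (by omega) hkn
  have hchain := countXLtY_add_le hdistinct hi1 hij hjk hkn
  have hki := countXLtY_add_countXLtY hdistinct (s := k) (r := i) (by omega) hkn hi1 (by omega)
  have hji := countXLtY_add_countXLtY hdistinct (s := j) (r := i) (by omega) (by omega) hi1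
    (by omega)
  have hkk := countXLtY_add_countXLtY hdistinct (s := k) (r := k) (by omega) hkn (by omega) hkn
  have hjj := countXLtY_add_countXLtY hdistinct (s := j) (r := j) (by omega) (by omega)
    (by omega) (by omega)
  have hcard : countBetween a b k k i ≤ countBetween a b k j i := by omega
  unfold Pr
  refine div_le_div_of_nonneg_right (Nat.cast_le.2 ?_) (by positivity)
  unfold countBetween at hcard
  convert hcard

/-- If `1 ≤ i ≤ j ≤ k ≤ n` then `Pr(X^i > Y^j > X^k) ≥ Pr(X^i > Y^k > X^k)`. -/
theorem inbetween_rank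
    (n : ℕ) (hn : 1 ≤ n) (a b : Fin n → ℝ)
    (ha : ∀ i, 0 < a i) (hb : ∀ i, 0 < b i)
    (hdistinct : Function.Injective (Sum.elim a b : Fin n ⊕ Fin n → ℝ))
    (i j k : ℕ) (hi1 : 1 ≤ i) (hij : i ≤ j) (hjk : j ≤ k) (hkn : k ≤ n) :
    Pr (fun σ => XS a b σ k < YS a b σ k ∧ YS a b σ k < XS a b σ i)
      ≤ Pr (fun σ => XS a b σ k < YS a b σ j ∧ YS a b σ j < XS a b σ i) :=
  inbetween_rank_general n a b hdistinct i j k hi1 hij hjk hkn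
end

section
/- In the pairing model, let i, j, k be integers with 1 ≤ i < j < k ≤ n. Then Pr(X^{j−1} > Y^i > X^j) ≥ Pr(X^j > Y^i > X^{j+1}) and Pr(X^{j−1} > Y^k > X^j) ≤ Pr(X^j > Y^k > X^{j+1}). -/
open Finset

attribute [local instance] Classical.propDecidable

section rank
variable {α : Type*} [Fintype α] {w : α → ℝ}

noncomputable def rkOf (w : α → ℝ) (q : α) : ℕ := (univ.filter (fun r => w q ≤ w r)).card

lemma rkOf_lt_rkOf {q r : α} (h : w q < w r) : rkOf w r < rkOf w q := by
  classical
  have hsub : insert q (univ.filter fun s => w r ≤ w s) ⊆ univ.filter fun s => w q ≤ w s := by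
    intro s hs
    rcases Finset.mem_insert.mp hs with rfl | hs
    · simp
    · simp only [mem_filter, mem_univ, true_and] at hs ⊢
      exact (le_of_lt h).trans hs
  have hq : q ∉ univ.filter fun s => w r ≤ w s := by simp [not_le.mpr h]
  have h2 := Finset.card_le_card hsub
  rw [Finset.card_insert_of_notMem hq] at h2
  have : (univ.filter fun s => w r ≤ w s).card < (univ.filter fun s => w q ≤ w s).card := by omega
  simpa [rkOf] using this

lemma le_iff_rkOf (hw : Function.Injective w) (q r : α) :
    w q ≤ w r ↔ rkOf w r ≤ rkOf w q := by
  constructor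
  · intro h
    rcases eq_or_lt_of_le h with he | hlt
    · rw [hw he]
    · exact (rkOf_lt_rkOf hlt).le
  · intro h
    by_contra hc
    push_neg at hc
    exact absurd h (not_le.mpr (rkOf_lt_rkOf hc))

lemma rkOf_injective (hw : Function.Injective w) : Function.Injective (rkOf w) := by
  intro q r h
  apply hw
  exact le_antisymm ((le_iff_rkOf hw q r).mpr h.ge) ((le_iff_rkOf hw r q).mpr h.le)

lemma one_le_rkOf (q : α) : 1 ≤ rkOf w q := by
  have : q ∈ univ.filter fun r => w q ≤ w r := by simp
  exact Finset.card_pos.mpr ⟨q, this⟩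

lemma rkOf_le_card (q : α) : rkOf w q ≤ Fintype.card α := by
  classical
  simpa [rkOf] using Finset.card_le_card (Finset.filter_subset _ (univ : Finset α))

lemma rkOf_surj (hw : Function.Injective w) {m : ℕ} (h1 : 1 ≤ m) (h2 : m ≤ Fintype.card α) :
    ∃ q, rkOf w q = m := by
  classical
  have himg : univ.image (rkOf w) ⊆ Finset.Icc 1 (Fintype.card α) := by
    intro x hx
    obtain ⟨q, _, rfl⟩ := Finset.mem_image.mp hx
    exact Finset.mem_Icc.mpr ⟨one_le_rkOf q, rkOf_le_card q⟩
  have hcard : (univ.image (rkOf w)).card = Fintype.card α := by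
    rw [Finset.card_image_of_injective _ (rkOf_injective hw), card_univ]
  have heq : univ.image (rkOf w) = Finset.Icc 1 (Fintype.card α) :=
    Finset.eq_of_subset_of_card_le himg (by rw [hcard, Nat.card_Icc]; omega)
  have hm : m ∈ univ.image (rkOf w) := by
    rw [heq]; exact Finset.mem_Icc.mpr ⟨h1, h2⟩
  simpa using hm

end rank

section kth
variable {n : ℕ} {v : Fin n → ℝ} {p : Fin n} {m : ℕ}

lemma kthLargest_eq (hp : (univ.filter fun q => v p ≤ v q).card = m) :
    kthLargest v m = v p := by
  classical
  have hm : 1 ≤ m := by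
    rw [← hp]; exact Finset.card_pos.mpr ⟨p, by simp⟩
  have hset : {x : ℝ | m ≤ (univ.filter (fun i => x ≤ v i)).card} = Set.Iic (v p) := by
    ext x
    simp only [Set.mem_setOf_eq, Set.mem_Iic]
    constructor
    · intro hx
      by_contra hc
      push_neg at hc
      have hsub : (univ.filter fun i => x ≤ v i) ⊆ (univ.filter fun q => v p ≤ v q).erase p := by
        intro r hr
        simp only [mem_filter, mem_univ, true_and] at hr
        refine Finset.mem_erase.mpr ⟨?_, by simp only [mem_filter, mem_univ, true_and]; linarith⟩
        rintro rfl; linarith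
      have h1 := Finset.card_le_card hsub
      have h2 : ((univ.filter fun q => v p ≤ v q).erase p).card = m - 1 := by
        rw [Finset.card_erase_of_mem (by simp), hp]
      omega
    · intro hx
      calc m = (univ.filter fun q => v p ≤ v q).card := hp.symm
        _ ≤ (univ.filter fun i => x ≤ v i).card := Finset.card_le_card (fun r hr => by
            simp only [mem_filter, mem_univ, true_and] at hr ⊢; linarith)
  rw [kthLargest]
  rw [show {x : ℝ | m ≤ (Finset.univ.filter (fun i => x ≤ v i)).card} = Set.Iic (v p) from hset]
  exact csSup_Iic

lemma card_lt_of_kth_lt {y : ℝ} (hp : (univ.filter fun q => v p ≤ v q).card = m)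
    (h : kthLargest v m < y) : (univ.filter fun q => y ≤ v q).card < m := by
  classical
  rw [kthLargest_eq hp] at h
  have hm : 1 ≤ m := by
    rw [← hp]; exact Finset.card_pos.mpr ⟨p, by simp⟩
  have hsub : (univ.filter fun q => y ≤ v q) ⊆ (univ.filter fun q => v p ≤ v q).erase p := by
    intro r hr
    simp only [mem_filter, mem_univ, true_and] at hr
    refine Finset.mem_erase.mpr ⟨?_, by simp only [mem_filter, mem_univ, true_and]; linarith⟩
    rintro rfl; linarith
  have h1 := Finset.card_le_card hsub
  have h2 : ((univ.filter fun q => v p ≤ v q).erase p).card = m - 1 := by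
    rw [Finset.card_erase_of_mem (by simp), hp]
  omega

lemma kth_lt_of_card_lt {y : ℝ} (hp : (univ.filter fun q => v p ≤ v q).card = m)
    (hy : ∀ q, v q ≠ y) (h : (univ.filter fun q => y ≤ v q).card < m) :
    kthLargest v m < y := by
  classical
  rw [kthLargest_eq hp]
  rcases lt_trichotomy (v p) y with h1 | h1 | h1
  · exact h1
  · exact absurd h1 (hy p)
  · exfalso
    have : (univ.filter fun q => v p ≤ v q) ⊆ (univ.filter fun q => y ≤ v q) := by
      intro r hr
      simp only [mem_filter, mem_univ, true_and] at hr ⊢; linarith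
    have := Finset.card_le_card this
    omega

lemma lt_kth_iff_card {y : ℝ} (hp : (univ.filter fun q => v p ≤ v q).card = m)
    (hy : ∀ q, v q ≠ y) :
    y < kthLargest v m ↔ m ≤ (univ.filter fun q => y ≤ v q).card := by
  classical
  rw [kthLargest_eq hp]
  constructor
  · intro h
    calc m = (univ.filter fun q => v p ≤ v q).card := hp.symm
      _ ≤ (univ.filter fun q => y ≤ v q).card := Finset.card_le_card (fun r hr => by
          simp only [mem_filter, mem_univ, true_and] at hr ⊢; linarith)
  · intro h
    rcases lt_trichotomy y (v p) with h1 | h1 | h1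
    · exact h1
    · exact absurd h1.symm (hy p)
    · exfalso
      have hlt := card_lt_of_kth_lt hp (by rw [kthLargest_eq hp]; exact h1)
      omega

end kth

section model
variable {n : ℕ} (a b : Fin n → ℝ)

def isY {n : ℕ} (σ : Fin n → Bool) : Fin n ⊕ Fin n → Prop :=
  Sum.elim (fun p => σ p = false) (fun p => σ p = true)

def chY {n : ℕ} (σ : Fin n → Bool) (p : Fin n) : Fin n ⊕ Fin n :=
  if σ p then Sum.inr p else Sum.inl p

def chX {n : ℕ} (σ : Fin n → Bool) (p : Fin n) : Fin n ⊕ Fin n :=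
  if σ p then Sum.inl p else Sum.inr p

lemma Yvals_eq (σ : Fin n → Bool) (p : Fin n) :
    Yvals a b σ p = Sum.elim a b (chY σ p) := by
  unfold Yvals chY; by_cases h : σ p <;> simp [h]

lemma Xvals_eq (σ : Fin n → Bool) (p : Fin n) :
    Xvals a b σ p = Sum.elim a b (chX σ p) := by
  unfold Xvals chX; by_cases h : σ p <;> simp [h]

lemma chY_injective (σ : Fin n → Bool) : Function.Injective (chY σ) := by
  intro p q h
  unfold chY at h
  by_cases hp : σ p <;> by_cases hq : σ q <;> simp [hp, hq] at h <;> assumption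

lemma chX_injective (σ : Fin n → Bool) : Function.Injective (chX σ) := by
  intro p q h
  unfold chX at h
  by_cases hp : σ p <;> by_cases hq : σ q <;> simp [hp, hq] at h <;> assumption

lemma isY_chY (σ : Fin n → Bool) (p : Fin n) : isY σ (chY σ p) := by
  unfold isY chY; by_cases h : σ p <;> simp [h]

lemma not_isY_chX (σ : Fin n → Bool) (p : Fin n) : ¬ isY σ (chX σ p) := by
  unfold isY chX; by_cases h : σ p <;> simp [h]

lemma chY_pairOf {σ : Fin n → Bool} {q : Fin n ⊕ Fin n} (h : isY σ q) :
    chY σ (Sum.elim id id q) = q := by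
  cases q with
  | inl p => unfold isY at h; simp at h; simp [chY, h]
  | inr p => unfold isY at h; simp at h; simp [chY, h]

lemma chX_pairOf {σ : Fin n → Bool} {q : Fin n ⊕ Fin n} (h : ¬ isY σ q) :
    chX σ (Sum.elim id id q) = q := by
  cases q with
  | inl p => unfold isY at h; simp at h; simp [chX, h]
  | inr p => unfold isY at h; simp at h; simp [chX, h]

lemma chX_ne_chY (σ : Fin n → Bool) (p q : Fin n) : chX σ p ≠ chY σ q := by
  intro h
  have h1 := not_isY_chX σ p
  rw [h] at h1
  exact h1 (isY_chY σ q)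

lemma card_Y (σ : Fin n → Bool) (P : ℝ → Prop) :
    (univ.filter fun p => P (Yvals a b σ p)).card
      = (univ.filter fun q => isY σ q ∧ P (Sum.elim a b q)).card := by
  classical
  apply Finset.card_bij (fun p _ => chY σ p)
  · intro p hp
    simp only [mem_filter, mem_univ, true_and] at hp ⊢
    exact ⟨isY_chY σ p, by rwa [← Yvals_eq]⟩
  · intro p _ q _ h
    exact chY_injective σ h
  · intro q hq
    simp only [mem_filter, mem_univ, true_and] at hq
    refine ⟨Sum.elim id id q, ?_, chY_pairOf hq.1⟩
    simp only [mem_filter, mem_univ, true_and]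
    rw [Yvals_eq, chY_pairOf hq.1]
    exact hq.2

lemma card_X (σ : Fin n → Bool) (P : ℝ → Prop) :
    (univ.filter fun p => P (Xvals a b σ p)).card
      = (univ.filter fun q => ¬ isY σ q ∧ P (Sum.elim a b q)).card := by
  classical
  apply Finset.card_bij (fun p _ => chX σ p)
  · intro p hp
    simp only [mem_filter, mem_univ, true_and] at hp ⊢
    exact ⟨not_isY_chX σ p, by rwa [← Xvals_eq]⟩
  · intro p _ q _ h
    exact chX_injective σ h
  · intro q hq
    simp only [mem_filter, mem_univ, true_and] at hq
    refine ⟨Sum.elim id id q, ?_, chX_pairOf hq.1⟩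
    simp only [mem_filter, mem_univ, true_and]
    rw [Xvals_eq, chX_pairOf hq.1]
    exact hq.2

lemma card_split (σ : Fin n → Bool) (P : (Fin n ⊕ Fin n) → Prop) :
    (univ.filter fun q => P q).card
      = (univ.filter fun q => isY σ q ∧ P q).card
        + (univ.filter fun q => ¬ isY σ q ∧ P q).card := by
  classical
  have h := Finset.card_filter_add_card_filter_not (s := univ.filter fun q => P q)
    (p := fun q => isY σ q)
  rw [Finset.filter_filter, Finset.filter_filter] at h
  have e1 : (univ.filter fun q => P q ∧ isY σ q) = (univ.filter fun q => isY σ q ∧ P q) :=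
    Finset.filter_congr (fun q _ => by tauto)
  have e2 : (univ.filter fun q => P q ∧ ¬ isY σ q) = (univ.filter fun q => ¬ isY σ q ∧ P q) :=
    Finset.filter_congr (fun q _ => by tauto)
  rw [e1, e2] at h
  omega

lemma event_char (hV : Function.Injective (Sum.elim a b : Fin n ⊕ Fin n → ℝ))
    (σ : Fin n → Bool) (i m t : ℕ) (hi1 : 1 ≤ i) (hin : i ≤ n)
    (hm1 : 1 ≤ m) (hmn : m + 1 ≤ n) (ht : t = i + m)
    (e : Fin n ⊕ Fin n) (he : rkOf (Sum.elim a b) e = t) :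
    (XS a b σ (m+1) < YS a b σ i ∧ YS a b σ i < XS a b σ m) ↔
      (isY σ e ∧ (univ.filter fun q =>
          isY σ q ∧ Sum.elim a b e ≤ Sum.elim a b q).card = i) := by
  classical
  have hYinj : Function.Injective (Yvals a b σ) := by
    have : Yvals a b σ = (Sum.elim a b) ∘ (chY σ) := funext (Yvals_eq a b σ)
    rw [this]; exact hV.comp (chY_injective σ)
  have hXinj : Function.Injective (Xvals a b σ) := by
    have : Xvals a b σ = (Sum.elim a b) ∘ (chX σ) := funext (Xvals_eq a b σ)
    rw [this]; exact hV.comp (chX_injective σ)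
  obtain ⟨pi, hpi⟩ := rkOf_surj hYinj hi1 (by simpa using hin)
  obtain ⟨pm, hpm⟩ := rkOf_surj hXinj hm1 (by simp; omega)
  obtain ⟨pm1, hpm1⟩ := rkOf_surj hXinj (Nat.le_add_left 1 m) (by simpa using hmn)
  have hne : ∀ p q : Fin n, Xvals a b σ p ≠ Yvals a b σ q := by
    intro p q
    rw [Xvals_eq, Yvals_eq]
    exact fun h => chX_ne_chY σ p q (hV h)
  constructor
  · rintro ⟨h1, h2⟩
    set y := Yvals a b σ pi with hy
    have hYS : YS a b σ i = y := kthLargest_eq hpi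
    rw [hYS] at h1 h2
    have hXlt : (univ.filter fun q => y ≤ Xvals a b σ q).card < m + 1 :=
      card_lt_of_kth_lt hpm1 h1
    have hXge : m ≤ (univ.filter fun q => y ≤ Xvals a b σ q).card :=
      (lt_kth_iff_card hpm (fun q => hne q pi)).mp h2
    have hXcount : (univ.filter fun q => y ≤ Xvals a b σ q).card = m := by omega
    have hYcount : (univ.filter fun q => y ≤ Yvals a b σ q).card = i := hpi
    have hYg : (univ.filter fun q => isY σ q ∧ y ≤ Sum.elim a b q).card = i := by
      rw [← card_Y]; exact hYcount
    have hXg : (univ.filter fun q => ¬ isY σ q ∧ y ≤ Sum.elim a b q).card = m := by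
      rw [← card_X]; exact hXcount
    have htot : (univ.filter fun q => y ≤ Sum.elim a b q).card = t := by
      rw [card_split σ, hYg, hXg, ht]
    have hyv : y = Sum.elim a b (chY σ pi) := Yvals_eq a b σ pi
    have hrk : rkOf (Sum.elim a b) (chY σ pi) = t := by
      rw [rkOf, ← htot]
      congr 1
      apply Finset.filter_congr
      intro q _
      rw [← hyv]
    have heq : chY σ pi = e := rkOf_injective hV (by rw [hrk, he])
    constructor
    · rw [← heq]; exact isY_chY σ pi
    · have : Sum.elim a b e = y := by rw [← heq, ← hyv]
      rw [this]; exact hYg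
  · rintro ⟨hY, hcard⟩
    set y := Sum.elim a b e with hy
    have he' : chY σ (Sum.elim id id e) = e := chY_pairOf hY
    have hYv : Yvals a b σ (Sum.elim id id e) = y := by
      rw [Yvals_eq, he']
    have hYcount : (univ.filter fun q => y ≤ Yvals a b σ q).card = i := by
      rw [card_Y]; exact hcard
    have hrkY : rkOf (Yvals a b σ) (Sum.elim id id e) = i := by
      rw [rkOf, ← hYcount]
      congr 1
      apply Finset.filter_congr
      intro q _
      rw [hYv]
    have hYS : YS a b σ i = y := by
      rw [show YS a b σ i = kthLargest (Yvals a b σ) i from rfl, kthLargest_eq hrkY, hYv]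
    have htot : (univ.filter fun q => y ≤ Sum.elim a b q).card = t := he
    have hXg : (univ.filter fun q => ¬ isY σ q ∧ y ≤ Sum.elim a b q).card = m := by
      have := card_split σ (fun q => y ≤ Sum.elim a b q)
      rw [htot, hcard] at this
      omega
    have hXcount : (univ.filter fun q => y ≤ Xvals a b σ q).card = m := by
      rw [card_X]; exact hXg
    have hyne : ∀ q, Xvals a b σ q ≠ y := by
      intro q
      rw [← hYv]
      exact hne q (Sum.elim id id e)
    rw [hYS]
    constructor
    · exact kth_lt_of_card_lt hpm1 hyne (by omega)
    · exact (lt_kth_iff_card hpm hyne).mpr (le_of_eq hXcount.symm)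
end model

open Polynomial

def gfun {n : ℕ} (T : Finset (Fin n ⊕ Fin n)) (p : Fin n) (s : Bool) : ℕ :=
  (if s = false ∧ Sum.inl p ∈ T then 1 else 0) + (if s = true ∧ Sum.inr p ∈ T then 1 else 0)

lemma card_isY_eq_sum {n : ℕ} (T : Finset (Fin n ⊕ Fin n)) (σ : Fin n → Bool) :
    (univ.filter fun q => isY σ q ∧ q ∈ T).card = ∑ p : Fin n, gfun T p (σ p) := by
  classical
  rw [Finset.card_filter, Fintype.sum_sum_type, ← Finset.sum_add_distrib]
  apply Finset.sum_congr rfl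
  intro p _
  unfold gfun isY
  simp only [Sum.elim_inl, Sum.elim_inr]
  congr

lemma isY_iff_bit {n : ℕ} (σ : Fin n → Bool) (e : Fin n ⊕ Fin n) :
    isY σ e ↔ σ (Sum.elim id id e) = Sum.elim (fun _ => false) (fun _ => true) e := by
  cases e <;> simp [isY]

lemma count_eq {n : ℕ} (T : Finset (Fin n ⊕ Fin n)) (e : Fin n ⊕ Fin n) (hT : e ∈ T)
    (i D S N : ℕ)
    (hD : D = ((univ.erase (Sum.elim id id e)).filter fun p =>
        Sum.inl p ∈ T ∧ Sum.inr p ∈ T).card)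
    (hS : S = ((univ.erase (Sum.elim id id e)).filter fun p =>
        ¬(Sum.inl p ∈ T ∧ Sum.inr p ∈ T) ∧ (Sum.inl p ∈ T ∨ Sum.inr p ∈ T)).card)
    (hN : N = ((univ.erase (Sum.elim id id e)).filter fun p =>
        ¬(Sum.inl p ∈ T ∧ Sum.inr p ∈ T) ∧ ¬(Sum.inl p ∈ T ∨ Sum.inr p ∈ T)).card) :
    (univ.filter fun σ : Fin n → Bool =>
        isY σ e ∧ (univ.filter fun q => isY σ q ∧ q ∈ T).card = i).card
      = 2 ^ (D + N) * (if D + 1 ≤ i then S.choose (i - (D + 1)) else 0) := by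
  classical
  set p0 : Fin n := Sum.elim id id e with hp0
  set bY : Bool := Sum.elim (fun _ => false) (fun _ => true) e with hbY
  set h : Fin n → Bool → ℕ[X] :=
    fun p s => if p = p0 ∧ ¬ (s = bY) then 0 else X ^ (gfun T p s) with hh
  have hfil : (univ.filter fun σ : Fin n → Bool =>
      isY σ e ∧ (univ.filter fun q => isY σ q ∧ q ∈ T).card = i)
      = (univ.filter fun σ : Fin n → Bool =>
        σ p0 = bY ∧ ∑ p : Fin n, gfun T p (σ p) = i) := by
    apply Finset.filter_congr
    intro σ _
    rw [isY_iff_bit, card_isY_eq_sum]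
  rw [hfil]
  have hcoeff : ((univ.filter fun σ : Fin n → Bool =>
      σ p0 = bY ∧ ∑ p : Fin n, gfun T p (σ p) = i).card : ℕ)
      = (∏ p : Fin n, ∑ s : Bool, h p s).coeff i := by
    rw [Finset.prod_univ_sum (fun _ => (univ : Finset Bool)) h, Fintype.piFinset_univ,
      Polynomial.finset_sum_coeff, Finset.card_filter]
    apply Finset.sum_congr rfl
    intro σ _
    by_cases hσ : σ p0 = bY
    · have hprod : (∏ p : Fin n, h p (σ p)) = X ^ (∑ p : Fin n, gfun T p (σ p)) := by
        rw [← Finset.prod_pow_eq_pow_sum]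
        apply Finset.prod_congr rfl
        intro p _
        rw [hh]
        simp only
        rw [if_neg]
        rintro ⟨rfl, hc⟩
        exact hc hσ
      rw [hprod, Polynomial.coeff_X_pow]
      by_cases hs : (∑ p : Fin n, gfun T p (σ p)) = i
      · simp [hσ, hs]
      · simp [hσ, hs, Ne.symm hs]
    · have hzero : (∏ p : Fin n, h p (σ p)) = 0 := by
        apply Finset.prod_eq_zero (Finset.mem_univ p0)
        simp [hh, hσ]
      rw [hzero]
      simp [hσ]
  rw [hcoeff]
  have hF0 : (∑ s : Bool, h p0 s) = X := by
    rw [Fintype.sum_bool]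
    cases e with
    | inl p => simp [hh, hbY, hp0, gfun, hT]
    | inr p => simp [hh, hbY, hp0, gfun, hT]
  have hFne : ∀ p ∈ univ.erase p0,
      (∑ s : Bool, h p s) = X ^ (if Sum.inr p ∈ T then 1 else 0)
        + X ^ (if Sum.inl p ∈ T then 1 else 0) := by
    intro p hp
    have hpne : ¬ (p = p0) := (Finset.mem_erase.mp hp).1
    rw [Fintype.sum_bool, hh]
    simp only
    rw [if_neg (fun hc => hpne hc.1), if_neg (fun hc => hpne hc.1)]
    congr 1
    · congr 1
      unfold gfun
      by_cases hr : Sum.inr p ∈ T <;> simp [hr]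
    · congr 1
      unfold gfun
      by_cases hl : Sum.inl p ∈ T <;> simp [hl]
  have hfull : (∏ p ∈ (univ.erase p0).filter (fun p => Sum.inl p ∈ T ∧ Sum.inr p ∈ T),
      (∑ s : Bool, h p s)) = (X + X : ℕ[X]) ^ D := by
    rw [hD, ← Finset.prod_const]
    apply Finset.prod_congr rfl
    intro p hp
    have hc := (Finset.mem_filter.mp hp).2
    rw [hFne p (Finset.mem_of_mem_filter p hp), if_pos hc.2, if_pos hc.1, pow_one]
  have hsplitp : (∏ p ∈ (univ.erase p0).filter (fun p =>
      ¬(Sum.inl p ∈ T ∧ Sum.inr p ∈ T) ∧ (Sum.inl p ∈ T ∨ Sum.inr p ∈ T)),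
      (∑ s : Bool, h p s)) = (X + 1 : ℕ[X]) ^ S := by
    rw [hS, ← Finset.prod_const]
    apply Finset.prod_congr rfl
    intro p hp
    have hc := (Finset.mem_filter.mp hp).2
    rw [hFne p (Finset.mem_of_mem_filter p hp)]
    rcases hc.2 with hl | hr
    · have hr : ¬ (Sum.inr p ∈ T) := fun hr => hc.1 ⟨hl, hr⟩
      rw [if_pos hl, if_neg hr, pow_one, pow_zero, add_comm]
    · have hl : ¬ (Sum.inl p ∈ T) := fun hl => hc.1 ⟨hl, hr⟩
      rw [if_pos hr, if_neg hl, pow_one, pow_zero]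
  have hnone : (∏ p ∈ (univ.erase p0).filter (fun p =>
      ¬(Sum.inl p ∈ T ∧ Sum.inr p ∈ T) ∧ ¬(Sum.inl p ∈ T ∨ Sum.inr p ∈ T)),
      (∑ s : Bool, h p s)) = (1 + 1 : ℕ[X]) ^ N := by
    rw [hN, ← Finset.prod_const]
    apply Finset.prod_congr rfl
    intro p hp
    have hc := (Finset.mem_filter.mp hp).2
    push_neg at hc
    rw [hFne p (Finset.mem_of_mem_filter p hp), if_neg hc.2.2, if_neg hc.2.1, pow_zero]
  have hsplit : (∏ p : Fin n, ∑ s : Bool, h p s)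
      = X * ((X + X) ^ D * ((X + 1) ^ S * (1 + 1 : ℕ[X]) ^ N)) := by
    rw [← Finset.mul_prod_erase univ _ (Finset.mem_univ p0), hF0]
    congr 1
    rw [← Finset.prod_filter_mul_prod_filter_not (univ.erase p0)
      (fun p => Sum.inl p ∈ T ∧ Sum.inr p ∈ T), hfull]
    congr 1
    rw [← Finset.prod_filter_mul_prod_filter_not
      ((univ.erase p0).filter fun p => ¬(Sum.inl p ∈ T ∧ Sum.inr p ∈ T))
      (fun p => Sum.inl p ∈ T ∨ Sum.inr p ∈ T), Finset.filter_filter, Finset.filter_filter,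
      hsplitp, hnone]
  rw [hsplit]
  have h2 : (1 + 1 : ℕ[X]) = C 2 := by
    rw [← Polynomial.C_1, ← Polynomial.C_add]
    norm_num
  have hXX : (X + X : ℕ[X]) = C 2 * X := by
    rw [h2.symm]
    ring
  have hPP : (X : ℕ[X]) * ((X + X) ^ D * ((X + 1) ^ S * (1 + 1 : ℕ[X]) ^ N))
      = C (2 ^ (D + N)) * ((X + 1) ^ S * X ^ (D + 1)) := by
    rw [hXX, h2]
    rw [show (2:ℕ) ^ (D + N) = 2 ^ D * 2 ^ N from pow_add 2 D N, map_mul, map_pow, map_pow]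
    ring
  rw [hPP, Polynomial.coeff_C_mul, Polynomial.coeff_mul_X_pow']
  by_cases hc : D + 1 ≤ i
  · rw [if_pos hc, if_pos hc, Polynomial.coeff_X_add_one_pow]
    simp
  · rw [if_neg hc, if_neg hc, mul_zero]

lemma bin_up (S d : ℕ) (h : 2*d + 2 ≤ S + 1) : S.choose d ≤ S.choose (d+1) := by
  have key := Nat.choose_succ_right_eq S d
  have h1 : d + 1 ≤ S - d := by omega
  have h2 : S.choose d * (d+1) ≤ S.choose d * (S - d) := Nat.mul_le_mul_left _ h1
  rw [← key] at h2
  exact Nat.le_of_mul_le_mul_right h2 (by omega)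

lemma bin_down (S d : ℕ) (h : S + 1 ≤ 2*d + 2) : S.choose (d+1) ≤ S.choose d := by
  by_cases hd : S ≤ d
  · rw [Nat.choose_eq_zero_of_lt (by omega)]
    exact Nat.zero_le _
  · have key := Nat.choose_succ_right_eq S d
    have h1 : S - d ≤ d + 1 := by omega
    have h2 : S.choose d * (S - d) ≤ S.choose d * (d+1) := Nat.mul_le_mul_left _ h1
    rw [← key] at h2
    exact Nat.le_of_mul_le_mul_right h2 (by omega)

lemma formula_compare (uin vin : Prop) [Decidable uin] [Decidable vin]
    (D0 S0 N0 i t : ℕ)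
    (ht : t = 1 + (if uin then 1 else 0) + (if vin then 1 else 0) + (2*D0 + S0)) :
    (2*i ≤ t →
      2^((D0 + (if uin then 1 else 0)) + N0) *
        (if (D0 + (if uin then 1 else 0)) + 1 ≤ i
          then (S0 + (if uin then 0 else 1)).choose (i - ((D0 + (if uin then 1 else 0)) + 1))
          else 0)
      ≤ 2^(D0 + (N0 + (if vin then 0 else 1))) *
        (if D0 + 1 ≤ i then (S0 + (if vin then 1 else 0)).choose (i - (D0 + 1)) else 0)) ∧
    (t + 2 ≤ 2*i →
      2^(D0 + (N0 + (if vin then 0 else 1))) *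
        (if D0 + 1 ≤ i then (S0 + (if vin then 1 else 0)).choose (i - (D0 + 1)) else 0)
      ≤ 2^((D0 + (if uin then 1 else 0)) + N0) *
        (if (D0 + (if uin then 1 else 0)) + 1 ≤ i
          then (S0 + (if uin then 0 else 1)).choose (i - ((D0 + (if uin then 1 else 0)) + 1))
          else 0)) := by
  by_cases hu : uin <;> by_cases hv : vin
  · -- uin, vin : t = 2D0+S0+3
    simp only [if_pos hu, if_pos hv, add_zero] at ht ⊢
    constructor
    · intro h2i
      by_cases hD : D0 + 1 + 1 ≤ i
      · rw [if_pos hD, if_pos (by omega : D0 + 1 ≤ i)]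
        obtain ⟨d, hd⟩ : ∃ d, i - (D0 + 1 + 1) = d := ⟨_, rfl⟩
        rw [hd, show i - (D0 + 1) = d + 1 by omega, Nat.choose_succ_succ, Nat.succ_eq_add_one,
          show D0 + 1 + N0 = (D0 + N0) + 1 by omega, pow_succ, mul_assoc]
        refine Nat.mul_le_mul_left _ ?_
        have := bin_up S0 d (by omega)
        omega
      · rw [if_neg hD, mul_zero]
        exact Nat.zero_le _
    · intro h2i
      by_cases hD : D0 + 1 ≤ i
      · have hD2 : D0 + 1 + 1 ≤ i := by omega
        rw [if_pos hD, if_pos hD2]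
        obtain ⟨d, hd⟩ : ∃ d, i - (D0 + 1 + 1) = d := ⟨_, rfl⟩
        rw [hd, show i - (D0 + 1) = d + 1 by omega, Nat.choose_succ_succ, Nat.succ_eq_add_one,
          show D0 + 1 + N0 = (D0 + N0) + 1 by omega, pow_succ, mul_assoc]
        refine Nat.mul_le_mul_left _ ?_
        have := bin_down S0 d (by omega)
        omega
      · rw [if_neg hD, mul_zero]
        exact Nat.zero_le _
  · -- uin, ¬vin : exponents equal
    simp only [if_pos hu, if_neg hv, add_zero] at ht ⊢
    rw [show D0 + 1 + N0 = D0 + (N0 + 1) by omega]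
    constructor
    · intro h2i
      refine Nat.mul_le_mul_left _ ?_
      by_cases hD : D0 + 1 + 1 ≤ i
      · rw [if_pos hD, if_pos (by omega : D0 + 1 ≤ i)]
        obtain ⟨d, hd⟩ : ∃ d, i - (D0 + 1 + 1) = d := ⟨_, rfl⟩
        rw [hd, show i - (D0 + 1) = d + 1 by omega]
        exact bin_up S0 d (by omega)
      · rw [if_neg hD]
        exact Nat.zero_le _
    · intro h2i
      refine Nat.mul_le_mul_left _ ?_
      by_cases hD : D0 + 1 ≤ i
      · have hD2 : D0 + 1 + 1 ≤ i := by omega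
        rw [if_pos hD, if_pos hD2]
        obtain ⟨d, hd⟩ : ∃ d, i - (D0 + 1 + 1) = d := ⟨_, rfl⟩
        rw [hd, show i - (D0 + 1) = d + 1 by omega]
        exact bin_down S0 d (by omega)
      · rw [if_neg hD]
        exact Nat.zero_le _
  · -- ¬uin, vin : identical
    simp only [if_pos hv, if_neg hu, add_zero] at ht ⊢
    exact ⟨fun _ => le_refl _, fun _ => le_refl _⟩
  · -- ¬uin, ¬vin : t = 2D0+S0+1
    simp only [if_neg hu, if_neg hv, add_zero] at ht ⊢
    constructor
    · intro h2i
      by_cases hD : D0 + 1 ≤ i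
      · rw [if_pos hD, if_pos hD,
          show D0 + (N0 + 1) = (D0 + N0) + 1 by omega, pow_succ, mul_assoc]
        refine Nat.mul_le_mul_left _ ?_
        obtain ⟨c, hc⟩ : ∃ c, i - (D0 + 1) = c := ⟨_, rfl⟩
        rw [hc]
        cases c with
        | zero => simp
        | succ d =>
          rw [Nat.choose_succ_succ]; simp only [Nat.succ_eq_add_one]
          have := bin_up S0 d (by omega)
          omega
      · rw [if_neg hD, mul_zero]
        exact Nat.zero_le _
    · intro h2i
      by_cases hD : D0 + 1 ≤ i
      · rw [if_pos hD, if_pos hD,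
          show D0 + (N0 + 1) = (D0 + N0) + 1 by omega, pow_succ, mul_assoc]
        refine Nat.mul_le_mul_left _ ?_
        obtain ⟨c, hc⟩ : ∃ c, i - (D0 + 1) = c := ⟨_, rfl⟩
        rw [hc]
        cases c with
        | zero =>
          exfalso
          omega
        | succ d =>
          rw [Nat.choose_succ_succ]; simp only [Nat.succ_eq_add_one]
          have := bin_down S0 d (by omega)
          omega
      · rw [if_neg hD, mul_zero]
        exact Nat.zero_le _

lemma main_compare {n : ℕ} {a b : Fin n → ℝ}
    (hV : Function.Injective (Sum.elim a b : Fin n ⊕ Fin n → ℝ))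
    (t i : ℕ)
    (e1 e2 : Fin n ⊕ Fin n) (he1 : rkOf (Sum.elim a b) e1 = t)
    (he2 : rkOf (Sum.elim a b) e2 = t + 1) :
    (2*i ≤ t →
      (univ.filter fun σ : Fin n → Bool => isY σ e2 ∧
        (univ.filter fun q => isY σ q ∧ Sum.elim a b e2 ≤ Sum.elim a b q).card = i).card
      ≤ (univ.filter fun σ : Fin n → Bool => isY σ e1 ∧
        (univ.filter fun q => isY σ q ∧ Sum.elim a b e1 ≤ Sum.elim a b q).card = i).card) ∧
    (t + 2 ≤ 2*i →
      (univ.filter fun σ : Fin n → Bool => isY σ e1 ∧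
        (univ.filter fun q => isY σ q ∧ Sum.elim a b e1 ≤ Sum.elim a b q).card = i).card
      ≤ (univ.filter fun σ : Fin n → Bool => isY σ e2 ∧
        (univ.filter fun q => isY σ q ∧ Sum.elim a b e2 ≤ Sum.elim a b q).card = i).card) := by
  classical
  set T1 : Finset (Fin n ⊕ Fin n) :=
    univ.filter (fun q => Sum.elim a b e1 ≤ Sum.elim a b q) with hT1
  set T2 : Finset (Fin n ⊕ Fin n) :=
    univ.filter (fun q => Sum.elim a b e2 ≤ Sum.elim a b q) with hT2
  have hrk1 : ∀ q, q ∈ T1 ↔ rkOf (Sum.elim a b) q ≤ t := by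
    intro q
    rw [hT1, Finset.mem_filter]
    simp only [Finset.mem_univ, true_and]
    rw [le_iff_rkOf hV, he1]
  have hrk2 : ∀ q, q ∈ T2 ↔ rkOf (Sum.elim a b) q ≤ t + 1 := by
    intro q
    rw [hT2, Finset.mem_filter]
    simp only [Finset.mem_univ, true_and]
    rw [le_iff_rkOf hV, he2]
  have he1T1 : e1 ∈ T1 := (hrk1 e1).mpr (le_of_eq he1)
  have he2T2 : e2 ∈ T2 := (hrk2 e2).mpr (le_of_eq he2)
  have he2T1 : e2 ∉ T1 := by rw [hrk1, he2]; omega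
  have hT2eq : T2 = insert e2 T1 := by
    ext q
    rw [Finset.mem_insert, hrk2, hrk1]
    constructor
    · intro h
      by_cases hq : rkOf (Sum.elim a b) q ≤ t
      · exact Or.inr hq
      · exact Or.inl (rkOf_injective hV (by omega))
    · rintro (rfl | h)
      · exact le_of_eq he2
      · omega
  have he1T2 : e1 ∈ T2 := by rw [hT2eq]; exact Finset.mem_insert_of_mem he1T1
  have hql : ∀ p : Fin n, p ≠ Sum.elim id id e2 → (Sum.inl p ∈ T2 ↔ Sum.inl p ∈ T1) := by
    intro p hp
    rw [hT2eq, Finset.mem_insert]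
    constructor
    · rintro (h | h)
      · exact absurd (by rw [← h]; simp) hp
      · exact h
    · exact Or.inr
  have hqr : ∀ p : Fin n, p ≠ Sum.elim id id e2 → (Sum.inr p ∈ T2 ↔ Sum.inr p ∈ T1) := by
    intro p hp
    rw [hT2eq, Finset.mem_insert]
    constructor
    · rintro (h | h)
      · exact absurd (by rw [← h]; simp) hp
      · exact h
    · exact Or.inr
  -- rewrite counts via T sets
  have hCrw1 : (univ.filter fun σ : Fin n → Bool => isY σ e1 ∧
      (univ.filter fun q => isY σ q ∧ Sum.elim a b e1 ≤ Sum.elim a b q).card = i)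
      = (univ.filter fun σ : Fin n → Bool => isY σ e1 ∧
        (univ.filter fun q => isY σ q ∧ q ∈ T1).card = i) := by
    apply Finset.filter_congr
    intro σ _
    have hfeq : (univ.filter fun q => isY σ q ∧ Sum.elim a b e1 ≤ Sum.elim a b q)
        = (univ.filter fun q => isY σ q ∧ q ∈ T1) := by
      apply Finset.filter_congr
      intro q _
      rw [hT1]
      simp only [Finset.mem_filter, Finset.mem_univ, true_and]
    rw [hfeq]
  have hCrw2 : (univ.filter fun σ : Fin n → Bool => isY σ e2 ∧
      (univ.filter fun q => isY σ q ∧ Sum.elim a b e2 ≤ Sum.elim a b q).card = i)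
      = (univ.filter fun σ : Fin n → Bool => isY σ e2 ∧
        (univ.filter fun q => isY σ q ∧ q ∈ T2).card = i) := by
    apply Finset.filter_congr
    intro σ _
    have hfeq : (univ.filter fun q => isY σ q ∧ Sum.elim a b e2 ≤ Sum.elim a b q)
        = (univ.filter fun q => isY σ q ∧ q ∈ T2) := by
      apply Finset.filter_congr
      intro q _
      rw [hT2]
      simp only [Finset.mem_filter, Finset.mem_univ, true_and]
    rw [hfeq]
  obtain ⟨D1, hD1⟩ : ∃ x, x = ((univ.erase (Sum.elim id id e1)).filter fun p =>
      Sum.inl p ∈ T1 ∧ Sum.inr p ∈ T1).card := ⟨_, rfl⟩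
  obtain ⟨S1, hS1⟩ : ∃ x, x = ((univ.erase (Sum.elim id id e1)).filter fun p =>
      ¬(Sum.inl p ∈ T1 ∧ Sum.inr p ∈ T1) ∧ (Sum.inl p ∈ T1 ∨ Sum.inr p ∈ T1)).card := ⟨_, rfl⟩
  obtain ⟨N1, hN1⟩ : ∃ x, x = ((univ.erase (Sum.elim id id e1)).filter fun p =>
      ¬(Sum.inl p ∈ T1 ∧ Sum.inr p ∈ T1) ∧ ¬(Sum.inl p ∈ T1 ∨ Sum.inr p ∈ T1)).card := ⟨_, rfl⟩
  obtain ⟨D2, hD2⟩ : ∃ x, x = ((univ.erase (Sum.elim id id e2)).filter fun p =>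
      Sum.inl p ∈ T2 ∧ Sum.inr p ∈ T2).card := ⟨_, rfl⟩
  obtain ⟨S2, hS2⟩ : ∃ x, x = ((univ.erase (Sum.elim id id e2)).filter fun p =>
      ¬(Sum.inl p ∈ T2 ∧ Sum.inr p ∈ T2) ∧ (Sum.inl p ∈ T2 ∨ Sum.inr p ∈ T2)).card := ⟨_, rfl⟩
  obtain ⟨N2, hN2⟩ : ∃ x, x = ((univ.erase (Sum.elim id id e2)).filter fun p =>
      ¬(Sum.inl p ∈ T2 ∧ Sum.inr p ∈ T2) ∧ ¬(Sum.inl p ∈ T2 ∨ Sum.inr p ∈ T2)).card := ⟨_, rfl⟩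
  have hC1 : (univ.filter fun σ : Fin n → Bool => isY σ e1 ∧
      (univ.filter fun q => isY σ q ∧ Sum.elim a b e1 ≤ Sum.elim a b q).card = i).card
      = 2 ^ (D1 + N1) * (if D1 + 1 ≤ i then S1.choose (i - (D1 + 1)) else 0) := by
    rw [hCrw1]
    exact count_eq T1 e1 he1T1 i D1 S1 N1 hD1 hS1 hN1
  have hC2 : (univ.filter fun σ : Fin n → Bool => isY σ e2 ∧
      (univ.filter fun q => isY σ q ∧ Sum.elim a b e2 ≤ Sum.elim a b q).card = i).card
      = 2 ^ (D2 + N2) * (if D2 + 1 ≤ i then S2.choose (i - (D2 + 1)) else 0) := by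
    rw [hCrw2]
    exact count_eq T2 e2 he2T2 i D2 S2 N2 hD2 hS2 hN2
  have he1pair : Sum.inl (Sum.elim id id e1) = e1 ∨ Sum.inr (Sum.elim id id e1) = e1 := by
    cases e1 <;> simp
  have he2pair : Sum.inl (Sum.elim id id e2) = e2 ∨ Sum.inr (Sum.elim id id e2) = e2 := by
    cases e2 <;> simp
  by_cases hpp : Sum.elim id id e1 = Sum.elim id id e2
  · -- same pair: all classification counts coincide
    have htr : ∀ p ∈ univ.erase (Sum.elim id id e1),
        ((Sum.inl p ∈ T2 ↔ Sum.inl p ∈ T1) ∧ (Sum.inr p ∈ T2 ↔ Sum.inr p ∈ T1)) := by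
      intro p hp
      have hpne : p ≠ Sum.elim id id e2 := by
        rw [← hpp]; exact (Finset.mem_erase.mp hp).1
      exact ⟨hql p hpne, hqr p hpne⟩
    have hDeq : D2 = D1 := by
      rw [hD2, hD1, ← hpp]
      congr 1
      apply Finset.filter_congr
      intro p hp
      rw [(htr p hp).1, (htr p hp).2]
    have hSeq : S2 = S1 := by
      rw [hS2, hS1, ← hpp]
      congr 1
      apply Finset.filter_congr
      intro p hp
      rw [(htr p hp).1, (htr p hp).2]
    have hNeq : N2 = N1 := by
      rw [hN2, hN1, ← hpp]
      congr 1
      apply Finset.filter_congr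
      intro p hp
      rw [(htr p hp).1, (htr p hp).2]
    rw [hC1, hC2, hDeq, hSeq, hNeq]
    exact ⟨fun _ => le_refl _, fun _ => le_refl _⟩
  · -- different pairs
    have hp1mem : Sum.elim id id e2 ∈ univ.erase (Sum.elim id id e1) :=
      Finset.mem_erase.mpr ⟨fun h => hpp h.symm, Finset.mem_univ _⟩
    have hp0mem : Sum.elim id id e1 ∈ univ.erase (Sum.elim id id e2) :=
      Finset.mem_erase.mpr ⟨hpp, Finset.mem_univ _⟩
    set E2 : Finset (Fin n) :=
      (univ.erase (Sum.elim id id e1)).erase (Sum.elim id id e2) with hE2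
    have hins1 : insert (Sum.elim id id e2) E2 = univ.erase (Sum.elim id id e1) :=
      Finset.insert_erase hp1mem
    have hcomm : (univ.erase (Sum.elim id id e2)).erase (Sum.elim id id e1) = E2 := by
      rw [hE2]
      ext p
      simp only [Finset.mem_erase, Finset.mem_univ, and_true]
      tauto
    have hins2 : insert (Sum.elim id id e1) E2 = univ.erase (Sum.elim id id e2) := by
      rw [← hcomm]
      exact Finset.insert_erase hp0mem
    have hp1nE : Sum.elim id id e2 ∉ E2 := Finset.notMem_erase _ _
    have hp0nE : Sum.elim id id e1 ∉ E2 := by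
      rw [← hcomm]
      exact Finset.notMem_erase _ _
    have hE2ne2 : ∀ p ∈ E2, p ≠ Sum.elim id id e2 := by
      intro p hp
      exact (Finset.mem_erase.mp hp).1
    -- base counts
    obtain ⟨D0, hD0⟩ : ∃ x, x = (E2.filter fun p =>
        Sum.inl p ∈ T1 ∧ Sum.inr p ∈ T1).card := ⟨_, rfl⟩
    obtain ⟨S0, hS0⟩ : ∃ x, x = (E2.filter fun p =>
        ¬(Sum.inl p ∈ T1 ∧ Sum.inr p ∈ T1) ∧ (Sum.inl p ∈ T1 ∨ Sum.inr p ∈ T1)).card := ⟨_, rfl⟩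
    obtain ⟨N0, hN0⟩ : ∃ x, x = (E2.filter fun p =>
        ¬(Sum.inl p ∈ T1 ∧ Sum.inr p ∈ T1) ∧ ¬(Sum.inl p ∈ T1 ∨ Sum.inr p ∈ T1)).card := ⟨_, rfl⟩
    set uin : Prop :=
      (Sum.inl (Sum.elim id id e1) ∈ T1 ∧ Sum.inr (Sum.elim id id e1) ∈ T1) with huin
    set vin : Prop :=
      (Sum.inl (Sum.elim id id e2) ∈ T1 ∨ Sum.inr (Sum.elim id id e2) ∈ T1) with hvin
    have hfull1p1 : ¬(Sum.inl (Sum.elim id id e2) ∈ T1 ∧ Sum.inr (Sum.elim id id e2) ∈ T1) := by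
      rcases he2pair with h | h
      · intro hc; exact he2T1 (h ▸ hc.1)
      · intro hc; exact he2T1 (h ▸ hc.2)
    -- t-side counts
    have hD1eq : D1 = D0 := by
      rw [hD1, ← hins1, Finset.filter_insert, if_neg hfull1p1, hD0]
    have hS1eq : S1 = S0 + (if vin then 1 else 0) := by
      rw [hS1, ← hins1, Finset.filter_insert]
      by_cases hv : vin
      · rw [if_pos ⟨hfull1p1, hv⟩, if_pos hv,
          Finset.card_insert_of_notMem (fun hc => hp1nE (Finset.mem_of_mem_filter _ hc)), hS0]
      · rw [if_neg (fun hc => hv hc.2), if_neg hv, add_zero, hS0]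
    have hN1eq : N1 = N0 + (if vin then 0 else 1) := by
      rw [hN1, ← hins1, Finset.filter_insert]
      by_cases hv : vin
      · rw [if_neg (fun hc => hc.2 hv), if_pos hv, add_zero, hN0]
      · rw [if_pos ⟨hfull1p1, hv⟩, if_neg hv,
          Finset.card_insert_of_notMem (fun hc => hp1nE (Finset.mem_of_mem_filter _ hc)), hN0]
    -- transfer on E2
    have hfE : (E2.filter fun p => Sum.inl p ∈ T2 ∧ Sum.inr p ∈ T2)
        = (E2.filter fun p => Sum.inl p ∈ T1 ∧ Sum.inr p ∈ T1) := by
      apply Finset.filter_congr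
      intro p hp
      rw [hql p (hE2ne2 p hp), hqr p (hE2ne2 p hp)]
    have hsE : (E2.filter fun p => ¬(Sum.inl p ∈ T2 ∧ Sum.inr p ∈ T2)
          ∧ (Sum.inl p ∈ T2 ∨ Sum.inr p ∈ T2))
        = (E2.filter fun p => ¬(Sum.inl p ∈ T1 ∧ Sum.inr p ∈ T1)
          ∧ (Sum.inl p ∈ T1 ∨ Sum.inr p ∈ T1)) := by
      apply Finset.filter_congr
      intro p hp
      rw [hql p (hE2ne2 p hp), hqr p (hE2ne2 p hp)]
    have hnE : (E2.filter fun p => ¬(Sum.inl p ∈ T2 ∧ Sum.inr p ∈ T2)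
          ∧ ¬(Sum.inl p ∈ T2 ∨ Sum.inr p ∈ T2))
        = (E2.filter fun p => ¬(Sum.inl p ∈ T1 ∧ Sum.inr p ∈ T1)
          ∧ ¬(Sum.inl p ∈ T1 ∨ Sum.inr p ∈ T1)) := by
      apply Finset.filter_congr
      intro p hp
      rw [hql p (hE2ne2 p hp), hqr p (hE2ne2 p hp)]
    -- pair of e1 w.r.t. T2
    have hfull2p0 : (Sum.inl (Sum.elim id id e1) ∈ T2 ∧ Sum.inr (Sum.elim id id e1) ∈ T2)
        ↔ uin := by
      rw [huin]
      rcases he1pair with h | h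
      · constructor
        · intro hc; exact ⟨by rw [h]; exact he1T1, (hqr _ hpp).mp hc.2⟩
        · intro hc; exact ⟨by rw [h]; exact he1T2, (hqr _ hpp).mpr hc.2⟩
      · constructor
        · intro hc; exact ⟨(hql _ hpp).mp hc.1, by rw [h]; exact he1T1⟩
        · intro hc; exact ⟨(hql _ hpp).mpr hc.1, by rw [h]; exact he1T2⟩
    have hor2p0 : (Sum.inl (Sum.elim id id e1) ∈ T2 ∨ Sum.inr (Sum.elim id id e1) ∈ T2) := by
      rcases he1pair with h | h
      · exact Or.inl (by rw [h]; exact he1T2)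
      · exact Or.inr (by rw [h]; exact he1T2)
    have hD2eq : D2 = D0 + (if uin then 1 else 0) := by
      rw [hD2, ← hins2, Finset.filter_insert]
      by_cases hu : uin
      · rw [if_pos (hfull2p0.mpr hu), if_pos hu,
          Finset.card_insert_of_notMem (fun hc => hp0nE (Finset.mem_of_mem_filter _ hc)),
          hfE, hD0]
      · rw [if_neg (fun hc => hu (hfull2p0.mp hc)), if_neg hu, add_zero, hfE, hD0]
    have hS2eq : S2 = S0 + (if uin then 0 else 1) := by
      rw [hS2, ← hins2, Finset.filter_insert]
      by_cases hu : uin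
      · rw [if_neg (fun hc => hc.1 (hfull2p0.mpr hu)), if_pos hu, add_zero, hsE, hS0]
      · rw [if_pos ⟨fun hc => hu (hfull2p0.mp hc), hor2p0⟩, if_neg hu,
          Finset.card_insert_of_notMem (fun hc => hp0nE (Finset.mem_of_mem_filter _ hc)),
          hsE, hS0]
    have hN2eq : N2 = N0 := by
      rw [hN2, ← hins2, Finset.filter_insert, if_neg (fun hc => hc.2 hor2p0), hnE, hN0]
    -- cardinality identity
    set f : Fin n → ℕ :=
      fun p => (if Sum.inl p ∈ T1 then 1 else 0) + (if Sum.inr p ∈ T1 then 1 else 0) with hf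
    have hcard : T1.card = t := by
      rw [hT1]
      exact he1
    have hsum : T1.card = ∑ p : Fin n, f p := by
      have h0 : T1 = univ.filter (fun q => q ∈ T1) := by
        ext q; simp
      conv_lhs => rw [h0]
      rw [Finset.card_filter, Fintype.sum_sum_type, ← Finset.sum_add_distrib]
    have hdecomp : (∑ p : Fin n, f p)
        = f (Sum.elim id id e1) + (f (Sum.elim id id e2) + ∑ p ∈ E2, f p) := by
      rw [← Finset.add_sum_erase univ f (Finset.mem_univ (Sum.elim id id e1)),
        ← Finset.add_sum_erase _ f hp1mem, hE2]
    have hfp0 : f (Sum.elim id id e1) = 1 + (if uin then 1 else 0) := by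
      rcases he1pair with h | h
      · have h1 : Sum.inl (Sum.elim id id e1) ∈ T1 := by rw [h]; exact he1T1
        by_cases h2 : Sum.inr (Sum.elim id id e1) ∈ T1
        · have hu : uin := by rw [huin]; exact ⟨h1, h2⟩
          simp only [hf, if_pos h1, if_pos h2, if_pos hu]
        · have hu : ¬ uin := by rw [huin]; exact fun hc => h2 hc.2
          simp only [hf, if_pos h1, if_neg h2, if_neg hu, add_zero]
      · have h1 : Sum.inr (Sum.elim id id e1) ∈ T1 := by rw [h]; exact he1T1
        by_cases h2 : Sum.inl (Sum.elim id id e1) ∈ T1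
        · have hu : uin := by rw [huin]; exact ⟨h2, h1⟩
          simp only [hf, if_pos h1, if_pos h2, if_pos hu]
        · have hu : ¬ uin := by rw [huin]; exact fun hc => h2 hc.1
          simp only [hf, if_pos h1, if_neg h2, if_neg hu, add_zero, zero_add]
    have hfp1 : f (Sum.elim id id e2) = (if vin then 1 else 0) := by
      rcases he2pair with h | h
      · have h1 : Sum.inl (Sum.elim id id e2) ∉ T1 := by rw [h]; exact he2T1
        by_cases h2 : Sum.inr (Sum.elim id id e2) ∈ T1
        · have hv : vin := by rw [hvin]; exact Or.inr h2
          simp only [hf, if_neg h1, if_pos h2, if_pos hv, zero_add]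
        · have hv : ¬ vin := by rw [hvin]; exact fun hc => hc.elim (fun hx => h1 hx) h2
          simp only [hf, if_neg h1, if_neg h2, add_zero, if_neg hv]
      · have h1 : Sum.inr (Sum.elim id id e2) ∉ T1 := by rw [h]; exact he2T1
        by_cases h2 : Sum.inl (Sum.elim id id e2) ∈ T1
        · have hv : vin := by rw [hvin]; exact Or.inl h2
          simp only [hf, if_neg h1, if_pos h2, if_pos hv, add_zero]
        · have hv : ¬ vin := by rw [hvin]; exact fun hc => hc.elim h2 (fun hx => h1 hx)
          simp only [hf, if_neg h1, if_neg h2, add_zero, if_neg hv]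
    have hsumE2 : (∑ p ∈ E2, f p) = 2 * D0 + S0 := by
      rw [← Finset.sum_filter_add_sum_filter_not E2
        (fun p => Sum.inl p ∈ T1 ∧ Sum.inr p ∈ T1) f]
      have hA : (∑ p ∈ E2.filter (fun p => Sum.inl p ∈ T1 ∧ Sum.inr p ∈ T1), f p)
          = 2 * D0 := by
        have hcongr : (∑ p ∈ E2.filter (fun p => Sum.inl p ∈ T1 ∧ Sum.inr p ∈ T1), f p)
            = ∑ _p ∈ E2.filter (fun p => Sum.inl p ∈ T1 ∧ Sum.inr p ∈ T1), 2 := by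
          apply Finset.sum_congr rfl
          intro p hp
          have hc := (Finset.mem_filter.mp hp).2
          simp only [hf, if_pos hc.1, if_pos hc.2]
        rw [hcongr, Finset.sum_const, smul_eq_mul, hD0, mul_comm]
      have hB : (∑ p ∈ E2.filter (fun p => ¬(Sum.inl p ∈ T1 ∧ Sum.inr p ∈ T1)), f p)
          = S0 := by
        rw [← Finset.sum_filter_add_sum_filter_not
          (E2.filter (fun p => ¬(Sum.inl p ∈ T1 ∧ Sum.inr p ∈ T1)))
          (fun p => Sum.inl p ∈ T1 ∨ Sum.inr p ∈ T1) f, Finset.filter_filter,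
          Finset.filter_filter]
        have hB1 : (∑ p ∈ E2.filter (fun p => ¬(Sum.inl p ∈ T1 ∧ Sum.inr p ∈ T1)
            ∧ (Sum.inl p ∈ T1 ∨ Sum.inr p ∈ T1)), f p) = S0 := by
          have hcongr : (∑ p ∈ E2.filter (fun p => ¬(Sum.inl p ∈ T1 ∧ Sum.inr p ∈ T1)
              ∧ (Sum.inl p ∈ T1 ∨ Sum.inr p ∈ T1)), f p)
              = ∑ _p ∈ E2.filter (fun p => ¬(Sum.inl p ∈ T1 ∧ Sum.inr p ∈ T1)
              ∧ (Sum.inl p ∈ T1 ∨ Sum.inr p ∈ T1)), 1 := by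
            apply Finset.sum_congr rfl
            intro p hp
            have hc := (Finset.mem_filter.mp hp).2
            rcases hc.2 with hl | hr
            · have hr' : Sum.inr p ∉ T1 := fun hx => hc.1 ⟨hl, hx⟩
              simp only [hf, if_pos hl, if_neg hr', add_zero]
            · have hl' : Sum.inl p ∉ T1 := fun hx => hc.1 ⟨hx, hr⟩
              simp only [hf, if_pos hr, if_neg hl', zero_add]
          rw [hcongr, Finset.sum_const, smul_eq_mul, mul_one, hS0]
        have hB2 : (∑ p ∈ E2.filter (fun p => ¬(Sum.inl p ∈ T1 ∧ Sum.inr p ∈ T1)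
            ∧ ¬(Sum.inl p ∈ T1 ∨ Sum.inr p ∈ T1)), f p) = 0 := by
          apply Finset.sum_eq_zero
          intro p hp
          have hc := (Finset.mem_filter.mp hp).2
          have hl : Sum.inl p ∉ T1 := fun hx => hc.2 (Or.inl hx)
          have hr : Sum.inr p ∉ T1 := fun hx => hc.2 (Or.inr hx)
          simp only [hf, if_neg hl, if_neg hr, add_zero]
        rw [hB1, hB2, add_zero]
      rw [hA, hB]
    have ht : t = 1 + (if uin then 1 else 0) + (if vin then 1 else 0) + (2*D0 + S0) := by
      have h1 : t = f (Sum.elim id id e1) + (f (Sum.elim id id e2) + ∑ p ∈ E2, f p) := by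
        rw [← hcard, hsum, hdecomp]
      rw [hfp0, hfp1, hsumE2] at h1
      omega
    obtain ⟨hle1, hle2⟩ := formula_compare uin vin D0 S0 N0 i t ht
    rw [hC1, hC2, hD1eq, hS1eq, hN1eq, hD2eq, hS2eq, hN2eq]
    exact ⟨hle1, hle2⟩

/-- If `1 ≤ i < j < k ≤ n` then `Pr(X^{j−1} > Y^i > X^j) ≥ Pr(X^j > Y^i > X^{j+1})` and
`Pr(X^{j−1} > Y^k > X^j) ≤ Pr(X^j > Y^k > X^{j+1})`. -/
theorem consecutive_gap_monotone
    (n : ℕ) (hn : 1 ≤ n) (a b : Fin n → ℝ)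
    (ha : ∀ i, 0 < a i) (hb : ∀ i, 0 < b i)
    (hdistinct : Function.Injective (Sum.elim a b : Fin n ⊕ Fin n → ℝ))
    (i j k : ℕ) (hi1 : 1 ≤ i) (hij : i < j) (hjk : j < k) (hkn : k ≤ n) :
    Pr (fun σ => XS a b σ j < YS a b σ i ∧ YS a b σ i < XS a b σ (j - 1))
        ≥ Pr (fun σ => XS a b σ (j + 1) < YS a b σ i ∧ YS a b σ i < XS a b σ j) ∧
      Pr (fun σ => XS a b σ j < YS a b σ k ∧ YS a b σ k < XS a b σ (j - 1))
        ≤ Pr (fun σ => XS a b σ (j + 1) < YS a b σ k ∧ YS a b σ k < XS a b σ j) := by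
  classical
  have hV : Function.Injective (Sum.elim a b : Fin n ⊕ Fin n → ℝ) := hdistinct
  obtain ⟨m, hm⟩ : ∃ m, j = m + 1 := ⟨j - 1, by omega⟩
  have hcardI : Fintype.card (Fin n ⊕ Fin n) = n + n := by simp
  obtain ⟨e1, he1⟩ := rkOf_surj hV (m := i + m) (by omega) (by rw [hcardI]; omega)
  obtain ⟨e2, he2⟩ := rkOf_surj hV (m := i + m + 1) (by omega) (by rw [hcardI]; omega)
  obtain ⟨e3, he3⟩ := rkOf_surj hV (m := k + m) (by omega) (by rw [hcardI]; omega)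
  obtain ⟨e4, he4⟩ := rkOf_surj hV (m := k + m + 1) (by omega) (by rw [hcardI]; omega)
  obtain ⟨hcmp1, _⟩ := main_compare hV (i + m) i e1 e2 he1 he2
  obtain ⟨_, hcmp2⟩ := main_compare hV (k + m) k e3 e4 he3 he4
  have hev1 : ∀ σ : Fin n → Bool,
      (XS a b σ j < YS a b σ i ∧ YS a b σ i < XS a b σ (j - 1)) ↔
      (isY σ e1 ∧ (univ.filter fun q =>
        isY σ q ∧ Sum.elim a b e1 ≤ Sum.elim a b q).card = i) := by
    intro σ
    have h := event_char a b hV σ i m (i + m) hi1 (by omega) (by omega) (by omega) rfl e1 he1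
    rw [show j - 1 = m by omega, show j = m + 1 by omega]
    exact h
  have hev2 : ∀ σ : Fin n → Bool,
      (XS a b σ (j + 1) < YS a b σ i ∧ YS a b σ i < XS a b σ j) ↔
      (isY σ e2 ∧ (univ.filter fun q =>
        isY σ q ∧ Sum.elim a b e2 ≤ Sum.elim a b q).card = i) := by
    intro σ
    have h := event_char a b hV σ i (m + 1) (i + m + 1) hi1 (by omega) (by omega) (by omega)
      rfl e2 he2
    rw [show j = m + 1 by omega]
    exact h
  have hev3 : ∀ σ : Fin n → Bool,
      (XS a b σ j < YS a b σ k ∧ YS a b σ k < XS a b σ (j - 1)) ↔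
      (isY σ e3 ∧ (univ.filter fun q =>
        isY σ q ∧ Sum.elim a b e3 ≤ Sum.elim a b q).card = k) := by
    intro σ
    have h := event_char a b hV σ k m (k + m) (by omega) (by omega) (by omega) (by omega)
      rfl e3 he3
    rw [show j - 1 = m by omega, show j = m + 1 by omega]
    exact h
  have hev4 : ∀ σ : Fin n → Bool,
      (XS a b σ (j + 1) < YS a b σ k ∧ YS a b σ k < XS a b σ j) ↔
      (isY σ e4 ∧ (univ.filter fun q =>
        isY σ q ∧ Sum.elim a b e4 ≤ Sum.elim a b q).card = k) := by
    intro σ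
    have h := event_char a b hV σ k (m + 1) (k + m + 1) (by omega) (by omega) (by omega)
      (by omega) rfl e4 he4
    rw [show j = m + 1 by omega]
    exact h
  have hpow : (0:ℝ) < 2 ^ n := by positivity
  constructor
  · rw [ge_iff_le, Pr, Pr]
    have hcards : (univ.filter fun σ : Fin n → Bool =>
        XS a b σ (j + 1) < YS a b σ i ∧ YS a b σ i < XS a b σ j).card
        ≤ (univ.filter fun σ : Fin n → Bool =>
        XS a b σ j < YS a b σ i ∧ YS a b σ i < XS a b σ (j - 1)).card := by
      rw [Finset.filter_congr (fun σ _ => hev2 σ), Finset.filter_congr (fun σ _ => hev1 σ)]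
      exact hcmp1 (by omega)
    refine (div_le_div_iff_of_pos_right hpow).mpr (Nat.cast_le.mpr ?_)
    convert hcards using 3 <;> exact Subsingleton.elim _ _
  · rw [Pr, Pr]
    have hcards : (univ.filter fun σ : Fin n → Bool =>
        XS a b σ j < YS a b σ k ∧ YS a b σ k < XS a b σ (j - 1)).card
        ≤ (univ.filter fun σ : Fin n → Bool =>
        XS a b σ (j + 1) < YS a b σ k ∧ YS a b σ k < XS a b σ j).card := by
      rw [Finset.filter_congr (fun σ _ => hev3 σ), Finset.filter_congr (fun σ _ => hev4 σ)]
      exact hcmp2 (by omega)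
    refine (div_le_div_iff_of_pos_right hpow).mpr (Nat.cast_le.mpr ?_)
    convert hcards using 3 <;> exact Subsingleton.elim _ _
end

section
/- In the pairing model, write F(i, j, k) = Pr(X^i > Y^j > X^k). Let i, j, k be integers with 1 ≤ i < j < k ≤ n. If F(i, j−1, k) > F(i, j, k), then F(i, j, k) > F(i, j+1, k). (Consequently, the map j ↦ F(i, j, k) on [i, k] attains its minimum at an endpoint, i.e., it is unimodal.) -/
open Finset

attribute [local instance] Classical.propDecidable

/-!
Sort the `2n` values and let `N_p` be the number of `X`-values among the `p` largest. Then
`Y^j < X^m` exactly when `m ≤ N_{m+j-1}`, so `2^n F(i, j, k) = Q(i, i+j-1) - Q(k, j+k-1)`, where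
`Q(m, p)` counts the assignments with `N_p ≥ m`. With `D(m, p) = Q(m, p) - Q(m, p-1)` the
hypothesis reads `D(k, j+k-1) > D(i, i+j-1)` and the claim `D(k, j+k) > D(i, i+j)`.

Among the `p - 1` largest values, a pair with both values there adds `1` to `N_{p-1}` and a pair
with one value there adds an independent fair bit. Hence `2 D(m, p) = C(g, m-1-f) 2^(n-g)`, where
`f` pairs are of the first kind and `g` of the second, not counting the pair of the `p`-th value.
Going from `p` to `p + 1` changes `(g, f)` in one of four ways, and Pascal's rule together with the
unimodality of binomial coefficients shows that `D(m, ·)` is nondecreasing up to `2m - 1` and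
nonincreasing from `2m` on. So `D(k, j+k) ≥ D(k, j+k-1) > D(i, i+j-1) ≥ D(i, i+j)`.
-/

theorem card_filter_insert_of_notMem {γ : Type*} [DecidableEq γ] {s : Finset γ} {a : γ}
    (ha : a ∉ s) (p : γ → Prop) [DecidablePred p] :
    #{x ∈ insert a s | p x} = #{x ∈ s | p x} + if p a then 1 else 0 := by
  rw [filter_insert]
  split_ifs
  · exact card_insert_of_notMem fun h => ha (mem_filter.1 h).1
  · rfl

section Rank

variable {α β : Type*} [Fintype α] [LinearOrder β] {v : α → β}

noncomputable def rank (v : α → β) (q : α) : ℕ := #{i | v q ≤ v i}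

theorem rank_le_card_filter_iff {q : α} {x : β} : rank v q ≤ #{i | x ≤ v i} ↔ x ≤ v q := by
  refine ⟨fun h => not_lt.1 fun hlt => h.not_gt (card_lt_card ?_), fun h => card_le_card ?_⟩
  · refine (ssubset_iff_of_subset fun i hi => ?_).2 ⟨q, by simp, by simpa using hlt⟩
    simp only [mem_filter, mem_univ, true_and] at hi ⊢
    exact hlt.le.trans hi
  · intro i hi
    simp only [mem_filter, mem_univ, true_and] at hi ⊢
    exact h.trans hi

theorem rank_le_rank_iff {q q' : α} : rank v q ≤ rank v q' ↔ v q' ≤ v q :=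
  rank_le_card_filter_iff

theorem rank_injective (hv : Function.Injective v) : Function.Injective (rank v) :=
  fun _ _ h => hv (le_antisymm (rank_le_rank_iff.1 h.ge) (rank_le_rank_iff.1 h.le))

theorem exists_rank_eq (hv : Function.Injective v) {m : ℕ} (h1 : 1 ≤ m)
    (h2 : m ≤ Fintype.card α) : ∃ q, rank v q = m := by
  have hsub : univ.image (rank v) ⊆ Icc 1 (Fintype.card α) := by
    simp only [subset_iff, mem_image, mem_univ, true_and, mem_Icc, forall_exists_index,
      forall_apply_eq_imp_iff]
    exact fun q => ⟨card_pos.2 ⟨q, by simp⟩, card_le_univ _⟩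
  have himage := eq_of_subset_of_card_le hsub (by
    rw [card_image_of_injective _ (rank_injective hv), Nat.card_Icc, card_univ]; omega)
  have hm : m ∈ univ.image (rank v) := himage ▸ mem_Icc.2 ⟨h1, h2⟩
  simpa using hm

theorem kthLargest_eq_of_rank_eq {n m : ℕ} {v : Fin n → ℝ} {q : Fin n} (hq : rank v q = m) :
    kthLargest v m = v q := by
  have : {x : ℝ | m ≤ #{i | x ≤ v i}} = Set.Iic (v q) := by
    ext x
    simp [← hq, rank_le_card_filter_iff]
  rw [kthLargest, this, csSup_Iic]

theorem lt_iff_le_card_filter_of_rank_eq {X Y : α → β} {qx qy : α} {m j : ℕ} {t : β}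
    (hx : rank X qx = m) (hy : rank Y qy = j) (h : #{c | t ≤ X c} + #{c | t ≤ Y c} + 1 = m + j) :
    Y qy < X qx ↔ m ≤ #{c | t ≤ X c} := by
  have hX : m ≤ #{c | t ≤ X c} ↔ t ≤ X qx := hx ▸ rank_le_card_filter_iff
  have hY : j ≤ #{c | t ≤ Y c} ↔ t ≤ Y qy := hy ▸ rank_le_card_filter_iff
  constructor
  · intro hlt
    by_contra hle
    exact hlt.not_ge ((not_le.1 (mt hX.2 hle)).le.trans (hY.1 (by omega)))
  · intro hle
    exact (not_le.1 fun hty => (hY.2 hty).not_gt (by omega)).trans_le (hX.1 hle)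

noncomputable def topSlots (v : α → β) (p : ℕ) : Finset α := {u | rank v u ≤ p}

theorem topSlots_mono {p p' : ℕ} (h : p ≤ p') : topSlots v p ⊆ topSlots v p' :=
  fun u hu => by simp only [topSlots, mem_filter, mem_univ, true_and] at hu ⊢; omega

theorem card_topSlots (hv : Function.Injective v) {p : ℕ} (hp : p ≤ Fintype.card α) :
    #(topSlots v p) = p := by
  rcases Nat.eq_zero_or_pos p with rfl | hp0
  · simp only [topSlots, nonpos_iff_eq_zero, card_eq_zero, filter_eq_empty_iff]
    exact fun q _ => (card_pos.2 ⟨q, by simp⟩).ne'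
  obtain ⟨u, hu⟩ := exists_rank_eq hv hp0 hp
  rw [← hu, topSlots]
  congr 1
  ext i
  simp [rank_le_rank_iff]

theorem exists_topSlots_succ [DecidableEq α] (hv : Function.Injective v) {p : ℕ}
    (hp : p + 1 ≤ Fintype.card α) :
    ∃ u ∉ topSlots v p, insert u (topSlots v p) = topSlots v (p + 1) :=
  exists_eq_insert_iff.2 ⟨topSlots_mono (Nat.le_succ p),
    by rw [card_topSlots hv (by omega), card_topSlots hv hp]⟩

theorem exists_topSlots_succ_succ [DecidableEq α] (hv : Function.Injective v) {p : ℕ}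
    (hp : p + 2 ≤ Fintype.card α) :
    ∃ u ∉ topSlots v p, ∃ u' ∉ insert u (topSlots v p),
      topSlots v (p + 1) = insert u (topSlots v p) ∧
        topSlots v (p + 2) = insert u' (insert u (topSlots v p)) := by
  obtain ⟨u, hu, e₁⟩ := exists_topSlots_succ hv (p := p) (by omega)
  obtain ⟨u', hu', e₂⟩ := exists_topSlots_succ hv (p := p + 1) hp
  rw [← e₁] at hu' e₂
  exact ⟨u, hu, u', hu', e₁.symm, e₂.symm⟩

end Rank

section Slots

variable {ι : Type*}

/-- Under `σ`, the slot `(c, β)` holds an `X`-value iff `σ c = β` (compare `Xvals`). -/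
noncomputable def xCount (σ : ι → Bool) (T : Finset (ι × Bool)) : ℕ := #{u ∈ T | σ u.1 = u.2}

theorem xCount_add_xCount_not (σ : ι → Bool) (T : Finset (ι × Bool)) :
    xCount σ T + xCount (fun c => !σ c) T = #T := by
  rw [xCount, xCount, ← card_filter_add_card_filter_not (s := T) (fun u => σ u.1 = u.2)]
  congr 2
  ext ⟨c, β⟩
  cases σ c <;> cases β <;> simp

theorem xCount_mono (σ : ι → Bool) {T T' : Finset (ι × Bool)} (h : T ⊆ T') :
    xCount σ T ≤ xCount σ T' :=
  card_le_card (filter_subset_filter _ h)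

variable [DecidableEq ι]

theorem xCount_le_xCount_add_card_sub (σ : ι → Bool) {T T' : Finset (ι × Bool)} (h : T ⊆ T') :
    xCount σ T' ≤ xCount σ T + (#T' - #T) := by
  rw [xCount, xCount, ← union_sdiff_of_subset h, filter_union,
    card_union_of_disjoint (disjoint_filter_filter disjoint_sdiff_self_right),
    union_sdiff_of_subset h, ← card_sdiff_of_subset h]
  exact Nat.add_le_add_left (card_filter_le _ _) _

theorem xCount_insert (σ : ι → Bool) {T : Finset (ι × Bool)} {u : ι × Bool} (hu : u ∉ T) :
    xCount σ (insert u T) = xCount σ T + if σ u.1 = u.2 then 1 else 0 := by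
  rw [xCount, xCount, card_filter_insert_of_notMem hu]

theorem filter_update_eq_of_notMem {S : Finset ι} {a : ι} (ha : a ∉ S) (σ h : ι → Bool)
    (β : Bool) : {c ∈ S | Function.update σ a β c = h c} = {c ∈ S | σ c = h c} :=
  filter_congr fun c hc => by rw [Function.update_of_ne (ne_of_mem_of_not_mem hc ha)]

variable [Fintype ι]

theorem xCount_eq_card (σ : ι → Bool) (T : Finset (ι × Bool)) :
    xCount σ T = #{c | (c, σ c) ∈ T} := by
  refine card_nbij' Prod.fst (fun c => (c, σ c)) ?_ ?_ ?_ ?_ <;> intro u hu <;>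
    simp only [coe_filter, mem_univ, true_and] at hu
  · simpa [hu.2] using hu.1
  · simpa using hu
  · exact Prod.ext rfl hu.2
  · rfl

noncomputable def fullPairs (T : Finset (ι × Bool)) : Finset ι :=
  {c | (c, true) ∈ T ∧ (c, false) ∈ T}

noncomputable def splitPairs (T : Finset (ι × Bool)) : Finset ι :=
  {c | ((c, true) ∈ T) ≠ ((c, false) ∈ T)}

noncomputable def side (T : Finset (ι × Bool)) (c : ι) : Bool := decide ((c, true) ∈ T)

theorem mem_iff_eq_side {T : Finset (ι × Bool)} {c : ι} (hc : c ∈ splitPairs T) (β : Bool) :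
    (c, β) ∈ T ↔ β = side T c := by
  simp only [splitPairs, mem_filter, mem_univ, true_and] at hc
  cases β <;> by_cases h : (c, true) ∈ T <;> simp_all [side]

theorem xCount_eq_card_fullPairs_add (σ : ι → Bool) (T : Finset (ι × Bool)) :
    xCount σ T = #(fullPairs T) + #{c ∈ splitPairs T | σ c = side T c} := by
  have hsplit : ({c | (c, σ c) ∈ T} : Finset ι) =
      fullPairs T ∪ {c ∈ splitPairs T | σ c = side T c} := by
    ext c
    simp only [fullPairs, splitPairs, side, mem_union, mem_filter, mem_univ, true_and]
    cases hσ : σ c <;> by_cases h₁ : (c, true) ∈ T <;> by_cases h₂ : (c, false) ∈ T <;> simp [*]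
  rw [xCount_eq_card, hsplit, card_union_of_disjoint]
  exact disjoint_left.2 fun c h₁ h₂ => by
    simp only [fullPairs, splitPairs, mem_filter, mem_univ, true_and] at h₁ h₂
    exact h₂.1 (by simp [h₁.1, h₁.2])

theorem two_mul_card_fullPairs_add (T : Finset (ι × Bool)) :
    2 * #(fullPairs T) + #(splitPairs T) = #T := by
  rw [← xCount_add_xCount_not (fun _ => true), xCount_eq_card_fullPairs_add,
    xCount_eq_card_fullPairs_add, ← card_filter_add_card_filter_not (s := splitPairs T)
      (fun c => true = side T c)]
  have hnot : ∀ c, (!true) = side T c ↔ ¬ true = side T c := by intro c; cases side T c <;> simp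
  simp only [hnot]
  ring

theorem splitPairs_insert_of_mem {T : Finset (ι × Bool)} {u : ι × Bool} (hu : u ∉ T)
    (h : u.1 ∈ splitPairs T) :
    splitPairs (insert u T) = (splitPairs T).erase u.1 ∧
      fullPairs (insert u T) = insert u.1 (fullPairs T) := by
  obtain ⟨c₀, β⟩ := u
  have hside := mem_iff_eq_side h
  simp only at hside h hu
  constructor <;> ext c <;> by_cases hc : c = c₀ <;>
    simp_all [splitPairs, fullPairs] <;> cases β <;> simp_all

theorem splitPairs_insert_of_notMem {T : Finset (ι × Bool)} {u : ι × Bool} (hu : u ∉ T)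
    (h : u.1 ∉ splitPairs T) :
    splitPairs (insert u T) = insert u.1 (splitPairs T) ∧
      fullPairs (insert u T) = fullPairs T := by
  obtain ⟨c₀, β⟩ := u
  simp only at h hu
  constructor <;> ext c <;> by_cases hc : c = c₀ <;>
    simp_all [splitPairs, fullPairs] <;> cases β <;> simp_all

end Slots

section Binomial

theorem choose_le_choose_succ {g r : ℕ} (h : 2 * r + 1 ≤ g) : g.choose r ≤ g.choose (r + 1) :=
  Nat.le_of_mul_le_mul_right (c := r + 1) (by
    rw [Nat.choose_succ_right_eq]; exact Nat.mul_le_mul_left _ (by omega)) r.succ_pos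

theorem choose_succ_le_choose {g r : ℕ} (h : g ≤ 2 * r + 1) : g.choose (r + 1) ≤ g.choose r :=
  Nat.le_of_mul_le_mul_right (c := r + 1) (by
    rw [Nat.choose_succ_right_eq]; exact Nat.mul_le_mul_left _ (by omega)) r.succ_pos

/-- `binomCount N g f x` counts the `σ : Fin N → Bool` for which `f` plus the number of
`true`s among `g` fixed coordinates equals `x`. -/
def binomCount (N g f x : ℕ) : ℕ := if f ≤ x then g.choose (x - f) * 2 ^ (N - g) else 0

theorem two_mul_binomCount_succ {N g : ℕ} (f x : ℕ) (h : g + 1 ≤ N) :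
    2 * binomCount N (g + 1) f x = binomCount N g f x + binomCount N g (f + 1) x := by
  have hpow : 2 ^ (N - g) = 2 * 2 ^ (N - (g + 1)) := by rw [← pow_succ']; congr 1; omega
  unfold binomCount
  rcases lt_trichotomy x f with hx | rfl | hx
  · simp [show ¬ f ≤ x by omega, show ¬ f + 1 ≤ x by omega]
  · simp [hpow]
  · obtain ⟨r, rfl⟩ : ∃ r, x = f + (r + 1) := ⟨x - f - 1, by omega⟩
    simp only [show f ≤ f + (r + 1) by omega, show f + 1 ≤ f + (r + 1) by omega, if_true,
      Nat.add_sub_cancel_left, show f + (r + 1) - (f + 1) = r by omega, Nat.choose_succ_succ', hpow]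
    ring

theorem binomCount_succ_le {N g f x : ℕ} (h : 2 * x ≤ 2 * f + g + 1) :
    binomCount N g (f + 1) x ≤ binomCount N g f x := by
  unfold binomCount
  split_ifs with h₁ h₂
  · obtain ⟨r, rfl⟩ : ∃ r, x = f + 1 + r := ⟨x - (f + 1), by omega⟩
    rw [show f + 1 + r - f = r + 1 by omega, Nat.add_sub_cancel_left]
    exact Nat.mul_le_mul_right _ (choose_le_choose_succ (by omega))
  · omega
  · exact Nat.zero_le _
  · exact le_rfl

theorem binomCount_le_succ {N g f x : ℕ} (h : 2 * f + g + 1 ≤ 2 * x) :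
    binomCount N g f x ≤ binomCount N g (f + 1) x := by
  obtain ⟨r, rfl⟩ : ∃ r, x = f + 1 + r := ⟨x - (f + 1), by omega⟩
  simp only [binomCount, show f ≤ f + 1 + r by omega, le_add_iff_nonneg_right, zero_le, if_true,
    show f + 1 + r - f = r + 1 by omega, Nat.add_sub_cancel_left]
  exact Nat.mul_le_mul_right _ (choose_succ_le_choose (by omega))

end Binomial

section Counting

variable {ι : Type*} [Fintype ι] [DecidableEq ι]

theorem two_mul_card_filter_and_eq {E : (ι → Bool) → Prop} [DecidablePred E] (a : ι) (b : Bool)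
    (hE : ∀ σ, E (Function.update σ a (!σ a)) ↔ E σ) :
    2 * #{σ | E σ ∧ σ a = b} = #{σ | E σ} := by
  have hflip : #{σ | E σ ∧ σ a = b} = #{σ | E σ ∧ ¬ σ a = b} := by
    refine card_nbij' (fun σ => Function.update σ a (!σ a)) (fun σ => Function.update σ a (!σ a))
      ?_ ?_ ?_ ?_ <;> intro σ hσ <;> simp only [coe_filter, mem_univ, true_and] at hσ <;>
      simp only [mem_coe, mem_filter, mem_univ, true_and]
    · exact ⟨(hE σ).2 hσ.1, by simp [hσ.2]⟩
    · exact ⟨(hE σ).2 hσ.1, by cases b <;> simpa using hσ.2⟩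
    all_goals simp
  have hsplit := card_filter_add_card_filter_not (s := ({σ | E σ} : Finset _)) (fun σ => σ a = b)
  simp only [filter_filter] at hsplit
  omega

theorem two_mul_card_filter_insert {S : Finset ι} {a : ι} (ha : a ∉ S) (h : ι → Bool)
    (f x : ℕ) :
    2 * #{σ : ι → Bool | f + #{c ∈ insert a S | σ c = h c} = x} =
      #{σ : ι → Bool | f + #{c ∈ S | σ c = h c} = x} +
        #{σ : ι → Bool | f + 1 + #{c ∈ S | σ c = h c} = x} := by
  have hhit : #{σ : ι → Bool | f + #{c ∈ insert a S | σ c = h c} = x ∧ σ a = h a} =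
      #{σ : ι → Bool | f + 1 + #{c ∈ S | σ c = h c} = x ∧ σ a = h a} := by
    congr 1
    refine filter_congr fun σ _ => ?_
    rw [card_filter_insert_of_notMem ha]
    by_cases hσ : σ a = h a <;> simp only [hσ, if_true, and_true, and_false]
    omega
  have hmiss : #{σ : ι → Bool | f + #{c ∈ insert a S | σ c = h c} = x ∧ ¬ σ a = h a} =
      #{σ : ι → Bool | f + #{c ∈ S | σ c = h c} = x ∧ σ a = !h a} := by
    congr 1
    refine filter_congr fun σ _ => ?_
    rw [card_filter_insert_of_notMem ha, Bool.eq_not]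
    by_cases hσ : σ a = h a <;> simp only [hσ, if_false, not_true, not_false_eq_true, and_true,
      and_false, add_zero, ne_eq]
  have hsplit := card_filter_add_card_filter_not (s := {σ : ι → Bool |
    f + #{c ∈ insert a S | σ c = h c} = x}) (fun σ => σ a = h a)
  rw [filter_filter, filter_filter, hhit, hmiss] at hsplit
  have e₁ := two_mul_card_filter_and_eq (E := fun σ => f + 1 + #{c ∈ S | σ c = h c} = x) a (h a)
    fun σ => by rw [filter_update_eq_of_notMem ha]
  have e₂ := two_mul_card_filter_and_eq (E := fun σ => f + #{c ∈ S | σ c = h c} = x) a (!h a)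
    fun σ => by rw [filter_update_eq_of_notMem ha]
  omega

theorem card_filter_add_card_eq_binomCount (S : Finset ι) (h : ι → Bool) (f x : ℕ) :
    #{σ : ι → Bool | f + #{c ∈ S | σ c = h c} = x} = binomCount (Fintype.card ι) #S f x := by
  induction S using Finset.induction_on generalizing f with
  | empty =>
    rcases lt_trichotomy x f with hx | rfl | hx
    · simp [binomCount, hx.ne', show ¬ f ≤ x by omega]
    · simp [binomCount]
    · simp [binomCount, hx.ne, hx.le, Nat.choose_eq_zero_of_lt (Nat.sub_pos_of_lt hx)]
  | insert a S ha ih =>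
    have hcard := two_mul_card_filter_insert ha h f x
    have hpascal := two_mul_binomCount_succ (N := Fintype.card ι) f x (card_lt_univ_of_notMem ha)
    rw [ih, ih] at hcard
    rw [card_insert_of_notMem ha]
    omega

end Counting

section Crossings

variable {ι : Type*} [Fintype ι] [DecidableEq ι]

noncomputable def crossings (m : ℕ) (T T' : Finset (ι × Bool)) : ℕ :=
  #{σ : ι → Bool | xCount σ T < m ∧ m ≤ xCount σ T'}

theorem card_le_xCount_eq_add_crossings (m : ℕ) {T T' : Finset (ι × Bool)} (h : T ⊆ T') :
    #{σ : ι → Bool | m ≤ xCount σ T'} = #{σ : ι → Bool | m ≤ xCount σ T} + crossings m T T' := by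
  rw [crossings, ← card_filter_add_card_filter_not (s := {σ : ι → Bool | m ≤ xCount σ T'})
    (fun σ => m ≤ xCount σ T), filter_filter, filter_filter]
  congr 2 <;> ext σ <;> simp only [mem_filter, mem_univ, true_and, not_le]
  · exact ⟨fun h' => h'.2, fun h' => ⟨h'.trans (xCount_mono σ h), h'⟩⟩
  · exact and_comm

theorem two_mul_crossings_insert {m : ℕ} {T : Finset (ι × Bool)} {u : ι × Bool} (hu : u ∉ T)
    (hm : 1 ≤ m) :
    2 * crossings m T (insert u T) = binomCount (Fintype.card ι) #((splitPairs T).erase u.1)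
      #(fullPairs T) (m - 1) := by
  set O := (splitPairs T).erase u.1
  have hO : ∀ σ : ι → Bool, σ u.1 = u.2 →
      #{c ∈ splitPairs T | σ c = side T c} = #{c ∈ O | σ c = side T c} := by
    intro σ hσ
    rw [filter_erase, erase_eq_of_notMem]
    simp only [mem_filter, not_and]
    intro hsplit hside
    exact hu ((mem_iff_eq_side hsplit _).2 (hσ.symm.trans hside))
  have hevent : crossings m T (insert u T) =
      #{σ : ι → Bool | #(fullPairs T) + #{c ∈ O | σ c = side T c} = m - 1 ∧ σ u.1 = u.2} := by
    rw [crossings]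
    congr 1
    refine filter_congr fun σ _ => ?_
    rw [xCount_insert σ hu, xCount_eq_card_fullPairs_add]
    by_cases hσ : σ u.1 = u.2
    · simp only [hσ, if_true, and_true, hO σ hσ]
      omega
    · simp only [hσ, if_false, and_false, add_zero]
      exact iff_of_false (fun h => by omega) id
  rw [hevent, two_mul_card_filter_and_eq u.1 u.2, ← card_filter_add_card_eq_binomCount]
  exact fun σ => by rw [filter_update_eq_of_notMem (notMem_erase u.1 _)]

/-- The four cases record whether `u`, resp. `u'`, completes a pair split by the slots before it. -/
theorem two_mul_crossings_insert_insert {m : ℕ} {T : Finset (ι × Bool)} {u u' : ι × Bool}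
    (hu : u ∉ T) (hu' : u' ∉ insert u T) (hm : 1 ≤ m) :
    ∃ g f, g + 1 ≤ Fintype.card ι ∧
      let D := 2 * crossings m T (insert u T)
      let D' := 2 * crossings m (insert u T) (insert u' (insert u T))
      let B := binomCount (Fintype.card ι)
      (D = B g f (m - 1) ∧ D' = B (g + 1) f (m - 1) ∧ 2 * f + g = #T) ∨
      (D = B g f (m - 1) ∧ D' = B g f (m - 1)) ∨
      (D = B g f (m - 1) ∧ D' = B g (f + 1) (m - 1) ∧ 2 * f + g + 1 = #T) ∨
      (D = B (g + 1) f (m - 1) ∧ D' = B g (f + 1) (m - 1) ∧ 2 * f + g + 2 = #T) := by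
  have h₁ := two_mul_crossings_insert hu hm
  have h₂ := two_mul_crossings_insert hu' hm
  have hpar := two_mul_card_fullPairs_add T
  have hN := card_lt_univ_of_notMem (notMem_erase u.1 (splitPairs T))
  have hN' := card_lt_univ_of_notMem (notMem_erase u'.1 (splitPairs (insert u T)))
  by_cases hc : u.1 ∈ splitPairs T
  · have hfull : u.1 ∉ fullPairs T := fun h => hu (by
      obtain ⟨c, β⟩ := u
      cases β <;> simp_all [fullPairs])
    obtain ⟨hs, hf⟩ := splitPairs_insert_of_mem hu hc
    rw [hs, hf, card_insert_of_notMem hfull] at h₂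
    rw [hs] at hN'
    have hcard := card_erase_add_one hc
    by_cases hc' : u'.1 ∈ (splitPairs T).erase u.1
    · obtain ⟨g, hg⟩ : ∃ g, #((splitPairs T).erase u.1) = g + 1 :=
        ⟨_, (Nat.succ_pred_eq_of_pos (card_pos.2 ⟨_, hc'⟩)).symm⟩
      rw [card_erase_of_mem hc', hg, Nat.add_sub_cancel] at h₂
      rw [hg] at h₁
      exact ⟨g, _, by omega, .inr <| .inr <| .inr ⟨h₁, h₂, by omega⟩⟩
    · rw [erase_eq_of_notMem hc'] at h₂
      exact ⟨_, _, hN, .inr <| .inr <| .inl ⟨h₁, h₂, by omega⟩⟩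
  · obtain ⟨hs, hf⟩ := splitPairs_insert_of_notMem hu hc
    rw [hs, hf] at h₂
    rw [erase_eq_of_notMem hc] at h₁ hN
    by_cases hc' : u'.1 ∈ insert u.1 (splitPairs T)
    · rw [card_erase_of_mem hc', card_insert_of_notMem hc, Nat.add_sub_cancel] at h₂
      exact ⟨_, _, hN, .inr <| .inl ⟨h₁, h₂⟩⟩
    · rw [erase_eq_of_notMem hc', card_insert_of_notMem hc] at h₂
      exact ⟨_, _, hN, .inl ⟨h₁, h₂, by omega⟩⟩

theorem crossings_insert_insert_le {m : ℕ} {T : Finset (ι × Bool)} {u u' : ι × Bool}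
    (hu : u ∉ T) (hu' : u' ∉ insert u T) (hm : 1 ≤ m) (h : 2 * m ≤ #T + 1) :
    crossings m (insert u T) (insert u' (insert u T)) ≤ crossings m T (insert u T) := by
  obtain ⟨g, f, hg, hcases⟩ := two_mul_crossings_insert_insert hu hu' hm
  have hpascal := two_mul_binomCount_succ f (m - 1) hg
  rcases hcases with ⟨h₁, h₂, hT⟩ | ⟨h₁, h₂⟩ | ⟨h₁, h₂, hT⟩ | ⟨h₁, h₂, hT⟩
  · have := binomCount_succ_le (N := Fintype.card ι) (g := g) (f := f) (x := m - 1) (by omega)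
    omega
  · omega
  · have := binomCount_succ_le (N := Fintype.card ι) (g := g) (f := f) (x := m - 1) (by omega)
    omega
  · have := binomCount_succ_le (N := Fintype.card ι) (g := g) (f := f) (x := m - 1) (by omega)
    omega

theorem crossings_le_crossings_insert_insert {m : ℕ} {T : Finset (ι × Bool)} {u u' : ι × Bool}
    (hu : u ∉ T) (hu' : u' ∉ insert u T) (h : #T + 3 ≤ 2 * m) :
    crossings m T (insert u T) ≤ crossings m (insert u T) (insert u' (insert u T)) := by
  obtain ⟨g, f, hg, hcases⟩ := two_mul_crossings_insert_insert (m := m) hu hu' (by omega)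
  have hpascal := two_mul_binomCount_succ f (m - 1) hg
  rcases hcases with ⟨h₁, h₂, hT⟩ | ⟨h₁, h₂⟩ | ⟨h₁, h₂, hT⟩ | ⟨h₁, h₂, hT⟩
  · have := binomCount_le_succ (N := Fintype.card ι) (g := g) (f := f) (x := m - 1) (by omega)
    omega
  · omega
  · have := binomCount_le_succ (N := Fintype.card ι) (g := g) (f := f) (x := m - 1) (by omega)
    omega
  · have := binomCount_le_succ (N := Fintype.card ι) (g := g) (f := f) (x := m - 1) (by omega)
    omega

end Crossings

section Chain

variable {ι β : Type*} [Fintype ι] [DecidableEq ι] [LinearOrder β] {v : ι × Bool → β}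

theorem crossings_topSlots_succ_le (hv : Function.Injective v) {m p : ℕ} (hm : 1 ≤ m)
    (h : 2 * m ≤ p + 1) (hp : p + 2 ≤ 2 * Fintype.card ι) :
    crossings m (topSlots v (p + 1)) (topSlots v (p + 2)) ≤
      crossings m (topSlots v p) (topSlots v (p + 1)) := by
  obtain ⟨u, hu, u', hu', e₁, e₂⟩ := exists_topSlots_succ_succ hv (p := p) (by simp; omega)
  have hT : #(topSlots v p) = p := card_topSlots hv (by simp; omega)
  rw [e₁, e₂]
  exact crossings_insert_insert_le hu hu' hm (by omega)

theorem crossings_topSlots_le_succ (hv : Function.Injective v) {m p : ℕ}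
    (h : p + 3 ≤ 2 * m) (hp : p + 2 ≤ 2 * Fintype.card ι) :
    crossings m (topSlots v p) (topSlots v (p + 1)) ≤
      crossings m (topSlots v (p + 1)) (topSlots v (p + 2)) := by
  obtain ⟨u, hu, u', hu', e₁, e₂⟩ := exists_topSlots_succ_succ hv (p := p) (by simp; omega)
  have hT : #(topSlots v p) = p := card_topSlots hv (by simp; omega)
  rw [e₁, e₂]
  exact crossings_le_crossings_insert_insert hu hu' (by omega)

end Chain

section Model

variable {n : ℕ} {a b : Fin n → ℝ}

def slotValue (a b : Fin n → ℝ) (u : Fin n × Bool) : ℝ := if u.2 then a u.1 else b u.1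

theorem slotValue_injective (hw : Function.Injective (Sum.elim a b)) :
    Function.Injective (slotValue a b) := by
  intro u u' h
  have hsum : ∀ w : Fin n × Bool,
      slotValue a b w = Sum.elim a b (if w.2 then .inl w.1 else .inr w.1) := by
    rintro ⟨c, _ | _⟩ <;> rfl
  rw [hsum, hsum] at h
  obtain ⟨c, _ | _⟩ := u <;> obtain ⟨c', _ | _⟩ := u' <;> simpa using hw h

theorem Xvals_injective (hw : Function.Injective (Sum.elim a b)) (σ : Fin n → Bool) :
    Function.Injective (Xvals a b σ) :=
  fun c c' h => congrArg Prod.fst (slotValue_injective hw (a₁ := (c, σ c)) (a₂ := (c', σ c')) h)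

theorem Yvals_eq_Xvals_not (σ : Fin n → Bool) : Yvals a b σ = Xvals a b (fun c => !σ c) := by
  funext c
  by_cases h : σ c = true <;> simp [Xvals, Yvals, h]

theorem YS_lt_XS_iff_s8 (hw : Function.Injective (Sum.elim a b)) (σ : Fin n → Bool) {m j s : ℕ}
    (hm : 1 ≤ m) (hmn : m ≤ n) (hj : 1 ≤ j) (hjn : j ≤ n) (hs : m + j = s + 1) :
    YS a b σ j < XS a b σ m ↔ m ≤ xCount σ (topSlots (slotValue a b) s) := by
  obtain ⟨qx, hqx⟩ := exists_rank_eq (Xvals_injective hw σ) hm (by simpa using hmn)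
  obtain ⟨qy, hqy⟩ := exists_rank_eq (Xvals_injective hw (fun c => !σ c)) hj (by simpa using hjn)
  obtain ⟨u, hu⟩ := exists_rank_eq (slotValue_injective hw) (m := s) (by omega) (by simp; omega)
  have hcount : ∀ τ,
      xCount τ (topSlots (slotValue a b) s) = #{c | slotValue a b u ≤ Xvals a b τ c} := by
    intro τ
    rw [xCount_eq_card]
    congr 1
    ext c
    simp only [topSlots, mem_filter, mem_univ, true_and, ← hu, rank_le_rank_iff]
    rfl
  have hsum := xCount_add_xCount_not σ (topSlots (slotValue a b) s)
  rw [card_topSlots (slotValue_injective hw) (by simp; omega), hcount, hcount] at hsum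
  rw [XS, YS, Yvals_eq_Xvals_not, kthLargest_eq_of_rank_eq hqx, kthLargest_eq_of_rank_eq hqy,
    hcount]
  exact lt_iff_le_card_filter_of_rank_eq hqx hqy (by omega)

theorem XS_lt_YS_iff_s8 (hw : Function.Injective (Sum.elim a b)) (σ : Fin n → Bool) {m j s : ℕ}
    (hm : 1 ≤ m) (hmn : m ≤ n) (hj : 1 ≤ j) (hjn : j ≤ n) (hs : m + j = s + 1) :
    XS a b σ m < YS a b σ j ↔ xCount σ (topSlots (slotValue a b) s) < m := by
  have hX : XS a b σ m = YS a b (fun c => !σ c) m := by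
    simp only [XS, YS, Yvals_eq_Xvals_not, Bool.not_not]
  have hY : YS a b σ j = XS a b (fun c => !σ c) j := by rw [YS, XS, Yvals_eq_Xvals_not]
  have hsum := xCount_add_xCount_not σ (topSlots (slotValue a b) s)
  rw [card_topSlots (slotValue_injective hw) (by simp; omega)] at hsum
  rw [hX, hY, YS_lt_XS_iff_s8 (s := s) hw _ hj hjn hm hmn (by omega)]
  omega

theorem card_XS_lt_YS_lt_XS_add_card (hw : Function.Injective (Sum.elim a b)) {i j k s t : ℕ}
    (hi : 1 ≤ i) (hik : i < k) (hkn : k ≤ n) (hj : 1 ≤ j) (hjn : j ≤ n)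
    (hs : i + j = s + 1) (ht : j + k = t + 1) :
    #{σ | XS a b σ k < YS a b σ j ∧ YS a b σ j < XS a b σ i} +
        #{σ | k ≤ xCount σ (topSlots (slotValue a b) t)} =
      #{σ | i ≤ xCount σ (topSlots (slotValue a b) s)} := by
  have hbound : ∀ σ, xCount σ (topSlots (slotValue a b) t) ≤
      xCount σ (topSlots (slotValue a b) s) + (k - i) := by
    intro σ
    have hsub := topSlots_mono (v := slotValue a b) (show s ≤ t by omega)
    have := xCount_le_xCount_add_card_sub σ hsub
    rwa [card_topSlots (slotValue_injective hw) (by simp; omega),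
      card_topSlots (slotValue_injective hw) (by simp; omega), show t - s = k - i by omega] at this
  rw [← card_filter_add_card_filter_not (s := {σ | i ≤ xCount σ (topSlots (slotValue a b) s)})
    (fun σ => xCount σ (topSlots (slotValue a b) t) < k), filter_filter, filter_filter]
  congr 2 <;> ext σ <;> simp only [mem_filter, mem_univ, true_and]
  · rw [XS_lt_YS_iff_s8 (s := t) hw σ (by omega) hkn hj hjn (by omega),
      YS_lt_XS_iff_s8 hw σ hi (by omega) hj hjn hs, and_comm]
  · have := hbound σ
    omega

theorem card_XS_lt_YS_lt_XS_add_crossings (hw : Function.Injective (Sum.elim a b))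
    {i j k s t : ℕ} (hi : 1 ≤ i) (hij : i ≤ j) (hjk : j < k) (hkn : k ≤ n)
    (hs : i + j = s + 1) (ht : j + k = t + 1) :
    #{σ | XS a b σ k < YS a b σ j ∧ YS a b σ j < XS a b σ i} +
        crossings i (topSlots (slotValue a b) s) (topSlots (slotValue a b) (s + 1)) =
      #{σ | XS a b σ k < YS a b σ (j + 1) ∧ YS a b σ (j + 1) < XS a b σ i} +
        crossings k (topSlots (slotValue a b) t) (topSlots (slotValue a b) (t + 1)) := by
  have e₀ := card_XS_lt_YS_lt_XS_add_card hw hi (by omega) hkn (by omega) (by omega) hs ht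
  have e₁ := card_XS_lt_YS_lt_XS_add_card hw (j := j + 1) (s := s + 1) (t := t + 1) hi
    (by omega) hkn (by omega) (by omega) (by omega) (by omega)
  have hQi := card_le_xCount_eq_add_crossings i
    (topSlots_mono (v := slotValue a b) (Nat.le_add_right s 1))
  have hQk := card_le_xCount_eq_add_crossings k
    (topSlots_mono (v := slotValue a b) (Nat.le_add_right t 1))
  omega

end Model

theorem F_unimodal_step_general
    (n : ℕ) (a b : Fin n → ℝ)
    (hdistinct : Function.Injective (Sum.elim a b : Fin n ⊕ Fin n → ℝ))
    (i j k : ℕ) (hi1 : 1 ≤ i) (hij : i < j) (hjk : j < k) (hkn : k ≤ n)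
    (F : ℕ → ℕ → ℕ → ℝ)
    (hF : ∀ i' j' k', F i' j' k' =
      Pr (fun σ => XS a b σ k' < YS a b σ j' ∧ YS a b σ j' < XS a b σ i'))
    (hstep : F i (j - 1) k > F i j k) :
    F i j k > F i (j + 1) k := by
  have hF' : ∀ j', F i j' k =
      #{σ | XS a b σ k < YS a b σ j' ∧ YS a b σ j' < XS a b σ i} / (2 : ℝ) ^ n := fun j' => by
    rw [hF, Pr, filter_congr_decidable]
  obtain ⟨j, rfl⟩ : ∃ j₀, j = j₀ + 1 := ⟨j - 1, by omega⟩
  simp only [hF', gt_iff_lt, div_lt_div_iff_of_pos_right (by positivity : (0 : ℝ) < 2 ^ n),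
    Nat.cast_lt, Nat.add_sub_cancel] at hstep ⊢
  set p := i + j - 1
  set q := j + k - 1
  have hw := slotValue_injective hdistinct
  have d₀ := card_XS_lt_YS_lt_XS_add_crossings hdistinct (j := j) (s := p) (t := q) hi1
    (by omega) (by omega) hkn (by omega) (by omega)
  have d₁ := card_XS_lt_YS_lt_XS_add_crossings hdistinct (j := j + 1) (s := p + 1) (t := q + 1)
    hi1 (by omega) (by omega) hkn (by omega) (by omega)
  rw [show p + 1 + 1 = p + 2 from rfl, show q + 1 + 1 = q + 2 from rfl] at d₁
  have hi := crossings_topSlots_succ_le hw (m := i) (p := p) hi1 (by omega) (by simp; omega)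
  have hk := crossings_topSlots_le_succ hw (m := k) (p := q) (by omega) (by simp; omega)
  omega

/-- Writing `F(i, j, k) = Pr(X^i > Y^j > X^k)`: for `1 ≤ i < j < k ≤ n`, if
`F(i, j−1, k) > F(i, j, k)` then `F(i, j, k) > F(i, j+1, k)`. -/
theorem F_unimodal_step
    (n : ℕ) (hn : 1 ≤ n) (a b : Fin n → ℝ)
    (ha : ∀ i, 0 < a i) (hb : ∀ i, 0 < b i)
    (hdistinct : Function.Injective (Sum.elim a b : Fin n ⊕ Fin n → ℝ))
    (i j k : ℕ) (hi1 : 1 ≤ i) (hij : i < j) (hjk : j < k) (hkn : k ≤ n)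
    (F : ℕ → ℕ → ℕ → ℝ)
    (hF : ∀ i' j' k', F i' j' k' =
      Pr (fun σ => XS a b σ k' < YS a b σ j' ∧ YS a b σ j' < XS a b σ i'))
    (hstep : F i (j - 1) k > F i j k) :
    F i j k > F i (j + 1) k :=
  F_unimodal_step_general n a b hdistinct i j k hi1 hij hjk hkn F hF hstep
end

section
/- In the pairing model, let i, k be integers with 1 ≤ i ≤ k ≤ n. Then Pr(X^i > Y^k > X^k) = Pr(X^i > Y^i > X^k). -/
open Finset

attribute [local instance] Classical.propDecidable

lemma kth_set_bddAbove {n : ℕ} (v : Fin n → ℝ) {m : ℕ} (hn : 0 < n) (hm1 : 1 ≤ m) :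
    BddAbove {x : ℝ | m ≤ (Finset.univ.filter (fun i => x ≤ v i)).card} := by
  haveI : Nonempty (Fin n) := ⟨⟨0, hn⟩⟩
  refine ⟨(univ.image v).max' (univ_nonempty.image v), ?_⟩
  intro x hx
  have hx' : m ≤ (univ.filter (fun i => x ≤ v i)).card := hx
  have hcard : 0 < (univ.filter (fun i => x ≤ v i)).card := lt_of_lt_of_le hm1 hx'
  obtain ⟨j, hj⟩ := Finset.card_pos.mp hcard
  have hxj := (Finset.mem_filter.mp hj).2
  exact le_trans hxj (Finset.le_max' _ _ (mem_image_of_mem v (mem_univ j)))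

lemma min'_mem_kth_set {n : ℕ} (v : Fin n → ℝ) {m : ℕ} (hn : 0 < n) (hmn : m ≤ n)
    (hne : (univ.image v).Nonempty) :
    (univ.image v).min' hne ∈ {x : ℝ | m ≤ (Finset.univ.filter (fun i => x ≤ v i)).card} := by
  have h : univ.filter (fun i => (univ.image v).min' hne ≤ v i) = univ := by
    apply Finset.filter_true_of_mem
    intro j _
    exact Finset.min'_le _ _ (mem_image_of_mem v (mem_univ j))
  show m ≤ _
  rw [h, Finset.card_univ, Fintype.card_fin]
  exact hmn

lemma kth_set_nonempty {n : ℕ} (v : Fin n → ℝ) {m : ℕ} (hn : 0 < n) (hmn : m ≤ n) :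
    Set.Nonempty {x : ℝ | m ≤ (Finset.univ.filter (fun i => x ≤ v i)).card} := by
  haveI : Nonempty (Fin n) := ⟨⟨0, hn⟩⟩
  exact ⟨_, min'_mem_kth_set v hn hmn (univ_nonempty.image v)⟩

lemma kthLargest_anti_s9 {n : ℕ} (v : Fin n → ℝ) {m m' : ℕ} (hm1 : 1 ≤ m) (hmm' : m ≤ m')
    (hm'n : m' ≤ n) : kthLargest v m' ≤ kthLargest v m := by
  have hn : 0 < n := lt_of_lt_of_le (lt_of_lt_of_le hm1 hmm') hm'n
  apply csSup_le_csSup (kth_set_bddAbove v hn hm1) (kth_set_nonempty v hn hm'n)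
  intro x hx
  exact le_trans hmm' hx

lemma kthLargest_mem {n : ℕ} (v : Fin n → ℝ) {m : ℕ} (hm1 : 1 ≤ m) (hmn : m ≤ n) :
    ∃ j, kthLargest v m = v j := by
  have hn : 0 < n := lt_of_lt_of_le hm1 hmn
  haveI : Nonempty (Fin n) := ⟨⟨0, hn⟩⟩
  set S := {x : ℝ | m ≤ (univ.filter (fun i => x ≤ v i)).card} with hSdef
  have hMne : (univ.image v).Nonempty := univ_nonempty.image v
  set F := (univ.image v).filter (fun y => y ∈ S) with hFdef
  have hFne : F.Nonempty := by
    refine ⟨(univ.image v).min' hMne, ?_⟩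
    exact Finset.mem_filter.mpr ⟨Finset.min'_mem _ _, min'_mem_kth_set v hn hmn hMne⟩
  have hub : ∀ x ∈ S, x ≤ F.max' hFne := by
    intro x hx
    have hxcard : m ≤ (univ.filter (fun i => x ≤ v i)).card := hx
    have hGfne : (univ.filter (fun i => x ≤ v i)).Nonempty := by
      rw [← Finset.card_pos]; omega
    have hGne : ((univ.filter (fun i => x ≤ v i)).image v).Nonempty := hGfne.image v
    set y := ((univ.filter (fun i => x ≤ v i)).image v).min' hGne with hy
    obtain ⟨i0, hi0, hvi0⟩ := Finset.mem_image.mp (Finset.min'_mem _ hGne)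
    have hxy : x ≤ y := by
      rw [hy, ← hvi0]; exact (Finset.mem_filter.mp hi0).2
    have hsub : univ.filter (fun i => x ≤ v i) ⊆ univ.filter (fun i => y ≤ v i) := by
      intro j hj
      simp only [Finset.mem_filter, Finset.mem_univ, true_and] at hj ⊢
      exact Finset.min'_le _ _ (Finset.mem_image_of_mem v
        (Finset.mem_filter.mpr ⟨mem_univ j, hj⟩))
    have hyS : y ∈ S := le_trans hxcard (Finset.card_le_card hsub)
    have hyF : y ∈ F := Finset.mem_filter.mpr
      ⟨Finset.mem_image.mpr ⟨i0, mem_univ i0, hvi0⟩, hyS⟩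
    exact le_trans hxy (Finset.le_max' F y hyF)
  have hmaxF := Finset.max'_mem F hFne
  have hmaxS : F.max' hFne ∈ S := (Finset.mem_filter.mp hmaxF).2
  have hkey : kthLargest v m = F.max' hFne := by
    show sSup S = F.max' hFne
    apply le_antisymm
    · exact csSup_le (kth_set_nonempty v hn hmn) hub
    · exact le_csSup ⟨F.max' hFne, hub⟩ hmaxS
  obtain ⟨j, _, hj⟩ := Finset.mem_image.mp (Finset.mem_filter.mp hmaxF).1
  exact ⟨j, by rw [hkey, ← hj]⟩

lemma XS_neg {n : ℕ} (a b : Fin n → ℝ) (σ : Fin n → Bool) (m : ℕ) :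
    XS a b (fun i => !(σ i)) m = YS a b σ m := by
  unfold XS YS
  congr 1
  funext j
  cases h : σ j <;> simp [Xvals, Yvals, h]

lemma YS_neg {n : ℕ} (a b : Fin n → ℝ) (σ : Fin n → Bool) (m : ℕ) :
    YS a b (fun i => !(σ i)) m = XS a b σ m := by
  unfold XS YS
  congr 1
  funext j
  cases h : σ j <;> simp [Xvals, Yvals, h]

lemma card_neg {n : ℕ} (E : (Fin n → Bool) → Prop) :
    (univ.filter E).card = (univ.filter (fun σ : Fin n → Bool => E (fun i => !(σ i)))).card := by
  apply Finset.card_bij' (fun (σ : Fin n → Bool) _ => fun i => !(σ i)) (fun (σ : Fin n → Bool) _ => fun i => !(σ i))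
  · intro σ hσ
    simp only [Finset.mem_filter, Finset.mem_univ, true_and] at hσ ⊢
    simpa using hσ
  · intro σ hσ
    simp only [Finset.mem_filter, Finset.mem_univ, true_and] at hσ ⊢
    exact hσ
  · intro σ _; funext j; simp
  · intro σ _; funext j; simp

lemma XS_ne_YS_s9 {n : ℕ} (a b : Fin n → ℝ)
    (hdistinct : Function.Injective (Sum.elim a b : Fin n ⊕ Fin n → ℝ))
    (σ : Fin n → Bool) {m m' : ℕ} (hm1 : 1 ≤ m) (hmn : m ≤ n) (hm'1 : 1 ≤ m') (hm'n : m' ≤ n) :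
    XS a b σ m ≠ YS a b σ m' := by
  obtain ⟨j, hj⟩ := kthLargest_mem (Xvals a b σ) hm1 hmn
  obtain ⟨j', hj'⟩ := kthLargest_mem (Yvals a b σ) hm'1 hm'n
  rw [XS, YS, hj, hj']
  intro h
  unfold Xvals Yvals at h
  cases hσj : σ j <;> cases hσj' : σ j' <;> rw [hσj, hσj'] at h <;> simp only [if_true, if_false, Bool.false_eq_true, ite_true, ite_false] at h
  · -- b j = a j'
    have := hdistinct (a₁ := Sum.inr j) (a₂ := Sum.inl j') h
    simp at this
  · -- b j = b j'
    have := hdistinct (a₁ := Sum.inr j) (a₂ := Sum.inr j') h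
    simp at this
    subst this
    simp [hσj] at hσj'
  · have := hdistinct (a₁ := Sum.inl j) (a₂ := Sum.inl j') h
    simp at this
    subst this
    simp [hσj] at hσj'
  · have := hdistinct (a₁ := Sum.inl j) (a₂ := Sum.inr j') h
    simp at this


/-- If `1 ≤ i ≤ k ≤ n` then `Pr(X^i > Y^k > X^k) = Pr(X^i > Y^i > X^k)`. -/
theorem endpoint_equality
    (n : ℕ) (hn : 1 ≤ n) (a b : Fin n → ℝ)
    (ha : ∀ i, 0 < a i) (hb : ∀ i, 0 < b i)
    (hdistinct : Function.Injective (Sum.elim a b : Fin n ⊕ Fin n → ℝ))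
    (i k : ℕ) (hi1 : 1 ≤ i) (hik : i ≤ k) (hkn : k ≤ n) :
    Pr (fun σ => XS a b σ k < YS a b σ k ∧ YS a b σ k < XS a b σ i)
      = Pr (fun σ => XS a b σ k < YS a b σ i ∧ YS a b σ i < XS a b σ i) := by
  have hk1 : 1 ≤ k := le_trans hi1 hik
  have hin : i ≤ n := le_trans hik hkn
  have hlt_iff : ∀ x y : ℝ, x ≠ y → (x < y ↔ ¬ (y < x)) := fun x y hxy =>
    ⟨fun h => not_lt.mpr h.le, fun h => lt_of_le_of_ne (not_lt.mp h) hxy⟩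
  have hXanti : ∀ σ, XS a b σ k ≤ XS a b σ i :=
    fun σ => kthLargest_anti_s9 (Xvals a b σ) hi1 hik hkn
  have hcard_univ : (univ : Finset (Fin n → Bool)).card = 2 ^ n := by
    simp [Finset.card_univ]
  have hpart : ∀ (f g : (Fin n → Bool) → ℝ), (∀ σ, f σ ≠ g σ) →
      (univ.filter (fun σ => f σ < g σ)).card + (univ.filter (fun σ => g σ < f σ)).card
        = 2 ^ n := by
    intro f g hfg
    have hcompl : (univ.filter (fun σ => g σ < f σ)) = (univ.filter (fun σ => f σ < g σ))ᶜ := by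
      ext σ
      simp only [Finset.mem_filter, Finset.mem_compl, Finset.mem_univ, true_and, not_and]
      exact hlt_iff (g σ) (f σ) (Ne.symm (hfg σ))
    rw [hcompl, Finset.card_add_card_compl]
    simp
  -- notation for cards
  have hQP : (univ.filter (fun σ : Fin n → Bool => YS a b σ k < XS a b σ k))
      ⊆ (univ.filter (fun σ : Fin n → Bool => YS a b σ k < XS a b σ i)) := by
    intro σ hσ
    simp only [Finset.mem_filter, Finset.mem_univ, true_and] at hσ ⊢
    exact lt_of_lt_of_le hσ (hXanti σ)
  have hSR : (univ.filter (fun σ : Fin n → Bool => YS a b σ i < XS a b σ k))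
      ⊆ (univ.filter (fun σ : Fin n → Bool => YS a b σ i < XS a b σ i)) := by
    intro σ hσ
    simp only [Finset.mem_filter, Finset.mem_univ, true_and] at hσ ⊢
    exact lt_of_lt_of_le hσ (hXanti σ)
  have hA : (univ.filter (fun σ : Fin n → Bool =>
        XS a b σ k < YS a b σ k ∧ YS a b σ k < XS a b σ i))
      = (univ.filter (fun σ : Fin n → Bool => YS a b σ k < XS a b σ i))
        \ (univ.filter (fun σ : Fin n → Bool => YS a b σ k < XS a b σ k)) := by
    ext σ
    simp only [Finset.mem_filter, Finset.mem_sdiff, Finset.mem_univ, true_and]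
    constructor
    · rintro ⟨h1, h2⟩
      exact ⟨h2, not_lt.mpr h1.le⟩
    · rintro ⟨h2, h1⟩
      exact ⟨(hlt_iff _ _ (XS_ne_YS_s9 a b hdistinct σ hk1 hkn hk1 hkn)).mpr h1, h2⟩
  have hB : (univ.filter (fun σ : Fin n → Bool =>
        XS a b σ k < YS a b σ i ∧ YS a b σ i < XS a b σ i))
      = (univ.filter (fun σ : Fin n → Bool => YS a b σ i < XS a b σ i))
        \ (univ.filter (fun σ : Fin n → Bool => YS a b σ i < XS a b σ k)) := by
    ext σ
    simp only [Finset.mem_filter, Finset.mem_sdiff, Finset.mem_univ, true_and]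
    constructor
    · rintro ⟨h1, h2⟩
      exact ⟨h2, not_lt.mpr h1.le⟩
    · rintro ⟨h2, h1⟩
      exact ⟨(hlt_iff _ _ (XS_ne_YS_s9 a b hdistinct σ hk1 hkn hi1 hin)).mpr h1, h2⟩
  have cardA : (univ.filter (fun σ : Fin n → Bool =>
        XS a b σ k < YS a b σ k ∧ YS a b σ k < XS a b σ i)).card
      = (univ.filter (fun σ : Fin n → Bool => YS a b σ k < XS a b σ i)).card
        - (univ.filter (fun σ : Fin n → Bool => YS a b σ k < XS a b σ k)).card := by
    rw [hA, Finset.card_sdiff_of_subset hQP]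
  have cardB : (univ.filter (fun σ : Fin n → Bool =>
        XS a b σ k < YS a b σ i ∧ YS a b σ i < XS a b σ i)).card
      = (univ.filter (fun σ : Fin n → Bool => YS a b σ i < XS a b σ i)).card
        - (univ.filter (fun σ : Fin n → Bool => YS a b σ i < XS a b σ k)).card := by
    rw [hB, Finset.card_sdiff_of_subset hSR]
  have hswapQ : (univ.filter (fun σ : Fin n → Bool => XS a b σ k < YS a b σ k)).card
      = (univ.filter (fun σ : Fin n → Bool => YS a b σ k < XS a b σ k)).card := by
    rw [card_neg (fun σ => XS a b σ k < YS a b σ k)]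
    simp only [XS_neg, YS_neg]
  have hswapR : (univ.filter (fun σ : Fin n → Bool => XS a b σ i < YS a b σ i)).card
      = (univ.filter (fun σ : Fin n → Bool => YS a b σ i < XS a b σ i)).card := by
    rw [card_neg (fun σ => XS a b σ i < YS a b σ i)]
    simp only [XS_neg, YS_neg]
  have hswapS : (univ.filter (fun σ : Fin n → Bool => XS a b σ i < YS a b σ k)).card
      = (univ.filter (fun σ : Fin n → Bool => YS a b σ i < XS a b σ k)).card := by
    rw [card_neg (fun σ => XS a b σ i < YS a b σ k)]
    simp only [XS_neg, YS_neg]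
  have hQ2 := hpart (fun σ => XS a b σ k) (fun σ => YS a b σ k)
    (fun σ => XS_ne_YS_s9 a b hdistinct σ hk1 hkn hk1 hkn)
  have hR2 := hpart (fun σ => XS a b σ i) (fun σ => YS a b σ i)
    (fun σ => XS_ne_YS_s9 a b hdistinct σ hi1 hin hi1 hin)
  have hSP := hpart (fun σ => XS a b σ i) (fun σ => YS a b σ k)
    (fun σ => XS_ne_YS_s9 a b hdistinct σ hi1 hin hk1 hkn)
  beta_reduce at hQ2 hR2 hSP
  have hQleP := Finset.card_le_card hQP
  have hSleR := Finset.card_le_card hSR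
  have hfinal : (univ.filter (fun σ : Fin n → Bool =>
        XS a b σ k < YS a b σ k ∧ YS a b σ k < XS a b σ i)).card
      = (univ.filter (fun σ : Fin n → Bool =>
        XS a b σ k < YS a b σ i ∧ YS a b σ i < XS a b σ i)).card := by
    omega
  have hfix : ∀ (p : (Fin n → Bool) → Prop) (h1 h2 : DecidablePred p),
      (@Finset.filter _ p h1 univ).card = (@Finset.filter _ p h2 univ).card := by
    intro p h1 h2
    have he : h1 = h2 := Subsingleton.elim _ _
    rw [he]
  unfold Pr
  exact congrArg (fun m : ℕ => (m : ℝ) / 2 ^ n)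
    ((hfix _ _ _).trans (hfinal.trans (hfix _ _ _)))
end

section
/- For every integer r ≥ 1, Σ_{j=1}^{r−1} j·C(j+r−1, j)/2^{j+r} = r·(1/2 − C(2r−1, r)/2^{2r−1}), where C(·,·) denotes the binomial coefficient and the empty sum (for r = 1) is zero. -/
open Finset

/-!
Since `j C(j+s, j) = (s+1) C(j+s, j-1)`, the sum for `r = s + 1` is `(s+1)/2^(s+2)` times the
truncation `∑_{k<s} C(s+1+k, k)/2^k` of the classical identity `∑_{k≤n} C(n+k, k)/2^k = 2^n`
at `n = s + 1`; the two missing terms are both multiples of `C(2s+1, s)/2^s`, which produces the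
central binomial correction.
-/

theorem Nat.choose_two_mul_add_two (n : ℕ) :
    (2 * n + 2).choose (n + 1) = 2 * (2 * n + 1).choose n := by
  rw [Nat.choose_succ_succ, Nat.choose_symm_half, two_mul ((2 * n + 1).choose n)]

section ChooseDivTwoPow

variable {K : Type*} [Field K] [CharZero K]

/-- Pascal's rule splits the `(n + 1)`-st sum into the `n`-th sum and half of itself; the two
boundary terms left over cancel because `C(2n+2, n+1) = 2 C(2n+1, n+1)`. -/
theorem sum_range_choose_add_div_two_pow_succ (n : ℕ) :
    ∑ k ∈ range (n + 2), ((n + 1 + k).choose k : K) / 2 ^ k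
      = 2 * ∑ k ∈ range (n + 1), ((n + k).choose k : K) / 2 ^ k := by
  have hshift : ∑ k ∈ range (n + 2), ((n + 1 + k).choose k : K) / 2 ^ k
      = ∑ k ∈ range (n + 1), ((n + 1 + k).choose k : K) / 2 ^ k / 2
        + (∑ k ∈ range (n + 1), ((n + (k + 1)).choose (k + 1) : K) / 2 ^ (k + 1) + 1) := by
    rw [sum_range_succ', ← add_assoc, ← sum_add_distrib]
    congr 1
    · refine sum_congr rfl fun k _ => ?_
      rw [show n + 1 + (k + 1) = n + 1 + k + 1 by ring, show n + (k + 1) = n + 1 + k by ring,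
        Nat.choose_succ_succ', pow_succ]
      push_cast
      ring
    · simp
  have hlow : ∑ k ∈ range (n + 1), ((n + (k + 1)).choose (k + 1) : K) / 2 ^ (k + 1) + 1
      = ∑ k ∈ range (n + 1), ((n + k).choose k : K) / 2 ^ k
        + ((2 * n + 1).choose n : K) / 2 ^ (n + 1) := by
    rw [← Nat.choose_symm_half, two_mul, add_assoc,
      ← sum_range_succ (fun k => ((n + k).choose k : K) / 2 ^ k),
      sum_range_succ' (fun k => ((n + k).choose k : K) / 2 ^ k)]
    simp
  have hhigh : ∑ k ∈ range (n + 1), ((n + 1 + k).choose k : K) / 2 ^ k / 2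
      = (∑ k ∈ range (n + 2), ((n + 1 + k).choose k : K) / 2 ^ k
          - 2 * ((2 * n + 1).choose n : K) / 2 ^ (n + 1)) / 2 := by
    rw [← sum_div, sum_range_succ (n := n + 1), show n + 1 + (n + 1) = 2 * n + 2 by ring,
      Nat.choose_two_mul_add_two]
    push_cast
    ring
  linear_combination 2 * hshift + 2 * hlow + 2 * hhigh

theorem sum_range_choose_add_div_two_pow (n : ℕ) :
    ∑ k ∈ range (n + 1), ((n + k).choose k : K) / 2 ^ k = 2 ^ n := by
  induction n with
  | zero => simp
  | succ n ih => rw [sum_range_choose_add_div_two_pow_succ, ih, pow_succ']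

end ChooseDivTwoPow

theorem binomial_weighted_sum_identity_general (r : ℕ) :
    ∑ j ∈ Finset.Icc 1 (r - 1), (j : ℝ) * (Nat.choose (j + r - 1) j : ℝ) / 2 ^ (j + r)
      = (r : ℝ) * (1 / 2 - (Nat.choose (2 * r - 1) r : ℝ) / 2 ^ (2 * r - 1)) := by
  rcases r with _ | s
  · simp
  have hterm : ∀ i ∈ range s,
      ((1 + i : ℕ) : ℝ) * ((1 + i + (s + 1) - 1).choose (1 + i) : ℝ) / 2 ^ (1 + i + (s + 1))
        = ((s : ℝ) + 1) / 2 ^ (s + 2) * (((s + 1 + i).choose i : ℝ) / 2 ^ i) := by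
    intro i _
    have hweight := congrArg (Nat.cast : ℕ → ℝ) (Nat.choose_succ_right_eq (s + 1 + i) i)
    rw [show s + 1 + i - i = s + 1 by omega] at hweight
    push_cast at hweight
    rw [show 1 + i + (s + 1) - 1 = s + 1 + i by omega, show 1 + i + (s + 1) = i + (s + 2) by omega,
      pow_add, add_comm 1 i]
    push_cast
    field_simp
    linear_combination hweight
  have htail : ∑ i ∈ range s, ((s + 1 + i).choose i : ℝ) / 2 ^ i
      = 2 ^ (s + 1) - 2 * ((2 * s + 1).choose s : ℝ) / 2 ^ s := by
    have h := sum_range_choose_add_div_two_pow (K := ℝ) (s + 1)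
    rw [sum_range_succ, sum_range_succ, show s + 1 + (s + 1) = 2 * s + 2 by ring,
      show s + 1 + s = 2 * s + 1 by ring, Nat.choose_two_mul_add_two] at h
    rw [← h, pow_succ]
    push_cast
    field_simp
    ring
  rw [← Ico_add_one_right_eq_Icc, sum_Ico_eq_sum_range, Nat.add_sub_cancel, Nat.add_sub_cancel,
    sum_congr rfl hterm, ← mul_sum, htail, show 2 * (s + 1) - 1 = 2 * s + 1 by omega,
    Nat.choose_symm_half, show 2 * s + 1 = s + (s + 1) by ring, pow_add, pow_succ]
  push_cast
  field_simp
  ring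

/-- For every integer `r ≥ 1`,
`Σ_{j=1}^{r−1} j·C(j+r−1, j)/2^{j+r} = r·(1/2 − C(2r−1, r)/2^{2r−1})`. -/
theorem binomial_weighted_sum_identity (r : ℕ) (hr : 1 ≤ r) :
    ∑ j ∈ Finset.Icc 1 (r - 1), (j : ℝ) * (Nat.choose (j + r - 1) j : ℝ) / 2 ^ (j + r)
      = (r : ℝ) * (1 / 2 - (Nat.choose (2 * r - 1) r : ℝ) / 2 ^ (2 * r - 1)) :=
  binomial_weighted_sum_identity_general r
end
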